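/- arXiv:0709.2233 — 9 statements merged into one kernel-verified Lean document; each statement's English description precedes it below -/
import Mathlib

section
/- Let (Ω, F, P) be a probability space and let A and B be real random variables with B > 0 almost surely, satisfying the canonical assumption E[exp(λA − λ²B²/2)] ≤ 1 for every λ ∈ ℝ. Then for all x > 0 and y > 0, P(A/B² > x and 1/B² ≤ y) ≤ exp(−x²/(2y)). -/
open MeasureTheory Filter

/-- If `A, B` are real random variables on a probability space with `B > 0`
a.s. satisfying the canonical assumption `E[exp(λA − λ²B²/2)] ≤ 1` for every `λ ∈ ℝ`, then
for all `x, y > 0`, `P(A/B² > x, 1/B² ≤ y) ≤ exp(−x²/(2y))`. -/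
theorem stmt0 {Ω : Type*} [MeasurableSpace Ω] (μ : Measure Ω) [IsProbabilityMeasure μ]
    (A B : Ω → ℝ) (hA : Measurable A) (hB : Measurable B)
    (hBpos : ∀ᵐ ω ∂μ, 0 < B ω)
    (hcan : ∀ l : ℝ,
      ∫⁻ ω, ENNReal.ofReal (Real.exp (l * A ω - l ^ 2 * B ω ^ 2 / 2)) ∂μ ≤ 1)
    (x y : ℝ) (hx : 0 < x) (hy : 0 < y) :
    μ {ω | A ω / B ω ^ 2 > x ∧ 1 / B ω ^ 2 ≤ y} ≤
      ENNReal.ofReal (Real.exp (-x ^ 2 / (2 * y))) := by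
  set c : ℝ := x ^ 2 / (2 * y) with hc
  set f : Ω → ENNReal := fun ω => ENNReal.ofReal (Real.exp (x * A ω - x ^ 2 * B ω ^ 2 / 2))
  have hsub : {ω | A ω / B ω ^ 2 > x ∧ 1 / B ω ^ 2 ≤ y} ⊆
      {ω | ENNReal.ofReal (Real.exp c) ≤ f ω} := by
    intro ω ⟨h1, h2⟩
    have hB2 : 0 < B ω ^ 2 := by
      rcases (sq_nonneg (B ω)).lt_or_eq with h | h
      · exact h
      · exfalso; rw [← h, div_zero] at h1; linarith
    have hA' : x * B ω ^ 2 < A ω := (lt_div_iff₀ hB2).mp h1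
    have hBy : 1 / y ≤ B ω ^ 2 := by
      rw [div_le_iff₀ hy]
      have := (div_le_iff₀ hB2).mp h2
      nlinarith
    have hkey : c ≤ x * A ω - x ^ 2 * B ω ^ 2 / 2 := by
      have h1y : 1 / y ≤ B ω ^ 2 := hBy
      have : x ^ 2 / (2 * y) ≤ x ^ 2 * B ω ^ 2 / 2 := by
        rw [div_le_div_iff₀ (by linarith) (by norm_num)]
        nlinarith [mul_le_mul_of_nonneg_left ((div_le_iff₀ hy).mp h1y) (sq_nonneg x)]
      nlinarith [mul_lt_mul_of_pos_left hA' hx]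
    exact ENNReal.ofReal_le_ofReal (Real.exp_le_exp.mpr hkey)
  have hmeas : AEMeasurable f μ := by
    apply Measurable.aemeasurable
    apply ENNReal.measurable_ofReal.comp
    exact (Real.measurable_exp.comp (by fun_prop))
  have h1 : ENNReal.ofReal (Real.exp c) *
      μ {ω | A ω / B ω ^ 2 > x ∧ 1 / B ω ^ 2 ≤ y} ≤ 1 := by
    calc ENNReal.ofReal (Real.exp c) * μ {ω | A ω / B ω ^ 2 > x ∧ 1 / B ω ^ 2 ≤ y}
        ≤ ENNReal.ofReal (Real.exp c) * μ {ω | ENNReal.ofReal (Real.exp c) ≤ f ω} :=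
          mul_le_mul_right (measure_mono hsub) _
      _ ≤ ∫⁻ ω, f ω ∂μ := mul_meas_ge_le_lintegral₀ hmeas _
      _ ≤ 1 := hcan x
  have hεpos : (0 : ENNReal) < ENNReal.ofReal (Real.exp c) :=
    ENNReal.ofReal_pos.mpr (Real.exp_pos _)
  have := (ENNReal.le_inv_iff_mul_le).mpr (by rwa [mul_comm] at h1)
  calc μ {ω | A ω / B ω ^ 2 > x ∧ 1 / B ω ^ 2 ≤ y}
      ≤ (ENNReal.ofReal (Real.exp c))⁻¹ := this
    _ = ENNReal.ofReal (Real.exp (-c)) := by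
        rw [← ENNReal.ofReal_inv_of_pos (Real.exp_pos _), ← Real.exp_neg]
    _ = ENNReal.ofReal (Real.exp (-x ^ 2 / (2 * y))) := by rw [hc, neg_div]
end

section
/- Let A and B be real random variables with B > 0 almost surely, satisfying the canonical assumption E[exp(λA − λ²B²/2)] ≤ 1 for every λ ∈ ℝ. Then for all b > 0, s ≥ 1 and x ≥ 1, P(|A|/B > x and b ≤ B ≤ b·s) ≤ 4√e · x · (1 + log s) · exp(−x²/2). -/
open MeasureTheory Filter
open scoped ENNReal

lemma slice_bound {Ω : Type*} [MeasurableSpace Ω] (μ : Measure Ω) [IsProbabilityMeasure μ]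
    (A B : Ω → ℝ) (hA : Measurable A) (hB : Measurable B)
    (hcan : ∀ l : ℝ,
      ∫⁻ ω, ENNReal.ofReal (Real.exp (l * A ω - l ^ 2 * B ω ^ 2 / 2)) ∂μ ≤ 1)
    (x c σ : ℝ) (hx : 1 ≤ x) (hc : 0 < c) (hσ : σ = 1 ∨ σ = -1) :
    μ {ω | x * B ω < σ * A ω ∧ c ≤ B ω ∧ B ω < c * (1 + 1/x)} ≤
      ENNReal.ofReal (Real.exp (-(x ^ 2 - 1) / 2)) := by
  have hx0 : (0:ℝ) < x := lt_of_lt_of_le one_pos hx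
  set l : ℝ := σ * x / c with hl
  have hσ2 : σ ^ 2 = 1 := by rcases hσ with h | h <;> simp [h]
  set E : Set Ω := {ω | x * B ω < σ * A ω ∧ c ≤ B ω ∧ B ω < c * (1 + 1/x)} with hE
  have key : ∀ ω ∈ E, (x ^ 2 - 1) / 2 ≤ l * A ω - l ^ 2 * B ω ^ 2 / 2 := by
    intro ω hω
    obtain ⟨h1, h2, h3⟩ := hω
    set t : ℝ := B ω / c with ht
    have ht1 : 1 ≤ t := (one_le_div hc).2 h2
    have ht2 : t < 1 + 1/x := (div_lt_iff₀ hc).2 (by rw [mul_comm]; exact h3)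
    have hx1 : x * (1 + 1/x) = x + 1 := by field_simp
    have hxt : x * t ≤ x + 1 := by nlinarith
    have hxt0 : x ≤ x * t := by nlinarith
    have hlA : x ^ 2 * t ≤ l * A ω := by
      have h4 : l * A ω = (x / c) * (σ * A ω) := by rw [hl]; ring
      have h5 : (x / c) * (x * B ω) ≤ (x / c) * (σ * A ω) :=
        mul_le_mul_of_nonneg_left h1.le (by positivity)
      have h6 : (x / c) * (x * B ω) = x ^ 2 * t := by rw [ht]; field_simp
      rw [h4, ← h6]
      exact h5
    have hlB : l ^ 2 * B ω ^ 2 = x ^ 2 * t ^ 2 := by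
      have h7 : l * B ω = σ * (x * t) := by rw [hl, ht]; field_simp
      have h8 : l ^ 2 * B ω ^ 2 = (l * B ω) ^ 2 := by ring
      rw [h8, h7]
      nlinarith [hσ2]
    rw [hlB]
    nlinarith [sq_nonneg (x * t - x)]
  have hMeas : Measurable fun ω => ENNReal.ofReal (Real.exp (l * A ω - l ^ 2 * B ω ^ 2 / 2)) := by
    apply Measurable.ennreal_ofReal
    exact Real.measurable_exp.comp (((hA.const_mul l).sub (((hB.pow_const 2).const_mul (l ^ 2)).div_const 2)))
  have h1 : ENNReal.ofReal (Real.exp ((x ^ 2 - 1) / 2)) * μ E ≤ 1 := by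
    calc ENNReal.ofReal (Real.exp ((x ^ 2 - 1) / 2)) * μ E
        = ∫⁻ _ω in E, ENNReal.ofReal (Real.exp ((x ^ 2 - 1) / 2)) ∂μ := by
          rw [setLIntegral_const]
      _ ≤ ∫⁻ ω in E, ENNReal.ofReal (Real.exp (l * A ω - l ^ 2 * B ω ^ 2 / 2)) ∂μ := by
          refine setLIntegral_mono hMeas ?_
          intro ω hω
          exact ENNReal.ofReal_le_ofReal (Real.exp_le_exp.2 (key ω hω))
      _ ≤ ∫⁻ ω, ENNReal.ofReal (Real.exp (l * A ω - l ^ 2 * B ω ^ 2 / 2)) ∂μ :=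
          setLIntegral_le_lintegral _ _
      _ ≤ 1 := hcan l
  have hepos : 0 < Real.exp ((x ^ 2 - 1) / 2) := Real.exp_pos _
  have h2 : μ E ≤ (ENNReal.ofReal (Real.exp ((x ^ 2 - 1) / 2)))⁻¹ := by
    rw [ENNReal.le_inv_iff_mul_le, mul_comm]
    exact h1
  calc μ E ≤ (ENNReal.ofReal (Real.exp ((x ^ 2 - 1) / 2)))⁻¹ := h2
    _ = ENNReal.ofReal (Real.exp (-(x ^ 2 - 1) / 2)) := by
        rw [← ENNReal.ofReal_inv_of_pos hepos, ← Real.exp_neg, neg_div]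

/-- Under the canonical assumption for all real `λ`,
`P(|A|/B > x, b ≤ B ≤ bs) ≤ 4√e·x·(1 + log s)·exp(−x²/2)` for all `b > 0`, `s ≥ 1`, `x ≥ 1`. -/
theorem stmt1 {Ω : Type*} [MeasurableSpace Ω] (μ : Measure Ω) [IsProbabilityMeasure μ]
    (A B : Ω → ℝ) (hA : Measurable A) (hB : Measurable B)
    (hBpos : ∀ᵐ ω ∂μ, 0 < B ω)
    (hcan : ∀ l : ℝ,
      ∫⁻ ω, ENNReal.ofReal (Real.exp (l * A ω - l ^ 2 * B ω ^ 2 / 2)) ∂μ ≤ 1)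
    (b s x : ℝ) (hb : 0 < b) (hs : 1 ≤ s) (hx : 1 ≤ x) :
    μ {ω | |A ω| / B ω > x ∧ b ≤ B ω ∧ B ω ≤ b * s} ≤
      ENNReal.ofReal (4 * Real.sqrt (Real.exp 1) * x * (1 + Real.log s) *
        Real.exp (-x ^ 2 / 2)) := by
  have hx0 : (0:ℝ) < x := lt_of_lt_of_le one_pos hx
  set α : ℝ := 1 + 1/x with hα
  have hα1 : 1 < α := by
    have : 0 < 1/x := by positivity
    rw [hα]; linarith
  have hα0 : 0 < α := lt_trans one_pos hα1
  have hla : 0 < Real.log α := Real.log_pos hα1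
  set L : ℝ := Real.log s with hLdef
  have hL0 : 0 ≤ L := Real.log_nonneg hs
  set K : ℕ := ⌈L / Real.log α⌉₊ + 1 with hK
  set Eset : ℝ → ℕ → Set Ω := fun σ k =>
    {ω | x * B ω < σ * A ω ∧ b * α ^ k ≤ B ω ∧ B ω < (b * α ^ k) * (1 + 1/x)} with hEset
  -- covering
  have hcover : {ω | |A ω| / B ω > x ∧ b ≤ B ω ∧ B ω ≤ b * s} ⊆
      ⋃ k ∈ Finset.range K, (Eset 1 k ∪ Eset (-1) k) := by
    intro ω hω
    obtain ⟨hgt, hbB, hBs⟩ := hω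
    have hBpos' : 0 < B ω := lt_of_lt_of_le hb hbB
    have habs : x * B ω < |A ω| := (lt_div_iff₀ hBpos').1 hgt
    have hy : B ω = B ω := rfl
    set r : ℝ := Real.log (B ω / b) / Real.log α with hr
    have hyb1 : 1 ≤ B ω / b := (one_le_div hb).2 hbB
    have hr0 : 0 ≤ r := div_nonneg (Real.log_nonneg hyb1) hla.le
    set k : ℕ := ⌊r⌋₊ with hkdef
    have hkr : (k : ℝ) ≤ r := Nat.floor_le hr0
    have hrk : r < k + 1 := Nat.lt_floor_add_one r
    have hαpow : ∀ n : ℕ, α ^ n = Real.exp (n * Real.log α) := by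
      intro n; rw [Real.exp_nat_mul, Real.exp_log hα0]
    have hybpos : 0 < B ω / b := lt_of_lt_of_le one_pos hyb1
    have hlow : b * α ^ k ≤ B ω := by
      have h0 : α ^ k ≤ B ω / b := by
        rw [hαpow, ← Real.exp_log hybpos]
        apply Real.exp_le_exp.2
        calc (k : ℝ) * Real.log α ≤ r * Real.log α :=
              mul_le_mul_of_nonneg_right hkr hla.le
          _ = Real.log (B ω / b) := by rw [hr]; field_simp
      calc b * α ^ k ≤ b * (B ω / b) := mul_le_mul_of_nonneg_left h0 hb.le
        _ = B ω := by field_simp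
    have hhigh : B ω < (b * α ^ k) * (1 + 1/x) := by
      have h1 : B ω / b < α ^ (k + 1) := by
        rw [hαpow, ← Real.exp_log hybpos]
        apply Real.exp_lt_exp.2
        have h2 : Real.log (B ω / b) = r * Real.log α := by rw [hr]; field_simp
        rw [h2]
        push_cast
        exact mul_lt_mul_of_pos_right hrk hla
      have h3 : B ω < b * α ^ (k + 1) := by
        have h4 := mul_lt_mul_of_pos_left h1 hb
        calc B ω = b * (B ω / b) := by field_simp
          _ < b * α ^ (k + 1) := h4
      have h5 : b * α ^ (k + 1) = (b * α ^ k) * (1 + 1/x) := by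
        rw [← hα]; ring
      rw [← h5]; exact h3
    have hkK : k < K := by
      have hys : B ω / b ≤ s := (div_le_iff₀ hb).2 (by rw [mul_comm]; exact hBs)
      have hlog : Real.log (B ω / b) ≤ L := by
        rw [hLdef]; exact Real.log_le_log hybpos hys
      have hrle : r ≤ L / Real.log α := by
        rw [hr]; exact div_le_div_of_nonneg_right hlog hla.le
      have hrK : r < (K : ℝ) := by
        have h1 : L / Real.log α ≤ (⌈L / Real.log α⌉₊ : ℝ) := Nat.le_ceil _
        have h2 : ((⌈L / Real.log α⌉₊ : ℕ) : ℝ) < (K : ℝ) := by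
          rw [hK]; push_cast; linarith
        linarith
      exact (Nat.floor_lt hr0).2 hrK
    have hmem : ω ∈ Eset 1 k ∪ Eset (-1) k := by
      rcases lt_abs.1 habs with hpos | hneg
      · exact Or.inl ⟨by rw [one_mul]; exact hpos, hlow, hhigh⟩
      · exact Or.inr ⟨by rw [neg_one_mul]; exact hneg, hlow, hhigh⟩
    exact Set.mem_biUnion (Finset.mem_range.2 hkK) hmem
  -- per-slice bounds
  set β : ℝ≥0∞ := ENNReal.ofReal (Real.exp (-(x ^ 2 - 1) / 2)) with hβ
  have hslice : ∀ (σ : ℝ), (σ = 1 ∨ σ = -1) → ∀ k : ℕ, μ (Eset σ k) ≤ β := by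
    intro σ hσ k
    have hc : 0 < b * α ^ k := by positivity
    exact slice_bound μ A B hA hB hcan x (b * α ^ k) σ hx hc hσ
  have hsum : μ {ω | |A ω| / B ω > x ∧ b ≤ B ω ∧ B ω ≤ b * s} ≤ (K : ℝ≥0∞) * (2 * β) := by
    calc μ {ω | |A ω| / B ω > x ∧ b ≤ B ω ∧ B ω ≤ b * s}
        ≤ μ (⋃ k ∈ Finset.range K, (Eset 1 k ∪ Eset (-1) k)) := measure_mono hcover
      _ ≤ ∑ k ∈ Finset.range K, μ (Eset 1 k ∪ Eset (-1) k) := measure_biUnion_finset_le _ _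
      _ ≤ ∑ _k ∈ Finset.range K, (2 * β) := by
          apply Finset.sum_le_sum
          intro k _
          calc μ (Eset 1 k ∪ Eset (-1) k) ≤ μ (Eset 1 k) + μ (Eset (-1) k) := measure_union_le _ _
            _ ≤ β + β := add_le_add (hslice 1 (Or.inl rfl) k) (hslice (-1) (Or.inr rfl) k)
            _ = 2 * β := (two_mul β).symm
      _ = (K : ℝ≥0∞) * (2 * β) := by
          rw [Finset.sum_const, Finset.card_range, nsmul_eq_mul]
  refine hsum.trans ?_
  -- final real arithmetic
  have hsqrt : Real.sqrt (Real.exp 1) = Real.exp (1/2) := by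
    rw [show Real.exp 1 = Real.exp (1/2) ^ 2 by
      rw [sq, ← Real.exp_add]; norm_num]
    exact Real.sqrt_sq (Real.exp_pos _).le
  have hKleR : (K : ℝ) ≤ 2 * x * (1 + L) := by
    have hlalb : 1 / (2 * x) ≤ Real.log α := by
      have h1 : Real.log α⁻¹ ≤ α⁻¹ - 1 := Real.log_le_sub_one_of_pos (by positivity)
      rw [Real.log_inv] at h1
      have h2 : 1 - α⁻¹ ≤ Real.log α := by linarith
      have h3 : α⁻¹ = x / (x + 1) := by
        rw [hα]; field_simp
      have h4 : 1 / (2 * x) ≤ 1 - x / (x + 1) := by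
        rw [show 1 - x / (x + 1) = 1 / (x + 1) by field_simp; ring]
        apply div_le_div_of_nonneg_left one_pos.le (by positivity)
        linarith
      rw [h3] at h2
      linarith
    have hdiv : L / Real.log α ≤ 2 * x * L := by
      calc L / Real.log α ≤ L / (1 / (2 * x)) :=
            div_le_div_of_nonneg_left hL0 (by positivity) hlalb
        _ = 2 * x * L := by field_simp
    have hceil : ((⌈L / Real.log α⌉₊ : ℕ) : ℝ) < L / Real.log α + 1 :=
      Nat.ceil_lt_add_one (div_nonneg hL0 hla.le)
    have : (K : ℝ) = (⌈L / Real.log α⌉₊ : ℝ) + 1 := by rw [hK]; push_cast; ring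
    nlinarith
  have hfinal : (K : ℝ) * (2 * Real.exp (-(x ^ 2 - 1) / 2)) ≤
      4 * Real.sqrt (Real.exp 1) * x * (1 + Real.log s) * Real.exp (-x ^ 2 / 2) := by
    rw [hsqrt, ← hLdef]
    have hsplit : Real.exp (-(x ^ 2 - 1) / 2) = Real.exp (1/2) * Real.exp (-x ^ 2 / 2) := by
      rw [← Real.exp_add]; ring_nf
    rw [hsplit]
    have hE2 : 0 < Real.exp (-x ^ 2 / 2) := Real.exp_pos _
    have hE1 : 0 < Real.exp (1/2 : ℝ) := Real.exp_pos _
    have hmul := mul_le_mul_of_nonneg_right hKleR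
      (le_of_lt (by positivity : (0:ℝ) < 2 * (Real.exp (1/2) * Real.exp (-x ^ 2 / 2))))
    calc (K : ℝ) * (2 * (Real.exp (1/2) * Real.exp (-x ^ 2 / 2)))
        ≤ 2 * x * (1 + L) * (2 * (Real.exp (1/2) * Real.exp (-x ^ 2 / 2))) := hmul
      _ = 4 * Real.exp (1/2) * x * (1 + L) * Real.exp (-x ^ 2 / 2) := by ring
  calc (K : ℝ≥0∞) * (2 * β)
      = ENNReal.ofReal ((K : ℝ) * (2 * Real.exp (-(x ^ 2 - 1) / 2))) := by
        rw [hβ, ENNReal.ofReal_mul (by positivity), ENNReal.ofReal_mul (by norm_num : (0:ℝ) ≤ 2)]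
        rw [ENNReal.ofReal_natCast, ENNReal.ofReal_ofNat]
    _ ≤ ENNReal.ofReal (4 * Real.sqrt (Real.exp 1) * x * (1 + Real.log s) *
        Real.exp (-x ^ 2 / 2)) := ENNReal.ofReal_le_ofReal hfinal
end

section
/- Let {d_j} be a martingale difference sequence with respect to a filtration {F_j}, i.e. E(d_j | F_{j−1}) = 0 a.s., with σ_j² := E(d_j² | F_{j−1}) < ∞ a.s., and suppose there is a constant c > 0 such that E(|d_j|^k | F_{j−1}) ≤ (k!/2)·σ_j²·c^{k−2} almost surely for all integers k ≥ 3 and all j. Let M_n = Σ_{j=1}^n d_j and V_n² = Σ_{j=1}^n σ_j². Then for all x > 0 and y > 0, P( M_n/V_n² ≥ x and 1/V_n² ≤ y for some n ≥ 1 ) ≤ exp( −(1/y)·x²/(1 + cx + √(1 + 2cx)) ) ≤ exp( −x²/(2y(1 + cx)) ). -/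
open MeasureTheory Filter

namespace Stmt3Aux

lemma real_exp_eq_tsum (t : ℝ) : Real.exp t = ∑' n : ℕ, t ^ n / n.factorial := by
  rw [Real.exp_eq_exp_ℝ, NormedSpace.exp_eq_tsum_div]

variable {Ω : Type*} {m0 : MeasurableSpace Ω} {μ : Measure Ω}

/-- tsum of nonneg integrable functions with summable integral bounds is integrable,
with integral bounded by the sum of the bounds. -/
lemma integrable_tsum_of_bound {g : ℕ → Ω → ℝ}
    (hnn : ∀ k ω, 0 ≤ g k ω) (hint : ∀ k, Integrable (g k) μ)
    {b : ℕ → ℝ} (hb : ∀ k, ∫ ω, g k ω ∂μ ≤ b k) (hsb : Summable b)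
    (hpt : ∀ ω, Summable fun k => g k ω) :
    Integrable (fun ω => ∑' k, g k ω) μ ∧ ∫ ω, (∑' k, g k ω) ∂μ ≤ ∑' k, b k := by
  have hgm : ∀ k, AEMeasurable (g k) μ := fun k =>
    (hint k).aestronglyMeasurable.aemeasurable
  have key : ∀ ω, ENNReal.ofReal (∑' k, g k ω) = ∑' k, ENNReal.ofReal (g k ω) := fun ω =>
    ENNReal.ofReal_tsum_of_nonneg (fun k => hnn k ω) (hpt ω)
  have hnn' : ∀ᵐ ω ∂μ, 0 ≤ (fun ω => ∑' k, g k ω) ω :=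
    ae_of_all _ fun ω => tsum_nonneg fun k => hnn k ω
  have hbnn : ∀ k, 0 ≤ b k := fun k =>
    le_trans (integral_nonneg fun ω => hnn k ω) (hb k)
  have hlint : ∫⁻ ω, ENNReal.ofReal ((fun ω => ∑' k, g k ω) ω) ∂μ =
      ∑' k, ∫⁻ ω, ENNReal.ofReal (g k ω) ∂μ := by
    simp_rw [key]
    exact lintegral_tsum fun k => (hgm k).ennreal_ofReal
  have heach : ∀ k, ∫⁻ ω, ENNReal.ofReal (g k ω) ∂μ = ENNReal.ofReal (∫ ω, g k ω ∂μ) :=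
    fun k => (ofReal_integral_eq_lintegral_ofReal (hint k) (ae_of_all _ fun ω => hnn k ω)).symm
  have hbound : ∫⁻ ω, ENNReal.ofReal ((fun ω => ∑' k, g k ω) ω) ∂μ ≤
      ENNReal.ofReal (∑' k, b k) := by
    rw [hlint, ENNReal.ofReal_tsum_of_nonneg hbnn hsb]
    refine ENNReal.tsum_le_tsum fun k => ?_
    rw [heach k]
    exact ENNReal.ofReal_le_ofReal (hb k)
  have hmeas : AEMeasurable (fun ω => ∑' k, g k ω) μ := by
    have : (fun ω => ∑' k, g k ω) =
        fun ω => (∑' k, ENNReal.ofReal (g k ω)).toReal := by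
      funext ω
      rw [← key ω, ENNReal.toReal_ofReal (tsum_nonneg fun k => hnn k ω)]
    rw [this]
    exact (AEMeasurable.ennreal_tsum fun k => (hgm k).ennreal_ofReal).ennreal_toReal
  have hfin : HasFiniteIntegral (fun ω => ∑' k, g k ω) μ := by
    rw [hasFiniteIntegral_iff_ofReal hnn']
    exact lt_of_le_of_lt hbound ENNReal.ofReal_lt_top
  have hInt : Integrable (fun ω => ∑' k, g k ω) μ :=
    ⟨hmeas.aestronglyMeasurable, hfin⟩
  refine ⟨hInt, ?_⟩
  rw [integral_eq_lintegral_of_nonneg_ae hnn' hmeas.aestronglyMeasurable]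
  calc (∫⁻ ω, ENNReal.ofReal ((fun ω => ∑' k, g k ω) ω) ∂μ).toReal
      ≤ (ENNReal.ofReal (∑' k, b k)).toReal :=
        ENNReal.toReal_mono ENNReal.ofReal_ne_top hbound
    _ = ∑' k, b k := ENNReal.toReal_ofReal (tsum_nonneg hbnn)

set_option maxHeartbeats 1000000 in
lemma step {m : MeasurableSpace Ω} (hm : m ≤ m0) [IsProbabilityMeasure μ]
    {d : Ω → ℝ} (hd1 : Integrable d μ)
    (hd2 : Integrable (fun ω => d ω ^ 2) μ) (hmd : μ[d|m] =ᵐ[μ] 0)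
    {c lam : ℝ} (hc : 0 < c) (hlam : 0 < lam) (hlc : lam * c < 1)
    (hmom : ∀ k : ℕ, 3 ≤ k → Integrable (fun ω => |d ω| ^ k) μ ∧
      μ[fun ω => |d ω| ^ k|m] ≤ᵐ[μ]
        fun ω => (k.factorial : ℝ) / 2 * (μ[fun ω' => d ω' ^ 2|m]) ω * c ^ (k - 2)) :
    Integrable (fun ω => Real.exp (lam * d ω)) μ ∧
    μ[fun ω => Real.exp (lam * d ω)|m] ≤ᵐ[μ]
      fun ω => Real.exp (lam ^ 2 / (2 * (1 - lam * c)) *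
        max ((μ[fun ω' => d ω' ^ 2|m]) ω) 0) := by
  set σ : Ω → ℝ := μ[fun ω' => d ω' ^ 2|m] with hσ
  have hσint : Integrable σ μ := integrable_condExp
  have hdm : AEMeasurable d μ := hd1.aestronglyMeasurable.aemeasurable
  set r : ℝ := lam * c with hr
  have hr0 : 0 < r := mul_pos hlam hc
  have hr1 : r < 1 := hlc
  -- integrability of |d|^k for every k
  have habs : ∀ k : ℕ, Integrable (fun ω => |d ω| ^ k) μ := by
    intro k
    match k with
    | 0 => simpa using integrable_const (1 : ℝ)
    | 1 => simpa using hd1.abs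
    | 2 => simpa [sq_abs] using hd2
    | (k + 3) => exact (hmom (k + 3) (by omega)).1
  have hpow : ∀ k : ℕ, Integrable (fun ω => d ω ^ k) μ := by
    intro k
    refine (habs k).mono' (hdm.pow_const k).aestronglyMeasurable ?_
    exact ae_of_all _ fun ω => by rw [Real.norm_eq_abs, abs_pow]
  -- moment integral bounds
  set E2 : ℝ := ∫ ω, d ω ^ 2 ∂μ with hE2def
  have hE2 : 0 ≤ E2 := integral_nonneg fun ω => sq_nonneg _
  have hIσ : ∫ ω, σ ω ∂μ = E2 := integral_condExp hm
  have hI : ∀ k : ℕ, 3 ≤ k →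
      ∫ ω, |d ω| ^ k ∂μ ≤ (k.factorial : ℝ) / 2 * E2 * c ^ (k - 2) := by
    intro k hk
    have h1 : ∫ ω, |d ω| ^ k ∂μ = ∫ ω, (μ[fun ω' => |d ω'| ^ k|m]) ω ∂μ :=
      (integral_condExp hm).symm
    rw [h1]
    have hRint : Integrable (fun ω => (k.factorial : ℝ) / 2 * σ ω * c ^ (k - 2)) μ :=
      (hσint.const_mul _).mul_const _
    calc ∫ ω, (μ[fun ω' => |d ω'| ^ k|m]) ω ∂μ
        ≤ ∫ ω, (k.factorial : ℝ) / 2 * σ ω * c ^ (k - 2) ∂μ :=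
          integral_mono_ae integrable_condExp hRint (hmom k hk).2
      _ = (k.factorial : ℝ) / 2 * E2 * c ^ (k - 2) := by
          have heq : (fun ω => (k.factorial : ℝ) / 2 * σ ω * c ^ (k - 2)) =
              fun ω => ((k.factorial : ℝ) / 2 * c ^ (k - 2)) * σ ω := by
            funext ω; ring
          rw [heq, integral_const_mul, hIσ]; ring
  -- the series terms and bounds
  set g : ℕ → Ω → ℝ := fun k ω => lam ^ k / (k.factorial : ℝ) * |d ω| ^ k with hg
  set b : ℕ → ℝ := fun k => lam ^ k / (k.factorial : ℝ) * ∫ ω, |d ω| ^ k ∂μ with hbdef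
  have hgnn : ∀ k ω, 0 ≤ g k ω := fun k ω => by positivity
  have hgint : ∀ k, Integrable (g k) μ := fun k => (habs k).const_mul _
  have hgb : ∀ k, ∫ ω, g k ω ∂μ = b k := fun k => integral_const_mul _ _
  have hb : ∀ k, ∫ ω, g k ω ∂μ ≤ b k := fun k => (hgb k).le
  have hbnn : ∀ k, 0 ≤ b k := fun k =>
    mul_nonneg (by positivity) (integral_nonneg fun ω => by positivity)
  have hkfac : ∀ k : ℕ, ((k.factorial : ℝ)) ≠ 0 := fun k =>
    Nat.cast_ne_zero.mpr k.factorial_ne_zero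
  have hbgeom : ∀ k, 3 ≤ k → b k ≤ E2 / (2 * c ^ 2) * r ^ k := by
    intro k hk
    have hck : c ^ (k - 2) = c ^ k / c ^ 2 := by
      rw [eq_div_iff (by positivity), ← pow_add]
      congr 1
      omega
    calc b k ≤ lam ^ k / (k.factorial : ℝ) *
          ((k.factorial : ℝ) / 2 * E2 * c ^ (k - 2)) :=
        mul_le_mul_of_nonneg_left (hI k hk) (by positivity)
      _ = E2 / (2 * c ^ 2) * r ^ k := by
        rw [hck, hr, mul_pow]
        field_simp
  have hsb : Summable b := by
    rw [← summable_nat_add_iff 3]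
    have hgeo : Summable (fun k : ℕ => E2 / (2 * c ^ 2) * r ^ 3 * r ^ k) :=
      (summable_geometric_of_lt_one hr0.le hr1).mul_left _
    refine Summable.of_nonneg_of_le (fun k => hbnn _) (fun k => ?_) hgeo
    calc b (k + 3) ≤ E2 / (2 * c ^ 2) * r ^ (k + 3) := hbgeom _ (by omega)
      _ = E2 / (2 * c ^ 2) * r ^ 3 * r ^ k := by ring
  have hpt : ∀ ω, Summable fun k => g k ω := by
    intro ω
    refine (Real.summable_pow_div_factorial (lam * |d ω|)).congr fun k => ?_
    rw [mul_pow]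
    simp only [hg]
    ring
  have htsum_abs : ∀ ω, (∑' k, g k ω) = Real.exp (lam * |d ω|) := by
    intro ω
    rw [real_exp_eq_tsum]
    refine tsum_congr fun k => ?_
    rw [mul_pow]
    simp only [hg]
    ring
  have hexp_abs_int : Integrable (fun ω => Real.exp (lam * |d ω|)) μ := by
    have h := (integrable_tsum_of_bound hgnn hgint hb hsb hpt).1
    refine h.congr (ae_of_all _ fun ω => ?_)
    exact htsum_abs ω
  have hexp_meas : AEStronglyMeasurable[m0] (fun ω => Real.exp (lam * d ω)) μ :=
    (Real.continuous_exp.comp_aestronglyMeasurable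
      ((hdm.const_mul lam).aestronglyMeasurable))
  have hexp_int : Integrable (fun ω => Real.exp (lam * d ω)) μ := by
    refine hexp_abs_int.mono' hexp_meas (ae_of_all _ fun ω => ?_)
    rw [Real.norm_eq_abs, abs_of_pos (Real.exp_pos _)]
    exact Real.exp_le_exp.2 (mul_le_mul_of_nonneg_left (le_abs_self _) hlam.le)
  refine ⟨hexp_int, ?_⟩
  -- tails
  set T : ℕ → Ω → ℝ := fun N ω => ∑' k, g (k + (N + 3)) ω with hT
  have hTfacts : ∀ N, Integrable (T N) μ ∧
      ∫ ω, T N ω ∂μ ≤ ∑' k, b (k + (N + 3)) := by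
    intro N
    have hs1 : Summable (fun k => b (k + (N + 3))) := (summable_nat_add_iff (f := b) (N + 3)).mpr hsb
    have hs2 : ∀ ω, Summable (fun k => g (k + (N + 3)) ω) := fun ω =>
      (summable_nat_add_iff (f := fun k => g k ω) (N + 3)).mpr (hpt ω)
    exact integrable_tsum_of_bound (g := fun k => g (k + (N + 3)))
      (b := fun k => b (k + (N + 3))) (fun k ω => hgnn _ ω) (fun k => hgint _)
      (fun k => hb _) hs1 hs2
  have hTint : ∀ N, Integrable (T N) μ := fun N => (hTfacts N).1
  have hTnn : ∀ N ω, 0 ≤ T N ω := fun N ω => tsum_nonneg fun k => hgnn _ ω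
  set C : ℝ := E2 / (2 * c ^ 2) * r ^ 3 * (1 - r)⁻¹ with hC
  have hCnn : 0 ≤ C := by
    have h1 : (0:ℝ) ≤ (1 - r)⁻¹ := by
      rw [inv_nonneg]
      linarith
    exact mul_nonneg (by positivity) h1
  have hTbound : ∀ N, ∫ ω, T N ω ∂μ ≤ C * r ^ N := by
    intro N
    refine le_trans (hTfacts N).2 ?_
    have hgeo : Summable (fun k : ℕ => E2 / (2 * c ^ 2) * r ^ (k + (N + 3))) := by
      refine ((summable_geometric_of_lt_one hr0.le hr1).mul_left
        (E2 / (2 * c ^ 2) * r ^ (N + 3))).congr fun k => ?_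
      rw [pow_add]
      ring
    calc (∑' k, b (k + (N + 3)))
        ≤ ∑' k : ℕ, E2 / (2 * c ^ 2) * r ^ (k + (N + 3)) := by
          refine Summable.tsum_le_tsum (fun k => hbgeom _ (by omega))
            ((summable_nat_add_iff (f := b) (N + 3)).mpr hsb) hgeo
      _ = E2 / (2 * c ^ 2) * r ^ (N + 3) * (1 - r)⁻¹ := by
          have : ∀ k : ℕ, E2 / (2 * c ^ 2) * r ^ (k + (N + 3)) =
              (E2 / (2 * c ^ 2) * r ^ (N + 3)) * r ^ k := by
            intro k
            rw [pow_add]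
            ring
          rw [tsum_congr this, tsum_mul_left, tsum_geometric_of_lt_one hr0.le hr1]
      _ = C * r ^ N := by
          rw [hC]
          ring
  -- partial sums
  set A : ℝ := lam ^ 2 / (2 * (1 - r)) with hA
  set P : ℕ → Ω → ℝ :=
    fun N ω => ∑ k ∈ Finset.range (N + 3), lam ^ k / (k.factorial : ℝ) * d ω ^ k with hP
  have hPint : ∀ N, Integrable (P N) μ := fun N =>
    integrable_finset_sum _ fun k _ => (hpow k).const_mul _
  -- pointwise Taylor bound
  have hptwise : ∀ N ω, Real.exp (lam * d ω) ≤ P N ω + T N ω := by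
    intro N ω
    set t : ℝ := lam * d ω with ht
    have hsum_t : Summable fun k => t ^ k / (k.factorial : ℝ) :=
      Real.summable_pow_div_factorial t
    have hsplit := Summable.sum_add_tsum_nat_add (f := fun k => t ^ k / (k.factorial : ℝ)) (N + 3) hsum_t
    rw [real_exp_eq_tsum, ← hsplit]
    have h1 : (∑ k ∈ Finset.range (N + 3), t ^ k / (k.factorial : ℝ)) = P N ω := by
      refine Finset.sum_congr rfl fun k _ => ?_
      rw [ht, mul_pow]
      ring
    rw [h1]
    refine add_le_add_right ?_ _
    have hsA : Summable (fun k => t ^ (k + (N + 3)) / (((k + (N + 3)).factorial : ℕ) : ℝ)) :=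
      (summable_nat_add_iff (f := fun k => t ^ k / (k.factorial : ℝ)) (N + 3)).mpr hsum_t
    have hsB : Summable (fun k => g (k + (N + 3)) ω) :=
      (summable_nat_add_iff (f := fun k => g k ω) (N + 3)).mpr (hpt ω)
    refine Summable.tsum_le_tsum (fun k => ?_) hsA hsB
    have h2 : t ^ (k + (N + 3)) ≤ lam ^ (k + (N + 3)) * |d ω| ^ (k + (N + 3)) := by
      rw [← mul_pow]
      calc t ^ (k + (N + 3)) ≤ |t ^ (k + (N + 3))| := le_abs_self _
        _ = |t| ^ (k + (N + 3)) := abs_pow _ _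
        _ = (lam * |d ω|) ^ (k + (N + 3)) := by rw [ht, abs_mul, abs_of_pos hlam]
    calc t ^ (k + (N + 3)) / ((k + (N + 3)).factorial : ℝ)
        ≤ (lam ^ (k + (N + 3)) * |d ω| ^ (k + (N + 3))) / ((k + (N + 3)).factorial : ℝ) := by
          gcongr
      _ = g (k + (N + 3)) ω := by
          simp only [hg]
          ring
  -- conditional expectation of P N
  have hcondP : ∀ N, μ[P N|m] =ᵐ[μ]
      fun ω => ∑ k ∈ Finset.range (N + 3),
        lam ^ k / (k.factorial : ℝ) * (μ[fun ω' => d ω' ^ k|m]) ω := by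
    intro N
    have h1 : P N = ∑ k ∈ Finset.range (N + 3),
        ((lam ^ k / (k.factorial : ℝ)) • fun ω => d ω ^ k) := by
      funext ω
      rw [Finset.sum_apply]
      simp [hP]
    have h2 := condExp_finsetSum (μ := μ) (m := m) (s := Finset.range (N + 3))
      (f := fun k => (lam ^ k / (k.factorial : ℝ)) • fun ω => d ω ^ k)
      (fun k _ => ((hpow k).smul _))
    have h3 : ∀ᵐ ω ∂μ, ∀ k : ℕ,
        (μ[(lam ^ k / (k.factorial : ℝ)) • fun ω' => d ω' ^ k|m]) ω =
          lam ^ k / (k.factorial : ℝ) * (μ[fun ω' => d ω' ^ k|m]) ω := by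
      rw [ae_all_iff]
      intro k
      filter_upwards [condExp_smul (μ := μ) (m := m) (lam ^ k / (k.factorial : ℝ))
        (fun ω' => d ω' ^ k)] with ω hω
      rw [hω]
      simp
    rw [h1]
    filter_upwards [h2, h3] with ω e2 e3
    rw [e2, Finset.sum_apply]
    exact Finset.sum_congr rfl fun k _ => e3 k
  -- individual conditional moment bounds
  set bco : ℕ → Ω → ℝ := fun k ω =>
    if k = 0 then 1 else if k = 1 then 0
    else (k.factorial : ℝ) / 2 * max (σ ω) 0 * c ^ (k - 2) with hbco_def
  have hbco : ∀ᵐ ω ∂μ, ∀ k : ℕ, (μ[fun ω' => d ω' ^ k|m]) ω ≤ bco k ω := by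
    rw [ae_all_iff]
    intro k
    match k with
    | 0 =>
      have h0 : (fun ω' : Ω => d ω' ^ 0) = fun _ => (1 : ℝ) := by funext ω'; simp
      rw [h0, condExp_const hm]
      exact ae_of_all _ fun ω => by simp [hbco_def]
    | 1 =>
      have h0 : (fun ω' : Ω => d ω' ^ 1) = d := by funext ω'; simp
      rw [h0]
      filter_upwards [hmd] with ω hω
      rw [hω]
      simp [hbco_def]
    | 2 =>
      refine ae_of_all _ fun ω => ?_
      have : (μ[fun ω' => d ω' ^ 2|m]) ω = σ ω := rfl
      rw [this]
      calc σ ω ≤ max (σ ω) 0 := le_max_left _ _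
        _ = bco 2 ω := by norm_num [hbco_def, Nat.factorial]
    | (j + 3) =>
      have hk : 3 ≤ j + 3 := by omega
      have hmono : μ[fun ω' => d ω' ^ (j + 3)|m] ≤ᵐ[μ] μ[fun ω' => |d ω'| ^ (j + 3)|m] := by
        refine condExp_mono (hpow _) (habs _) (ae_of_all _ fun ω => ?_)
        calc d ω ^ (j + 3) ≤ |d ω ^ (j + 3)| := le_abs_self _
          _ = |d ω| ^ (j + 3) := abs_pow _ _
      filter_upwards [hmono, (hmom _ hk).2] with ω e1 e2
      refine le_trans e1 (le_trans e2 ?_)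
      have : bco (j + 3) ω =
          ((j + 3).factorial : ℝ) / 2 * max (σ ω) 0 * c ^ (j + 3 - 2) := by
        simp [hbco_def]
      rw [this]
      have hnn1 : (0:ℝ) ≤ ((j + 3).factorial : ℝ) / 2 := by positivity
      have hnn2 : (0:ℝ) ≤ c ^ (j + 3 - 2) := by positivity
      exact mul_le_mul_of_nonneg_right
        (mul_le_mul_of_nonneg_left (le_max_left _ _) hnn1) hnn2
  -- summing the coefficient bounds
  have hgeom : ∀ M : ℕ, (∑ k ∈ Finset.range M, r ^ k) ≤ (1 - r)⁻¹ := by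
    intro M
    rw [geom_sum_eq hr1.ne M]
    have h1 : (r ^ M - 1) / (r - 1) = (1 - r ^ M) / (1 - r) := by
      rw [← neg_div_neg_eq]
      ring_nf
    rw [h1, ← one_div]
    gcongr
    · linarith [pow_nonneg hr0.le M]
  have hsum_bco : ∀ N ω,
      (∑ k ∈ Finset.range (N + 3), lam ^ k / (k.factorial : ℝ) * bco k ω)
        ≤ 1 + A * max (σ ω) 0 := by
    intro N ω
    set t : ℝ := max (σ ω) 0 with htdef
    have htnn : 0 ≤ t := le_max_right _ _
    have e1 : (∑ k ∈ Finset.range (N + 3), lam ^ k / (k.factorial : ℝ) * bco k ω) =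
        (∑ k ∈ Finset.range (N + 2), lam ^ (k+1) / ((k+1).factorial : ℝ) * bco (k+1) ω)
          + lam ^ 0 / ((0:ℕ).factorial : ℝ) * bco 0 ω :=
      Finset.sum_range_succ' _ (N + 2)
    have e2 : (∑ k ∈ Finset.range (N + 2), lam ^ (k+1) / ((k+1).factorial : ℝ) * bco (k+1) ω) =
        (∑ k ∈ Finset.range (N + 1), lam ^ (k+2) / ((k+2).factorial : ℝ) * bco (k+2) ω)
          + lam ^ 1 / ((1:ℕ).factorial : ℝ) * bco 1 ω :=
      Finset.sum_range_succ' _ (N + 1)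
    have e3 : ∀ k : ℕ, lam ^ (k+2) / ((k+2).factorial : ℝ) * bco (k+2) ω =
        lam ^ 2 / 2 * t * r ^ k := by
      intro k
      have hb2 : bco (k+2) ω = ((k+2).factorial : ℝ) / 2 * t * c ^ k := by
        simp [hbco_def, htdef]
      rw [hb2, hr, mul_pow]
      field_simp
      ring
    have e4 : (∑ k ∈ Finset.range (N + 1), lam ^ (k+2) / ((k+2).factorial : ℝ) * bco (k+2) ω) =
        lam ^ 2 / 2 * t * (∑ k ∈ Finset.range (N + 1), r ^ k) := by
      rw [Finset.mul_sum]
      exact Finset.sum_congr rfl fun k _ => e3 k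
    have e5 : lam ^ 2 / 2 * t * (∑ k ∈ Finset.range (N + 1), r ^ k) ≤
        lam ^ 2 / 2 * t * (1 - r)⁻¹ :=
      mul_le_mul_of_nonneg_left (hgeom _) (by positivity)
    have e6 : lam ^ 2 / 2 * t * (1 - r)⁻¹ = A * t := by
      rw [hA]
      have : (1:ℝ) - r ≠ 0 := by linarith
      field_simp
    have e7 : bco 0 ω = 1 := by simp [hbco_def]
    have e8 : bco 1 ω = 0 := by simp [hbco_def]
    rw [e1, e2, e4, e7, e8]
    have h9 := le_trans e5 e6.le
    norm_num [Nat.factorial]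
    linarith
  -- conditional expectations of the tails tend to zero a.e.
  set G : ℕ → Ω → ℝ := fun N => μ[T N|m] with hG
  have hGnn : ∀ᵐ ω ∂μ, ∀ N, 0 ≤ G N ω := by
    rw [ae_all_iff]
    exact fun N => condExp_nonneg (ae_of_all _ fun ω => hTnn N ω)
  have hGmeas : ∀ N, Measurable[m0] (G N) := by
    intro N
    rw [hG]
    exact (stronglyMeasurable_condExp.mono hm).measurable
  have hGI : ∀ N, ∫ ω, G N ω ∂μ ≤ C * r ^ N := by
    intro N
    rw [hG]
    calc ∫ ω, (μ[T N|m]) ω ∂μ = ∫ ω, T N ω ∂μ := integral_condExp hm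
      _ ≤ C * r ^ N := hTbound N
  have hSig : (∑' N : ℕ, ∫⁻ ω, ENNReal.ofReal (G N ω) ∂μ) ≠ ⊤ := by
    have h1 : ∀ N, ∫⁻ ω, ENNReal.ofReal (G N ω) ∂μ ≤ ENNReal.ofReal (C * r ^ N) := by
      intro N
      have hnn : 0 ≤ᵐ[μ] G N := by
        filter_upwards [hGnn] with ω h using h N
      rw [← ofReal_integral_eq_lintegral_ofReal integrable_condExp hnn]
      exact ENNReal.ofReal_le_ofReal (hGI N)
    have h2 : (∑' N : ℕ, ENNReal.ofReal (C * r ^ N)) =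
        ENNReal.ofReal (∑' N : ℕ, C * r ^ N) :=
      (ENNReal.ofReal_tsum_of_nonneg (fun N => by positivity)
        ((summable_geometric_of_lt_one hr0.le hr1).mul_left C)).symm
    refine ne_top_of_le_ne_top ?_ (ENNReal.tsum_le_tsum h1)
    rw [h2]
    exact ENNReal.ofReal_ne_top
  have hGtend : ∀ᵐ ω ∂μ, Tendsto (fun N => G N ω) atTop (nhds 0) := by
    have hmeas2 : Measurable[m0] fun ω => ∑' N, ENNReal.ofReal (G N ω) :=
      Measurable.ennreal_tsum fun N => (hGmeas N).ennreal_ofReal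
    have hlt : ∀ᵐ ω ∂μ, (∑' N, ENNReal.ofReal (G N ω)) < ⊤ := by
      refine ae_lt_top hmeas2 ?_
      rw [lintegral_tsum fun N => ((hGmeas N).ennreal_ofReal).aemeasurable]
      exact hSig
    filter_upwards [hlt, hGnn] with ω h1 h2
    have h3 : Tendsto (fun N => ENNReal.ofReal (G N ω)) atTop (nhds 0) :=
      ENNReal.tendsto_atTop_zero_of_tsum_ne_top h1.ne
    have h4 := (ENNReal.tendsto_toReal (by simp : (0:ENNReal) ≠ ⊤)).comp h3
    simp only [ENNReal.toReal_zero] at h4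
    refine h4.congr fun N => ?_
    exact ENNReal.toReal_ofReal (h2 N)
  -- main per-N bound
  have hmain : ∀ N : ℕ, μ[fun ω => Real.exp (lam * d ω)|m] ≤ᵐ[μ]
      fun ω => 1 + A * max (σ ω) 0 + G N ω := by
    intro N
    have h1 : μ[fun ω => Real.exp (lam * d ω)|m] ≤ᵐ[μ] μ[fun ω => P N ω + T N ω|m] :=
      condExp_mono hexp_int ((hPint N).add (hTint N)) (ae_of_all _ fun ω => hptwise N ω)
    have h2 : μ[fun ω => P N ω + T N ω|m] =ᵐ[μ] μ[P N|m] + μ[T N|m] :=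
      condExp_add (hPint N) (hTint N) m
    filter_upwards [h1, h2, hcondP N, hbco] with ω e1 e2 e3 e4
    have e5 : (∑ k ∈ Finset.range (N + 3),
        lam ^ k / (k.factorial : ℝ) * (μ[fun ω' => d ω' ^ k|m]) ω) ≤
        ∑ k ∈ Finset.range (N + 3), lam ^ k / (k.factorial : ℝ) * bco k ω := by
      refine Finset.sum_le_sum fun k _ => ?_
      exact mul_le_mul_of_nonneg_left (e4 k) (by positivity)
    calc (μ[fun ω => Real.exp (lam * d ω)|m]) ω
        ≤ (μ[fun ω => P N ω + T N ω|m]) ω := e1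
      _ = (μ[P N|m]) ω + G N ω := e2
      _ ≤ (1 + A * max (σ ω) 0) + G N ω := by
          refine add_le_add_left ?_ _
          rw [e3]
          exact le_trans e5 (hsum_bco N ω)
  -- conclude
  have hfinal : μ[fun ω => Real.exp (lam * d ω)|m] ≤ᵐ[μ]
      fun ω => 1 + A * max (σ ω) 0 := by
    filter_upwards [ae_all_iff.2 hmain, hGtend] with ω hN htend
    have hlim : Tendsto (fun N => 1 + A * max (σ ω) 0 + G N ω) atTop
        (nhds (1 + A * max (σ ω) 0 + 0)) :=
      tendsto_const_nhds.add htend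
    have := ge_of_tendsto hlim (Eventually.of_forall hN)
    simpa using this
  filter_upwards [hfinal] with ω h1
  refine le_trans h1 ?_
  have h2 := Real.add_one_le_exp (A * max (σ ω) 0)
  linarith

/-- If `S ≥ 0` is `m`-measurable and integrable, `h ≥ 0` integrable with
`μ[h|m] ≤ 1` a.e., then `S*h` is integrable. -/
lemma integrable_mul_of_condexp_le_one {m : MeasurableSpace Ω} (hm : m ≤ m0)
    [IsFiniteMeasure μ]
    {S h : Ω → ℝ} (hS : StronglyMeasurable[m] S) (hSnn : ∀ ω, 0 ≤ S ω)
    (hSint : Integrable S μ)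
    (hhnn : ∀ ω, 0 ≤ h ω) (hhint : Integrable h μ)
    (hch : μ[h|m] ≤ᵐ[μ] fun _ => (1 : ℝ)) :
    Integrable (fun ω => S ω * h ω) μ := by
  set SK : ℕ → Ω → ℝ := fun K ω => min (S ω) K with hSK
  have hSKm : ∀ K : ℕ, StronglyMeasurable[m] (SK K) := fun K =>
    (hS.measurable.min (measurable_const : Measurable[m] _)).stronglyMeasurable
  have hSKnn : ∀ K ω, 0 ≤ SK K ω := fun K ω => le_min (hSnn ω) (Nat.cast_nonneg K)
  have hSKle : ∀ K ω, SK K ω ≤ S ω := fun K ω => min_le_left _ _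
  have hSKint : ∀ K : ℕ, Integrable (fun ω => SK K ω * h ω) μ := by
    intro K
    refine hhint.bdd_mul ((hSKm K).mono hm).aestronglyMeasurable (c := K) (ae_of_all _ fun ω => ?_)
    rw [Real.norm_eq_abs, abs_of_nonneg (hSKnn K ω)]
    exact min_le_right _ _
  have hcond : ∀ K : ℕ, μ[fun ω => SK K ω * h ω|m] =ᵐ[μ] fun ω => SK K ω * (μ[h|m]) ω := by
    intro K
    have := condExp_mul_of_stronglyMeasurable_left (μ := μ) (hSKm K) (by
      exact hSKint K) hhint
    exact this
  have hintK : ∀ K : ℕ, ∫ ω, SK K ω * h ω ∂μ ≤ ∫ ω, S ω ∂μ := by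
    intro K
    rw [← integral_condExp hm]
    refine integral_mono_ae integrable_condExp hSint ?_
    filter_upwards [hcond K, hch] with ω h1 h2
    rw [h1]
    calc SK K ω * (μ[h|m]) ω ≤ SK K ω * 1 :=
          mul_le_mul_of_nonneg_left h2 (hSKnn K ω)
      _ ≤ S ω := by rw [mul_one]; exact hSKle K ω
  -- lintegral monotone convergence
  have hmono : ∀ ω, Monotone fun K : ℕ => ENNReal.ofReal (SK K ω * h ω) := by
    intro ω K L hKL
    exact ENNReal.ofReal_le_ofReal
      (mul_le_mul_of_nonneg_right (min_le_min le_rfl (Nat.cast_le.2 hKL)) (hhnn ω))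
  have hSm0 : AEMeasurable S μ := hSint.aestronglyMeasurable.aemeasurable
  have hhm0 : AEMeasurable h μ := hhint.aestronglyMeasurable.aemeasurable
  have hlim : ∀ ω, (⨆ K : ℕ, ENNReal.ofReal (SK K ω * h ω)) = ENNReal.ofReal (S ω * h ω) := by
    intro ω
    refine tendsto_nhds_unique (tendsto_atTop_iSup (hmono ω)) ?_
    refine tendsto_atTop_of_eventually_const (i₀ := ⌈S ω⌉₊) fun K hK => ?_
    congr 1
    rw [hSK]
    simp only []
    rw [min_eq_left (le_trans (Nat.le_ceil (S ω)) (Nat.cast_le.2 hK))]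
  have hKmeas : ∀ K : ℕ, AEMeasurable (fun ω => ENNReal.ofReal (SK K ω * h ω)) μ :=
    fun K => ((hSm0.min aemeasurable_const).mul hhm0).ennreal_ofReal
  have hli : ∫⁻ ω, ENNReal.ofReal (S ω * h ω) ∂μ ≤ ENNReal.ofReal (∫ ω, S ω ∂μ) := by
    have : ∫⁻ ω, ENNReal.ofReal (S ω * h ω) ∂μ =
        ⨆ K : ℕ, ∫⁻ ω, ENNReal.ofReal (SK K ω * h ω) ∂μ := by
      rw [← lintegral_iSup' hKmeas (ae_of_all _ hmono)]
      exact lintegral_congr fun ω => (hlim ω).symm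
    rw [this]
    refine iSup_le fun K => ?_
    rw [← ofReal_integral_eq_lintegral_ofReal (hSKint K)
      (ae_of_all _ fun ω => mul_nonneg (hSKnn K ω) (hhnn ω))]
    exact ENNReal.ofReal_le_ofReal (hintK K)
  refine ⟨(hSm0.mul hhm0).aestronglyMeasurable, ?_⟩
  rw [hasFiniteIntegral_iff_ofReal (ae_of_all _ fun ω => mul_nonneg (hSnn ω) (hhnn ω))]
  exact lt_of_le_of_lt hli ENNReal.ofReal_lt_top


end Stmt3Aux



set_option maxHeartbeats 2000000 in
/-- **Theorem 2.6.** For a martingale difference sequence `{d_j}` with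
conditional variances `σ_j²` and conditional moment bounds
`E(|d_j|^k | F_{j−1}) ≤ (k!/2)σ_j²c^{k−2}` for `k ≥ 3`, setting `M_n = Σ d_j` and
`V_n² = Σ σ_j²`, for all `x, y > 0`,
`P(M_n/V_n² ≥ x, 1/V_n² ≤ y for some n) ≤ exp(−(1/y)·x²/(1+cx+√(1+2cx)))
  ≤ exp(−x²/(2y(1+cx)))`. -/
theorem stmt3 {Ω : Type*} {m0 : MeasurableSpace Ω} (μ : Measure Ω) [IsProbabilityMeasure μ]
    (F : Filtration ℕ m0) (d : ℕ → Ω → ℝ) (hadapt : Adapted F d)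
    (hint : ∀ j, Integrable (d j) μ)
    (hint2 : ∀ j, Integrable (fun ω => d j ω ^ 2) μ)
    (hmd : ∀ j, 1 ≤ j → μ[d j | F (j - 1)] =ᵐ[μ] 0)
    (c : ℝ) (hc : 0 < c)
    (hmom : ∀ j, 1 ≤ j → ∀ k : ℕ, 3 ≤ k →
      Integrable (fun ω => |d j ω| ^ k) μ ∧
      μ[fun ω => |d j ω| ^ k | F (j - 1)] ≤ᵐ[μ]
        fun ω => (k.factorial : ℝ) / 2 *
          (μ[fun ω' => d j ω' ^ 2 | F (j - 1)]) ω * c ^ (k - 2))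
    (x y : ℝ) (hx : 0 < x) (hy : 0 < y) :
    μ {ω | ∃ n, 1 ≤ n ∧
        (∑ j ∈ Finset.Icc 1 n, d j ω) /
          (∑ j ∈ Finset.Icc 1 n, (μ[fun ω' => d j ω' ^ 2 | F (j - 1)]) ω) ≥ x ∧
        1 / (∑ j ∈ Finset.Icc 1 n, (μ[fun ω' => d j ω' ^ 2 | F (j - 1)]) ω) ≤ y} ≤
      ENNReal.ofReal
        (Real.exp (-(1 / y) * (x ^ 2 / (1 + c * x + Real.sqrt (1 + 2 * c * x))))) ∧
    Real.exp (-(1 / y) * (x ^ 2 / (1 + c * x + Real.sqrt (1 + 2 * c * x)))) ≤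
      Real.exp (-x ^ 2 / (2 * y * (1 + c * x))) := by
  classical
  -- the constants
  set s : ℝ := Real.sqrt (1 + 2 * c * x) with hs
  have hs2 : s ^ 2 = 1 + 2 * c * x := Real.sq_sqrt (by nlinarith)
  have hs0' : 0 ≤ s := by rw [hs]; exact Real.sqrt_nonneg _
  have hs1 : 1 < s := by nlinarith [hs2, hs0', mul_pos hc hx]
  have hs0 : 0 < s := by linarith
  have hsne : s ≠ 0 := ne_of_gt hs0
  have hcne : c ≠ 0 := ne_of_gt hc
  set lam : ℝ := (s - 1) / (c * s) with hlam_def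
  have hlam : 0 < lam := div_pos (by linarith) (by positivity)
  have hlc_eq : lam * c = (s - 1) / s := by
    rw [hlam_def, div_mul_eq_mul_div, div_eq_div_iff (by positivity) hsne]; ring
  have hr1 : lam * c < 1 := by
    rw [hlc_eq, div_lt_one hs0]; linarith
  have h1mlc : 1 - lam * c = 1 / s := by
    rw [hlc_eq]; field_simp; ring
  set a : ℝ := lam ^ 2 / (2 * (1 - lam * c)) with ha
  have hx_eq : x = (s ^ 2 - 1) / (2 * c) := by
    rw [hs2]; field_simp; ring
  have ha2 : a = (s - 1) ^ 2 / (2 * c ^ 2 * s) := by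
    rw [ha, h1mlc, hlam_def]; field_simp
  have hlx : lam * x = (s - 1) * (s ^ 2 - 1) / (2 * c ^ 2 * s) := by
    rw [hlam_def, hx_eq, div_mul_div_comm,
      div_eq_div_iff (by positivity) (by positivity)]; ring
  have key : lam * x - a = (s - 1) ^ 2 / (2 * c ^ 2) := by
    rw [ha2, hlx]; field_simp; ring
  have hden : (0:ℝ) < 1 + c * x + s := by positivity
  have key2 : x ^ 2 / (1 + c * x + s) = (s - 1) ^ 2 / (2 * c ^ 2) := by
    rw [div_eq_div_iff (ne_of_gt hden) (by positivity)]
    linear_combination (-(s + c * x - 1)) * hs2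
  have key3 : lam * x - a = x ^ 2 / (1 + c * x + s) := by rw [key, key2]
  have hlxa_nn : 0 ≤ lam * x - a := by rw [key]; positivity
  -- second inequality first
  have hsle : s ≤ 1 + c * x := by
    rw [hs]
    calc Real.sqrt (1 + 2 * c * x) ≤ Real.sqrt ((1 + c * x) ^ 2) :=
          Real.sqrt_le_sqrt (by nlinarith)
      _ = 1 + c * x := by
          rw [Real.sqrt_sq (by positivity)]
  have hsecond : Real.exp (-(1 / y) * (x ^ 2 / (1 + c * x + s))) ≤
      Real.exp (-x ^ 2 / (2 * y * (1 + c * x))) := by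
    refine Real.exp_le_exp.2 ?_
    have h7 : x ^ 2 / (2 * y * (1 + c * x)) ≤ x ^ 2 / (y * (1 + c * x + s)) := by
      refine div_le_div_of_nonneg_left (by positivity) (by positivity) ?_
      nlinarith
    have e1 : -(1 / y) * (x ^ 2 / (1 + c * x + s)) = -(x ^ 2 / (y * (1 + c * x + s))) := by
      field_simp
    have e2 : -x ^ 2 / (2 * y * (1 + c * x)) = -(x ^ 2 / (2 * y * (1 + c * x))) := by
      ring
    rw [e1, e2]
    exact neg_le_neg h7
  -- the processes
  set σf : ℕ → Ω → ℝ := fun j => μ[fun ω' => d j ω' ^ 2 | F (j - 1)] with hσf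
  set σt : ℕ → Ω → ℝ := fun j ω => max (σf j ω) 0 with hσt
  set M : ℕ → Ω → ℝ := fun n ω => ∑ j ∈ Finset.Icc 1 n, d j ω with hM
  set V : ℕ → Ω → ℝ := fun n ω => ∑ j ∈ Finset.Icc 1 n, σf j ω with hV
  set Vt : ℕ → Ω → ℝ := fun n ω => ∑ j ∈ Finset.Icc 1 n, σt j ω with hVt
  set f : ℕ → Ω → ℝ := fun n ω => Real.exp (lam * M n ω - a * Vt n ω) with hf
  have hfnn : ∀ n ω, 0 ≤ f n ω := fun n ω => (Real.exp_pos _).le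
  -- one-step facts
  have hstep : ∀ j : ℕ, 1 ≤ j →
      Integrable (fun ω => Real.exp (lam * d j ω)) μ ∧
      μ[fun ω => Real.exp (lam * d j ω)|F (j - 1)] ≤ᵐ[μ]
        fun ω => Real.exp (a * σt j ω) := by
    intro j hj
    have h := Stmt3Aux.step (F.le (j - 1)) (hint j) (hint2 j) (hmd j hj)
      hc hlam hr1 (hmom j hj)
    exact ⟨h.1, h.2⟩
  -- measurability of the process
  have hfSM : ∀ n, StronglyMeasurable[F n] (f n) := by
    intro n
    have hMm : Measurable[F n] (M n) := by
      refine Finset.measurable_sum _ fun j hj => ?_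
      exact (hadapt j).mono (F.mono (Finset.mem_Icc.1 hj).2) le_rfl
    have hVm : Measurable[F n] (Vt n) := by
      refine Finset.measurable_sum _ fun j hj => ?_
      have h1 : StronglyMeasurable[F (j - 1)] (σf j) := stronglyMeasurable_condExp
      have h2 : Measurable[F n] (σf j) :=
        (h1.mono (F.mono (le_trans (Nat.sub_le j 1) (Finset.mem_Icc.1 hj).2))).measurable
      exact h2.max measurable_const
    exact (Real.measurable_exp.comp
      ((hMm.const_mul lam).sub (hVm.const_mul a))).stronglyMeasurable
  have hfadp : StronglyAdapted F f := fun n => hfSM n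
  -- the basic multiplicative decomposition
  have hf0 : f 0 = fun _ => (1:ℝ) := by
    funext ω
    have : Finset.Icc 1 0 = (∅ : Finset ℕ) := Finset.Icc_eq_empty (by omega)
    simp [hf, hM, hVt, this]
  have hfsucc : ∀ n, f (n + 1) = fun ω => f n ω *
      (Real.exp (-(a * σt (n + 1) ω)) * Real.exp (lam * d (n + 1) ω)) := by
    intro n
    funext ω
    have hMs : M (n + 1) ω = M n ω + d (n + 1) ω := by
      simp only [hM]
      rw [Finset.sum_Icc_succ_top (by omega : 1 ≤ n + 1)]
    have hVs : Vt (n + 1) ω = Vt n ω + σt (n + 1) ω := by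
      simp only [hVt]
      rw [Finset.sum_Icc_succ_top (by omega : 1 ≤ n + 1)]
    simp only [hf]
    rw [hMs, hVs, ← Real.exp_add, ← Real.exp_add]
    congr 1
    ring
  -- the single-step factor and its conditional expectation
  set h : ℕ → Ω → ℝ := fun n ω =>
    Real.exp (-(a * σt (n + 1) ω)) * Real.exp (lam * d (n + 1) ω) with hh_def
  have hσtnn : ∀ j ω, 0 ≤ σt j ω := fun j ω => le_max_right _ _
  have ha_nn : 0 ≤ a := by
    rw [ha]
    have : 0 < 1 - lam * c := by linarith
    positivity
  have hhnn : ∀ n ω, 0 ≤ h n ω := fun n ω =>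
    mul_nonneg (Real.exp_pos _).le (Real.exp_pos _).le
  have hhle : ∀ n ω, h n ω ≤ Real.exp (lam * d (n + 1) ω) := by
    intro n ω
    have h1 : Real.exp (-(a * σt (n + 1) ω)) ≤ 1 := by
      rw [Real.exp_le_one_iff]
      simp only [neg_nonpos]
      exact mul_nonneg ha_nn (hσtnn _ _)
    calc h n ω ≤ 1 * Real.exp (lam * d (n + 1) ω) :=
          mul_le_mul_of_nonneg_right h1 (Real.exp_pos _).le
      _ = _ := one_mul _
  have hhmeas : ∀ n, AEStronglyMeasurable (h n) μ := by
    intro n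
    have h1 : Measurable[m0] (σt (n + 1)) := by
      have := (stronglyMeasurable_condExp
        (f := fun ω' => d (n + 1) ω' ^ 2) (m := F n) (μ := μ)).mono (F.le n)
      have h2 : Measurable[m0] (σf (n + 1)) := by
        simp only [hσf, Nat.add_sub_cancel]
        exact this.measurable
      exact h2.max measurable_const
    have h2 : Measurable[m0] (d (n + 1)) := (hadapt (n + 1)).mono (F.le _) le_rfl
    exact ((Real.measurable_exp.comp ((h1.const_mul a).neg)).mul
      (Real.measurable_exp.comp (h2.const_mul lam))).aestronglyMeasurable
  have hhint : ∀ n, Integrable (h n) μ := by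
    intro n
    refine ((hstep (n + 1) (by omega)).1).mono' (hhmeas n) (ae_of_all _ fun ω => ?_)
    rw [Real.norm_eq_abs, abs_of_nonneg (hhnn n ω)]
    exact hhle n ω
  have hEfact : ∀ n, StronglyMeasurable[F n] (fun ω => Real.exp (-(a * σt (n + 1) ω))) := by
    intro n
    have h1 : StronglyMeasurable[F n] (σf (n + 1)) := by
      simp only [hσf, Nat.add_sub_cancel]
      exact stronglyMeasurable_condExp
    exact (Real.measurable_exp.comp
      ((h1.measurable.max measurable_const).const_mul a).neg).stronglyMeasurable
  have hch : ∀ n, μ[h n|F n] ≤ᵐ[μ] fun _ => (1:ℝ) := by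
    intro n
    have hpull := condExp_mul_of_stronglyMeasurable_left (μ := μ) (m := F n) (hEfact n)
      (by exact hhint n)
      (hstep (n + 1) (by omega)).1
    have hstep2 : μ[fun ω => Real.exp (lam * d (n + 1) ω)|F n] ≤ᵐ[μ]
        fun ω => Real.exp (a * σt (n + 1) ω) := by
      have := (hstep (n + 1) (by omega)).2
      simpa only [Nat.add_sub_cancel] using this
    have hEq : μ[h n|F n] =ᵐ[μ] fun ω =>
        Real.exp (-(a * σt (n + 1) ω)) *
          (μ[fun ω' => Real.exp (lam * d (n + 1) ω')|F n]) ω := by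
      refine EventuallyEq.trans ?_ hpull
      rfl
    filter_upwards [hEq, hstep2] with ω e1 e2
    rw [e1]
    calc Real.exp (-(a * σt (n + 1) ω)) *
          (μ[fun ω' => Real.exp (lam * d (n + 1) ω')|F n]) ω
        ≤ Real.exp (-(a * σt (n + 1) ω)) * Real.exp (a * σt (n + 1) ω) :=
          mul_le_mul_of_nonneg_left e2 (Real.exp_pos _).le
      _ = 1 := by rw [← Real.exp_add]; simp
  -- integrability of the supermartingale
  have hfint : ∀ n, Integrable (f n) μ := by
    intro n
    induction n with
    | zero => rw [hf0]; exact integrable_const 1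
    | succ n ih =>
      rw [hfsucc n]
      exact Stmt3Aux.integrable_mul_of_condexp_le_one (F.le n) (hfSM n) (hfnn n) ih
        (hhnn n) (hhint n) (hch n)
  -- supermartingale property
  have hsuper : Supermartingale f F μ := by
    refine supermartingale_nat hfadp hfint fun n => ?_
    have hpull := condExp_mul_of_stronglyMeasurable_left (μ := μ) (m := F n) (hfSM n)
      (by have := hfint (n + 1); rw [hfsucc n] at this; exact this) (hhint n)
    have hEq : μ[f (n + 1)|F n] =ᵐ[μ] fun ω => f n ω * (μ[h n|F n]) ω := by
      rw [hfsucc n]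
      exact hpull
    filter_upwards [hEq, hch n] with ω e1 e2
    rw [e1]
    calc f n ω * (μ[h n|F n]) ω ≤ f n ω * 1 :=
          mul_le_mul_of_nonneg_left e2 (hfnn n ω)
      _ = f n ω := mul_one _
  -- Ville / maximal inequality
  set ε : ℝ := Real.exp ((lam * x - a) / y) with hε
  have hεpos : 0 < ε := Real.exp_pos _
  have hAset : ∀ n : ℕ, MeasurableSet[m0] {ω | ∃ k, k ≤ n ∧ ε ≤ f k ω} := by
    intro n
    have : {ω | ∃ k, k ≤ n ∧ ε ≤ f k ω} = ⋃ k, ⋃ (_ : k ≤ n), {ω | ε ≤ f k ω} := by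
      ext ω; simp
    rw [this]
    refine MeasurableSet.iUnion fun k => MeasurableSet.iUnion fun _ => ?_
    exact measurableSet_le measurable_const ((hfSM k).mono (F.le k)).measurable
  have hville : ∀ n : ℕ, μ {ω | ∃ k, k ≤ n ∧ ε ≤ f k ω} ≤
      ENNReal.ofReal (Real.exp (-((lam * x - a) / y))) := by
    intro n
    set τ : Ω → WithTop ℕ := fun ω => (hittingBtwn f (Set.Ici ε) 0 n ω : ℕ) with hτdef
    have hτ : IsStoppingTime F τ := Adapted.isStoppingTime_hittingBtwn (fun k => (hfSM k).measurable) measurableSet_Ici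
    have hτle : ∀ ω, τ ω ≤ n := fun ω => WithTop.coe_le_coe.2 (hittingBtwn_le ω)
    have hsub : Submartingale (-f) F μ := hsuper.neg
    have hsv_int : Integrable (stoppedValue f τ) μ := by
      have h1 := hsub.integrable_stoppedValue hτ hτle
      have h2 : stoppedValue (-f) τ = -stoppedValue f τ := by
        funext ω; simp [stoppedValue]
      rw [h2] at h1
      simpa using h1.neg
    have hsv_nn : 0 ≤ᵐ[μ] stoppedValue f τ :=
      ae_of_all _ fun ω => hfnn _ ω
    have hE : ∫ ω, stoppedValue f τ ω ∂μ ≤ 1 := by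
      have h1 := hsub.expected_stoppedValue_mono (isStoppingTime_const F 0) hτ
        (fun ω => WithTop.coe_le_coe.2 (Nat.zero_le _)) (fun ω => hτle ω)
      have h2 : stoppedValue (-f) (fun _ => WithTop.some (0:ℕ)) = -f 0 := by
        funext ω; simp [stoppedValue]
      have h3 : stoppedValue (-f) τ = -stoppedValue f τ := by
        funext ω; simp [stoppedValue]
      rw [h2, h3] at h1
      simp only [Pi.neg_apply] at h1
      rw [integral_neg, integral_neg] at h1
      have h4 : ∫ ω, f 0 ω ∂μ = 1 := by
        rw [hf0]
        simp
      have h5 : ∫ ω, stoppedValue f τ ω ∂μ ≤ ∫ ω, f 0 ω ∂μ := by linarith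
      rw [h4] at h5
      exact h5
    have hge : ∀ ω ∈ {ω | ∃ k, k ≤ n ∧ ε ≤ f k ω}, ε ≤ stoppedValue f τ ω := by
      rintro ω ⟨k, hk1, hk2⟩
      exact stoppedValue_hittingBtwn_mem ⟨k, ⟨Nat.zero_le _, hk1⟩, hk2⟩
    have h2 := setIntegral_ge_of_const_le (hAset n) (measure_ne_top μ _) hge
      hsv_int.integrableOn
    have h3 : ∫ ω in {ω | ∃ k, k ≤ n ∧ ε ≤ f k ω}, stoppedValue f τ ω ∂μ ≤ 1 :=
      le_trans (setIntegral_le_integral hsv_int hsv_nn) hE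
    have h4 : (μ {ω | ∃ k, k ≤ n ∧ ε ≤ f k ω}).toReal ≤ 1 / ε := by
      rw [le_div_iff₀ hεpos]
      calc (μ {ω | ∃ k, k ≤ n ∧ ε ≤ f k ω}).toReal * ε
          = ε * (μ {ω | ∃ k, k ≤ n ∧ ε ≤ f k ω}).toReal := mul_comm _ _
        _ ≤ 1 := le_trans (by simpa only [Measure.real, smul_eq_mul, mul_comm] using h2) h3
    have h5 : (1:ℝ) / ε = Real.exp (-((lam * x - a) / y)) := by
      rw [hε, one_div, ← Real.exp_neg]
    calc μ {ω | ∃ k, k ≤ n ∧ ε ≤ f k ω}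
        = ENNReal.ofReal ((μ {ω | ∃ k, k ≤ n ∧ ε ≤ f k ω}).toReal) :=
          (ENNReal.ofReal_toReal (measure_ne_top μ _)).symm
      _ ≤ ENNReal.ofReal (Real.exp (-((lam * x - a) / y))) := by
          rw [← h5]
          exact ENNReal.ofReal_le_ofReal h4
  have hU : μ {ω | ∃ k : ℕ, ε ≤ f k ω} ≤
      ENNReal.ofReal (Real.exp (-((lam * x - a) / y))) := by
    have hunion : {ω | ∃ k : ℕ, ε ≤ f k ω} = ⋃ n : ℕ, {ω | ∃ k, k ≤ n ∧ ε ≤ f k ω} := by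
      ext ω
      simp only [Set.mem_setOf_eq, Set.mem_iUnion]
      constructor
      · rintro ⟨k, hk⟩; exact ⟨k, k, le_rfl, hk⟩
      · rintro ⟨n, k, _, hk⟩; exact ⟨k, hk⟩
    rw [hunion]
    have hdir : Directed (· ⊆ ·) fun n : ℕ => {ω | ∃ k, k ≤ n ∧ ε ≤ f k ω} := by
      refine Monotone.directed_le fun n m hnm ω => ?_
      rintro ⟨k, hk1, hk2⟩
      exact ⟨k, le_trans hk1 hnm, hk2⟩
    rw [hdir.measure_iUnion]
    exact iSup_le fun n => hville n
  -- a.e. nonnegativity of conditional variances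
  have hσnn : ∀ᵐ ω ∂μ, ∀ j : ℕ, 0 ≤ σf j ω := by
    rw [ae_all_iff]
    intro j
    exact condExp_nonneg (ae_of_all _ fun ω => sq_nonneg _)
  -- inclusion of the target event
  set Bad : Set Ω := {ω | ¬ ∀ j : ℕ, 0 ≤ σf j ω} with hBad
  have hBad0 : μ Bad = 0 := by
    rw [hBad]
    exact ae_iff.1 hσnn
  have hincl : {ω | ∃ n, 1 ≤ n ∧ M n ω / V n ω ≥ x ∧ 1 / V n ω ≤ y} ⊆
      {ω | ∃ k : ℕ, ε ≤ f k ω} ∪ Bad := by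
    intro ω hω
    by_cases hgood : ∀ j : ℕ, 0 ≤ σf j ω
    · left
      obtain ⟨n, hn1, hn2, hn3⟩ := hω
      have hVteq : Vt n ω = V n ω := by
        simp only [hVt, hV]
        exact Finset.sum_congr rfl fun j _ => max_eq_left (hgood j)
      have hVnn : 0 ≤ V n ω := Finset.sum_nonneg fun j _ => hgood j
      have hVpos : 0 < V n ω := by
        rcases eq_or_lt_of_le hVnn with h0 | h0
        · exfalso
          rw [← h0] at hn2
          rw [div_zero] at hn2
          exact absurd hn2 (not_le.2 hx)
        · exact h0
      have hV1y : 1 / y ≤ V n ω := by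
        rw [div_le_iff₀ hy]
        have := (div_le_iff₀ hVpos).1 hn3
        linarith [mul_comm y (V n ω)]
      have hMx : x * V n ω ≤ M n ω := (le_div_iff₀ hVpos).1 hn2
      refine ⟨n, ?_⟩
      rw [hf, hε, Real.exp_le_exp, hVteq]
      have h5 : (lam * x - a) * (1 / y) ≤ (lam * x - a) * V n ω :=
        mul_le_mul_of_nonneg_left hV1y hlxa_nn
      have h6 : lam * (x * V n ω) ≤ lam * M n ω :=
        mul_le_mul_of_nonneg_left hMx hlam.le
      calc (lam * x - a) / y = (lam * x - a) * (1 / y) := by ring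
        _ ≤ (lam * x - a) * V n ω := h5
        _ = lam * (x * V n ω) - a * V n ω := by ring
        _ ≤ lam * M n ω - a * V n ω := by linarith
    · right
      exact hgood
  -- conclusion
  constructor
  · have hfirst : μ {ω | ∃ n, 1 ≤ n ∧ M n ω / V n ω ≥ x ∧ 1 / V n ω ≤ y} ≤
        ENNReal.ofReal (Real.exp (-((lam * x - a) / y))) := by
      calc μ {ω | ∃ n, 1 ≤ n ∧ M n ω / V n ω ≥ x ∧ 1 / V n ω ≤ y}
          ≤ μ ({ω | ∃ k : ℕ, ε ≤ f k ω} ∪ Bad) := measure_mono hincl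
        _ ≤ μ {ω | ∃ k : ℕ, ε ≤ f k ω} + μ Bad := measure_union_le _ _
        _ = μ {ω | ∃ k : ℕ, ε ≤ f k ω} := by rw [hBad0, add_zero]
        _ ≤ ENNReal.ofReal (Real.exp (-((lam * x - a) / y))) := hU
    have hexp_eq : -((lam * x - a) / y) = -(1 / y) * (x ^ 2 / (1 + c * x + s)) := by
      rw [key3]
      ring
    rw [← hexp_eq]
    exact hfirst
  · exact hsecond
end

section
/- Let A and B be real random variables with B > 0 almost surely and B integrable, satisfying the canonical assumption E[exp(λA − λ²B²/2)] ≤ 1 for every λ ∈ ℝ. Then for all x > 0, P( |A| / √(B² + (E B)²) > x ) ≤ √2 · exp(−x²/4). -/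
open MeasureTheory Filter
open Real ENNReal

lemma gauss_lin_integrable (a : ℝ) {t : ℝ} (ht : 0 < t) :
    Integrable (fun l : ℝ => Real.exp (a * l - t * l ^ 2)) := by
  have h : ∀ l : ℝ, a * l - t * l ^ 2 = -t * (l - a / (2 * t)) ^ 2 + a ^ 2 / (4 * t) := by
    intro l; field_simp; ring
  simp_rw [h, Real.exp_add]
  exact ((integrable_exp_neg_mul_sq ht).comp_sub_right (a / (2 * t))).mul_const _

lemma gauss_lin (a : ℝ) {t : ℝ} (ht : 0 < t) :
    ∫ l : ℝ, Real.exp (a * l - t * l ^ 2) = Real.sqrt (π / t) * Real.exp (a ^ 2 / (4 * t)) := by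
  have h : ∀ l : ℝ, a * l - t * l ^ 2 = -t * (l - a / (2 * t)) ^ 2 + a ^ 2 / (4 * t) := by
    intro l; field_simp; ring
  simp_rw [h, Real.exp_add]
  rw [integral_mul_const,
    integral_sub_right_eq_self (fun l => Real.exp (-t * l ^ 2)) (a / (2 * t)),
    integral_gaussian]

/-- **Theorem 2.7.** If `A, B` (with `B > 0` a.s. and `B` integrable)
satisfy the canonical assumption for all real `λ`, then for all `x > 0`,
`P(|A|/√(B² + (EB)²) > x) ≤ √2·exp(−x²/4)`. -/
theorem stmt4 {Ω : Type*} [MeasurableSpace Ω] (μ : Measure Ω) [IsProbabilityMeasure μ]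
    (A B : Ω → ℝ) (hA : Measurable A) (hB : Measurable B)
    (hBpos : ∀ᵐ ω ∂μ, 0 < B ω) (hBint : Integrable B μ)
    (hcan : ∀ l : ℝ,
      ∫⁻ ω, ENNReal.ofReal (Real.exp (l * A ω - l ^ 2 * B ω ^ 2 / 2)) ∂μ ≤ 1)
    (x : ℝ) (hx : 0 < x) :
    μ {ω | |A ω| / Real.sqrt (B ω ^ 2 + (∫ ω', B ω' ∂μ) ^ 2) > x} ≤
      ENNReal.ofReal (Real.sqrt 2 * Real.exp (-x ^ 2 / 4)) := by
  set c : ℝ := ∫ ω', B ω' ∂μ with hc_def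
  -- positivity of c
  have hc : 0 < c := by
    rw [hc_def, integral_pos_iff_support_of_nonneg_ae (hBpos.mono fun ω h => h.le) hBint]
    have h1 : ∀ᵐ ω ∂μ, ω ∈ Function.support B := hBpos.mono fun ω h => ne_of_gt h
    have h2 : μ (Function.support B)ᶜ = 0 := by
      have h3 := ae_iff.mp h1
      have : (Function.support B)ᶜ = {a | a ∉ Function.support B} := rfl
      rw [this]; exact h3
    by_contra h
    push_neg at h
    have h0 : μ (Function.support B) = 0 := le_antisymm h zero_le
    have := measure_univ_le_add_compl (μ := μ) (s := Function.support B)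
    rw [h0, h2, measure_univ] at this
    simp at this
  have hD : ∀ ω, (0:ℝ) < B ω ^ 2 + c ^ 2 := fun ω => by positivity
  have hsqrtD : ∀ ω, (0:ℝ) < Real.sqrt (B ω ^ 2 + c ^ 2) := fun ω =>
    Real.sqrt_pos.mpr (hD ω)
  set K : ℝ := c / Real.sqrt (2 * π) with hK_def
  have hK : 0 < K := div_pos hc (Real.sqrt_pos.mpr (by positivity))
  set g : Ω → ℝ := fun ω =>
    c / Real.sqrt (B ω ^ 2 + c ^ 2) * Real.exp (A ω ^ 2 / (2 * (B ω ^ 2 + c ^ 2))) with hg_def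
  set h : Ω → ℝ := fun ω => Real.sqrt (B ω ^ 2 + c ^ 2) / c with hh_def
  have hgpos : ∀ ω, 0 < g ω := fun ω => by
    simp only [hg_def]
    positivity
  have hhpos : ∀ ω, 0 < h ω := fun ω => div_pos (hsqrtD ω) hc
  -- Step A: pointwise Gaussian mixture identity
  have stepA : ∀ ω, g ω =
      ∫ l : ℝ, Real.exp (l * A ω - l ^ 2 * B ω ^ 2 / 2) *
        (K * Real.exp (-(c ^ 2 / 2) * l ^ 2)) := by
    intro ω
    have ht : (0:ℝ) < (B ω ^ 2 + c ^ 2) / 2 := by positivity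
    have heq : ∀ l : ℝ, Real.exp (l * A ω - l ^ 2 * B ω ^ 2 / 2) *
        (K * Real.exp (-(c ^ 2 / 2) * l ^ 2)) =
        K * Real.exp (A ω * l - ((B ω ^ 2 + c ^ 2) / 2) * l ^ 2) := by
      intro l
      rw [mul_left_comm, ← Real.exp_add]
      congr 1
      ring
    simp_rw [heq]
    rw [integral_const_mul, gauss_lin (A ω) ht]
    have h2π : (0:ℝ) < Real.sqrt (2 * π) := Real.sqrt_pos.mpr (by positivity)
    have hs : Real.sqrt (π / ((B ω ^ 2 + c ^ 2) / 2)) =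
        Real.sqrt (2 * π) / Real.sqrt (B ω ^ 2 + c ^ 2) := by
      rw [← Real.sqrt_div (by positivity : (0:ℝ) ≤ 2 * π)]
      congr 1
      field_simp
    rw [hs]
    have harg : A ω ^ 2 / (4 * ((B ω ^ 2 + c ^ 2) / 2)) =
        A ω ^ 2 / (2 * (B ω ^ 2 + c ^ 2)) := by
      congr 1
      ring
    rw [harg, hK_def, hg_def]
    rw [div_mul_eq_mul_div, div_mul_eq_mul_div, mul_comm]
    field_simp
  -- Step B: ∫⁻ g ≤ 1
  have hm1 : ∀ l : ℝ, Measurable fun ω =>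
      ENNReal.ofReal (Real.exp (l * A ω - l ^ 2 * B ω ^ 2 / 2)) := fun l =>
    (((hA.const_mul l).sub (((hB.pow_const 2).const_mul (l ^ 2)).div_const 2)).exp).ennreal_ofReal
  have hmeas_prod : Measurable (fun p : Ω × ℝ =>
      ENNReal.ofReal (Real.exp (p.2 * A p.1 - p.2 ^ 2 * B p.1 ^ 2 / 2) *
        (K * Real.exp (-(c ^ 2 / 2) * p.2 ^ 2)))) := by
    apply Measurable.ennreal_ofReal
    apply Measurable.mul
    · exact (((measurable_snd.mul (hA.comp measurable_fst))).sub
        (((measurable_snd.pow_const 2).mul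
          ((hB.comp measurable_fst).pow_const 2)).div_const 2)).exp
    · exact measurable_const.mul ((measurable_snd.pow_const 2).const_mul _).exp
  have stepB : ∫⁻ ω, ENNReal.ofReal (g ω) ∂μ ≤ 1 := by
    have key : ∀ ω, ENNReal.ofReal (g ω) =
        ∫⁻ l : ℝ, ENNReal.ofReal (Real.exp (l * A ω - l ^ 2 * B ω ^ 2 / 2) *
          (K * Real.exp (-(c ^ 2 / 2) * l ^ 2))) ∂(volume : Measure ℝ) := by
      intro ω
      rw [stepA ω, ofReal_integral_eq_lintegral_ofReal]
      · have ht : (0:ℝ) < (B ω ^ 2 + c ^ 2) / 2 := by positivity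
        have heq : ∀ l : ℝ, Real.exp (l * A ω - l ^ 2 * B ω ^ 2 / 2) *
            (K * Real.exp (-(c ^ 2 / 2) * l ^ 2)) =
            K * Real.exp (A ω * l - ((B ω ^ 2 + c ^ 2) / 2) * l ^ 2) := by
          intro l
          rw [mul_left_comm, ← Real.exp_add]
          congr 1
          ring
        simp_rw [heq]
        exact (gauss_lin_integrable (A ω) ht).const_mul K
      · exact Eventually.of_forall fun l => by positivity
    have hKg : ∫⁻ l : ℝ, ENNReal.ofReal (K * Real.exp (-(c ^ 2 / 2) * l ^ 2))
        ∂(volume : Measure ℝ) = 1 := by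
      rw [← ofReal_integral_eq_lintegral_ofReal
        ((integrable_exp_neg_mul_sq (by positivity : (0:ℝ) < c ^ 2 / 2)).const_mul K)
        (Eventually.of_forall fun l => by positivity)]
      rw [integral_const_mul, integral_gaussian]
      have h1 : K * Real.sqrt (π / (c ^ 2 / 2)) = 1 := by
        rw [hK_def, show π / (c ^ 2 / 2) = 2 * π / c ^ 2 by ring,
          Real.sqrt_div (by positivity : (0:ℝ) ≤ 2 * π), Real.sqrt_sq hc.le]
        field_simp
      rw [h1, ENNReal.ofReal_one]
    calc ∫⁻ ω, ENNReal.ofReal (g ω) ∂μ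
        = ∫⁻ ω, ∫⁻ l : ℝ, ENNReal.ofReal (Real.exp (l * A ω - l ^ 2 * B ω ^ 2 / 2) *
            (K * Real.exp (-(c ^ 2 / 2) * l ^ 2))) ∂(volume : Measure ℝ) ∂μ :=
          lintegral_congr key
      _ = ∫⁻ l : ℝ, ∫⁻ ω, ENNReal.ofReal (Real.exp (l * A ω - l ^ 2 * B ω ^ 2 / 2) *
            (K * Real.exp (-(c ^ 2 / 2) * l ^ 2))) ∂μ ∂(volume : Measure ℝ) :=
          lintegral_lintegral_swap hmeas_prod.aemeasurable
      _ ≤ ∫⁻ l : ℝ, ENNReal.ofReal (K * Real.exp (-(c ^ 2 / 2) * l ^ 2))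
            ∂(volume : Measure ℝ) := by
          apply lintegral_mono
          intro l
          have hrw : ∀ ω : Ω, ENNReal.ofReal (Real.exp (l * A ω - l ^ 2 * B ω ^ 2 / 2) *
              (K * Real.exp (-(c ^ 2 / 2) * l ^ 2))) =
              ENNReal.ofReal (Real.exp (l * A ω - l ^ 2 * B ω ^ 2 / 2)) *
              ENNReal.ofReal (K * Real.exp (-(c ^ 2 / 2) * l ^ 2)) := fun ω =>
            ENNReal.ofReal_mul (Real.exp_nonneg _)
          simp_rw [hrw]
          rw [lintegral_mul_const'' _ (hm1 l).aemeasurable]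
          calc (∫⁻ ω, ENNReal.ofReal (Real.exp (l * A ω - l ^ 2 * B ω ^ 2 / 2)) ∂μ) *
                ENNReal.ofReal (K * Real.exp (-(c ^ 2 / 2) * l ^ 2))
              ≤ 1 * ENNReal.ofReal (K * Real.exp (-(c ^ 2 / 2) * l ^ 2)) :=
                mul_le_mul_left (hcan l) _
            _ = ENNReal.ofReal (K * Real.exp (-(c ^ 2 / 2) * l ^ 2)) := one_mul _
      _ = 1 := hKg
  -- Step C: ∫⁻ h ≤ 2
  have stepC : ∫⁻ ω, ENNReal.ofReal (h ω) ∂μ ≤ 2 := by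
    have hmono : ∀ᵐ ω ∂μ, ENNReal.ofReal (h ω) ≤ ENNReal.ofReal ((B ω + c) / c) := by
      filter_upwards [hBpos] with ω hω
      apply ENNReal.ofReal_le_ofReal
      have hle : Real.sqrt (B ω ^ 2 + c ^ 2) ≤ B ω + c := by
        rw [show B ω + c = Real.sqrt ((B ω + c) ^ 2) from
          (Real.sqrt_sq (by positivity)).symm]
        apply Real.sqrt_le_sqrt
        nlinarith
      simp only [hh_def]
      gcongr
    have hint : Integrable (fun ω => (B ω + c) / c) μ :=
      (hBint.add (integrable_const c)).div_const c
    calc ∫⁻ ω, ENNReal.ofReal (h ω) ∂μ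
        ≤ ∫⁻ ω, ENNReal.ofReal ((B ω + c) / c) ∂μ := lintegral_mono_ae hmono
      _ = ENNReal.ofReal (∫ ω, (B ω + c) / c ∂μ) :=
          (ofReal_integral_eq_lintegral_ofReal hint
            ((hBpos.mono fun ω hω => by positivity))).symm
      _ ≤ 2 := by
          have : ∫ ω, (B ω + c) / c ∂μ = 2 := by
            rw [integral_div, integral_add hBint (integrable_const c),
              integral_const, probReal_univ]
            simp only [ENNReal.toReal_one, one_smul, ← hc_def]
            field_simp
            ring
          rw [this]
          simp [ENNReal.ofReal_ofNat]
  -- Step D: Cauchy–Schwarz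
  have stepD : ∫⁻ ω, ENNReal.ofReal (Real.exp (A ω ^ 2 / (4 * (B ω ^ 2 + c ^ 2)))) ∂μ ≤
      ENNReal.ofReal (Real.sqrt 2) := by
    have hgm : Measurable fun ω => ENNReal.ofReal (g ω) := by
      apply Measurable.ennreal_ofReal
      simp only [hg_def]
      exact (((hB.pow_const 2).add_const (c ^ 2)).sqrt.const_div c).mul
        ((hA.pow_const 2).div (((hB.pow_const 2).add_const (c ^ 2)).const_mul 2)).exp
    have hhm : Measurable fun ω => ENNReal.ofReal (h ω) := by
      apply Measurable.ennreal_ofReal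
      simp only [hh_def]
      exact ((hB.pow_const 2).add_const (c ^ 2)).sqrt.div_const c
    have hfg : ∀ ω, ENNReal.ofReal (Real.exp (A ω ^ 2 / (4 * (B ω ^ 2 + c ^ 2)))) =
        ENNReal.ofReal (g ω) ^ (1 / 2 : ℝ) * ENNReal.ofReal (h ω) ^ (1 / 2 : ℝ) := by
      intro ω
      rw [ENNReal.ofReal_rpow_of_pos (hgpos ω), ENNReal.ofReal_rpow_of_pos (hhpos ω),
        ← ENNReal.ofReal_mul (by positivity),
        ← Real.mul_rpow (hgpos ω).le (hhpos ω).le]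
      congr 1
      have hgh : g ω * h ω = Real.exp (A ω ^ 2 / (2 * (B ω ^ 2 + c ^ 2))) := by
        simp only [hg_def, hh_def]
        field_simp
      rw [hgh, ← Real.exp_mul, mul_one_div, div_div]
      congr 1
      ring
    have hconj : (2:ℝ).HolderConjugate 2 := by rw [Real.holderConjugate_iff]; constructor <;> norm_num
    have hCS := ENNReal.lintegral_mul_le_Lp_mul_Lq μ hconj
      ((hgm.pow_const (1 / 2 : ℝ)).aemeasurable)
      ((hhm.pow_const (1 / 2 : ℝ)).aemeasurable)
    simp only [Pi.mul_apply, ← ENNReal.rpow_mul] at hCS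
    norm_num at hCS
    calc ∫⁻ ω, ENNReal.ofReal (Real.exp (A ω ^ 2 / (4 * (B ω ^ 2 + c ^ 2)))) ∂μ
        = ∫⁻ ω, ENNReal.ofReal (g ω) ^ (1 / 2 : ℝ) *
            ENNReal.ofReal (h ω) ^ (1 / 2 : ℝ) ∂μ := lintegral_congr hfg
      _ ≤ (∫⁻ ω, ENNReal.ofReal (g ω) ∂μ) ^ (1 / 2 : ℝ) *
            (∫⁻ ω, ENNReal.ofReal (h ω) ∂μ) ^ (1 / 2 : ℝ) := hCS
      _ ≤ (1 : ℝ≥0∞) ^ (1 / 2 : ℝ) * (2 : ℝ≥0∞) ^ (1 / 2 : ℝ) := by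
          exact mul_le_mul' (ENNReal.rpow_le_rpow stepB (by norm_num))
            (ENNReal.rpow_le_rpow stepC (by norm_num))
      _ = ENNReal.ofReal (Real.sqrt 2) := by
          rw [ENNReal.one_rpow, one_mul,
            show (2:ℝ≥0∞) = ENNReal.ofReal 2 by norm_num,
            ENNReal.ofReal_rpow_of_pos two_pos]
          congr 1
          rw [Real.sqrt_eq_rpow]
  -- Step E: Markov
  set eps : ℝ≥0∞ := ENNReal.ofReal (Real.exp (x ^ 2 / 4)) with heps_def
  have hFmeas : AEMeasurable (fun ω => ENNReal.ofReal
      (Real.exp (A ω ^ 2 / (4 * (B ω ^ 2 + c ^ 2))))) μ :=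
    (((hA.pow_const 2).div
      (((hB.pow_const 2).add_const (c ^ 2)).const_mul 4)).exp.ennreal_ofReal).aemeasurable
  have hmarkov := mul_meas_ge_le_lintegral₀ hFmeas eps
  have hsub : {ω | |A ω| / Real.sqrt (B ω ^ 2 + c ^ 2) > x} ⊆
      {ω | eps ≤ ENNReal.ofReal (Real.exp (A ω ^ 2 / (4 * (B ω ^ 2 + c ^ 2))))} := by
    intro ω hω
    simp only [Set.mem_setOf_eq] at hω ⊢
    rw [heps_def]
    apply ENNReal.ofReal_le_ofReal
    apply Real.exp_le_exp.mpr
    have h1 : x * Real.sqrt (B ω ^ 2 + c ^ 2) < |A ω| := (lt_div_iff₀ (hsqrtD ω)).mp hω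
    have hs : Real.sqrt (B ω ^ 2 + c ^ 2) ^ 2 = B ω ^ 2 + c ^ 2 := Real.sq_sqrt (hD ω).le
    have h2 : x ^ 2 * (B ω ^ 2 + c ^ 2) ≤ A ω ^ 2 := by
      have h1sq : (x * Real.sqrt (B ω ^ 2 + c ^ 2)) * (x * Real.sqrt (B ω ^ 2 + c ^ 2)) ≤
          |A ω| * |A ω| := mul_le_mul h1.le h1.le (by positivity) (abs_nonneg _)
      nlinarith [sq_abs (A ω)]
    rw [div_le_div_iff₀ (by norm_num) (by positivity)]
    nlinarith [hD ω]
  have heps0 : eps ≠ 0 := ne_of_gt (ENNReal.ofReal_pos.mpr (Real.exp_pos _))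
  have hepstop : eps ≠ ⊤ := ENNReal.ofReal_ne_top
  calc μ {ω | |A ω| / Real.sqrt (B ω ^ 2 + c ^ 2) > x}
      ≤ μ {ω | eps ≤ ENNReal.ofReal (Real.exp (A ω ^ 2 / (4 * (B ω ^ 2 + c ^ 2))))} :=
        measure_mono hsub
    _ = eps⁻¹ * (eps * μ {ω | eps ≤
          ENNReal.ofReal (Real.exp (A ω ^ 2 / (4 * (B ω ^ 2 + c ^ 2))))}) := by
        rw [← mul_assoc, ENNReal.inv_mul_cancel heps0 hepstop, one_mul]
    _ ≤ eps⁻¹ * ENNReal.ofReal (Real.sqrt 2) :=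
        mul_le_mul_right (hmarkov.trans stepD) _
    _ = ENNReal.ofReal (Real.sqrt 2 * Real.exp (-x ^ 2 / 4)) := by
        rw [heps_def, ← ENNReal.ofReal_inv_of_pos (Real.exp_pos _), ← Real.exp_neg,
          ← ENNReal.ofReal_mul (Real.exp_nonneg _)]
        congr 1
        rw [show -x ^ 2 / 4 = -(x ^ 2 / 4) by ring, mul_comm]
end

section
/- For every p > 0 there exist finite positive constants c_{1,p} and c_{2,p}, depending only on p, such that for every pair of real random variables (A, B) with B > 0 almost surely satisfying the canonical assumption E[exp(λA − λ²B²/2)] ≤ 1 for every λ > 0, one has E[ (A⁺/B)^p ] ≤ c_{1,p} + c_{2,p} · E[ (log⁺ log(B ∨ 1/B))^{p/2} ], where A⁺ = max(A, 0), log⁺(x) = max(log x, 0), and ∨ denotes maximum. -/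
open MeasureTheory Filter

section Stmt5Aux

open Real Set
open scoped ENNReal

set_option maxHeartbeats 1000000


noncomputable def mixf (l : ℝ) : ℝ := (π * l * (1 + Real.log l ^ 2))⁻¹

lemma mixf_pos {l : ℝ} (hl : 0 < l) : 0 < mixf l := by
  unfold mixf
  apply inv_pos.2
  have := Real.pi_pos
  positivity

lemma mixf_meas : Measurable mixf := by
  unfold mixf
  exact ((measurable_const.mul measurable_id).mul
    (measurable_const.add (Real.measurable_log.pow_const 2))).inv

lemma aux_mono : MonotoneOn (fun t : ℝ => t * (1 + Real.log t ^ 2)) (Ioi 0) := by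
  have h : ∀ t ∈ interior (Ioi (0:ℝ)), HasDerivAt (fun t : ℝ => t * (1 + Real.log t ^ 2))
      ((1 + Real.log t) ^ 2) t := by
    intro t ht
    rw [interior_Ioi] at ht
    have ht' : (t:ℝ) ≠ 0 := ne_of_gt ht
    have hlog := Real.hasDerivAt_log ht'
    have h1 : HasDerivAt (fun t : ℝ => 1 + Real.log t ^ 2) (2 * Real.log t * t⁻¹) t := by
      simpa using ((hlog.pow 2).const_add 1)
    have h2 : HasDerivAt (fun t : ℝ => t * (1 + Real.log t ^ 2))
        (1 * (1 + Real.log t ^ 2) + t * (2 * Real.log t * t⁻¹)) t := (hasDerivAt_id' t).mul h1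
    convert h2 using 1
    have hinv : t * t⁻¹ = 1 := mul_inv_cancel₀ ht'
    linear_combination (-2 * Real.log t) * hinv
  apply monotoneOn_of_deriv_nonneg (convex_Ioi 0)
  · apply ContinuousOn.mul continuousOn_id
    apply ContinuousOn.add continuousOn_const
    exact (Real.continuousOn_log.mono (fun x hx => ne_of_gt hx)).pow 2
  · intro t ht
    exact (h t ht).differentiableAt.differentiableWithinAt
  · intro t ht
    rw [(h t ht).deriv]
    positivity

lemma mixf_anti {l m : ℝ} (hl : 0 < l) (hlm : l ≤ m) : mixf m ≤ mixf l := by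
  have hm : 0 < m := lt_of_lt_of_le hl hlm
  unfold mixf
  have hkey := aux_mono (mem_Ioi.2 hl) (mem_Ioi.2 hm) hlm
  simp only at hkey
  have h1 : 0 < π * l * (1 + Real.log l ^ 2) := by
    have := Real.pi_pos; positivity
  apply inv_anti₀ h1
  have := Real.pi_pos
  nlinarith [Real.pi_pos]

lemma exp_image : Real.exp '' univ = Ioi (0:ℝ) := by
  rw [image_univ, Real.range_exp]

lemma exp_hasderiv : ∀ x ∈ (univ : Set ℝ), HasDerivWithinAt Real.exp (Real.exp x) univ x :=
  fun x _ => (Real.hasDerivAt_exp x).hasDerivWithinAt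

lemma comp_eq (x : ℝ) : |Real.exp x| • mixf (Real.exp x) = π⁻¹ * (1 + x ^ 2)⁻¹ := by
  rw [abs_of_pos (Real.exp_pos x), smul_eq_mul]
  unfold mixf
  rw [Real.log_exp]
  have h1 : (0:ℝ) < 1 + x ^ 2 := by positivity
  have := Real.pi_pos
  have := Real.exp_pos x
  field_simp

lemma mixf_integrableOn : IntegrableOn mixf (Ioi (0:ℝ)) := by
  rw [← exp_image]
  rw [integrableOn_image_iff_integrableOn_abs_deriv_smul MeasurableSet.univ exp_hasderiv
    Real.exp_injective.injOn]
  have : (fun x : ℝ => |Real.exp x| • mixf (Real.exp x)) = fun x : ℝ => π⁻¹ * (1 + x ^ 2)⁻¹ := by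
    funext x; exact comp_eq x
  rw [this]
  exact (integrable_inv_one_add_sq.const_mul π⁻¹).integrableOn

lemma mixf_bochner : ∫ l in Ioi (0:ℝ), mixf l = 1 := by
  rw [← exp_image, integral_image_eq_integral_abs_deriv_smul MeasurableSet.univ exp_hasderiv
    Real.exp_injective.injOn]
  have : (fun x : ℝ => |Real.exp x| • mixf (Real.exp x)) = fun x : ℝ => π⁻¹ * (1 + x ^ 2)⁻¹ := by
    funext x; exact comp_eq x
  rw [Measure.restrict_univ]
  rw [show (∫ x : ℝ, |Real.exp x| • mixf (Real.exp x)) = ∫ x : ℝ, π⁻¹ * (1 + x ^ 2)⁻¹ from by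
    rw [this]]
  rw [integral_const_mul, integral_univ_inv_one_add_sq]
  field_simp

lemma mixf_lintegral : ∫⁻ l in Ioi (0:ℝ), ENNReal.ofReal (mixf l) = 1 := by
  rw [← ofReal_integral_eq_lintegral_ofReal mixf_integrableOn
    (((ae_restrict_iff' measurableSet_Ioi).2 (ae_of_all _ fun x hx => (mixf_pos hx).le)))]
  rw [mixf_bochner, ENNReal.ofReal_one]

lemma add_rpow_le {u v q : ℝ} (hu : 0 ≤ u) (hv : 0 ≤ v) (hq : 0 ≤ q) :
    (u + v) ^ q ≤ 2 ^ q * (u ^ q + v ^ q) := by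
  have h1 : u + v ≤ 2 * max u v := by
    rcases le_total u v with h | h
    · simp [max_eq_right h]; linarith
    · simp [max_eq_left h]; linarith
  have h2 : (u + v) ^ q ≤ (2 * max u v) ^ q :=
    Real.rpow_le_rpow (by linarith) h1 hq
  have h3 : (2 * max u v) ^ q = 2 ^ q * (max u v) ^ q :=
    Real.mul_rpow (by norm_num) (le_max_of_le_left hu)
  have h4 : (max u v) ^ q ≤ u ^ q + v ^ q := by
    rcases max_cases u v with ⟨he, _⟩ | ⟨he, _⟩ <;> rw [he]
    · exact le_add_of_nonneg_right (Real.rpow_nonneg hv q)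
    · exact le_add_of_nonneg_left (Real.rpow_nonneg hu q)
  calc (u + v) ^ q ≤ 2 ^ q * (max u v) ^ q := h3 ▸ h2
    _ ≤ 2 ^ q * (u ^ q + v ^ q) := by
        apply mul_le_mul_of_nonneg_left h4 (Real.rpow_nonneg (by norm_num) q)

lemma log_max_inv {b : ℝ} (hb : 0 < b) : Real.log (max b (1/b)) = |Real.log b| := by
  rcases le_total b 1 with h | h
  · have h1 : b ≤ 1/b := by
      rw [le_div_iff₀ hb]; nlinarith
    rw [max_eq_right h1, one_div, Real.log_inv, abs_of_nonpos (Real.log_nonpos hb.le h)]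
  · have h1 : 1/b ≤ b := by
      rw [div_le_iff₀ hb]; nlinarith
    rw [max_eq_left h1, abs_of_nonneg (Real.log_nonneg h)]

lemma claimB (p : ℝ) (hp : 0 < p) (b x : ℝ) (hb : 0 < b) (hx : 0 < x) :
    x ^ p ≤ (8 * Real.log (1 + 2 * Real.exp 1 ^ 2)) ^ (p/2)
      + (32:ℝ) ^ (p/2) * (max (Real.log |Real.log b|) 0) ^ (p/2)
      + (3 * π * Real.exp (2*(p+3)^2 + 1)) *
        (mixf ((x+1)/b) * Real.exp (x^2/2 - 1/2) * (1/b)) := by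
  set c := Real.log (1 + 2 * Real.exp 1 ^ 2) with hc
  set y := |Real.log b| with hy
  set m := max (Real.log y) 0 with hm
  have hy0 : 0 ≤ y := abs_nonneg _
  have hm0 : 0 ≤ m := le_max_right _ _
  have hc0 : 0 ≤ c := Real.log_nonneg (by nlinarith [Real.exp_pos 1])
  have hpi := Real.pi_pos
  set L := Real.log ((x+1)/b) with hL
  have hLd : L = Real.log (x+1) - Real.log b := Real.log_div (by linarith) (ne_of_gt hb)
  have hT0 : 0 < π * (x+1) * (1 + L^2) := by positivity
  have hg : mixf ((x+1)/b) * Real.exp (x^2/2 - 1/2) * (1/b)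
      = Real.exp (x^2/2 - 1/2) / (π * (x+1) * (1 + L^2)) := by
    unfold mixf
    rw [← hL]
    field_simp
  have hmrp : 0 ≤ m ^ (p/2) := Real.rpow_nonneg hm0 _
  by_cases hcase : 1 + 2*y^2 ≤ Real.exp (x^2/4)
  · -- Case 1 : big x
    have hK3 : x ^ p ≤ (3 * π * Real.exp (2*(p+3)^2 + 1)) *
        (Real.exp (x^2/2 - 1/2) / (π * (x+1) * (1 + L^2))) := by
      rw [mul_div_assoc', le_div_iff₀ hT0]
      -- bounds
      have hlx0 : 0 ≤ Real.log (x+1) := Real.log_nonneg (by linarith)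
      have hlx : Real.log (x+1) ≤ x := by
        have := Real.log_le_sub_one_of_pos (show (0:ℝ) < x + 1 by linarith)
        linarith
      have hL2 : L^2 ≤ 2*(Real.log (x+1))^2 + 2*y^2 := by
        have hyy : y^2 = (Real.log b)^2 := sq_abs _
        rw [hLd, hyy]
        nlinarith [sq_nonneg (Real.log (x+1) + Real.log b)]
      have hTle : π * (x+1) * (1 + L^2)
          ≤ π * (x+1) * ((1 + 2*(Real.log (x+1))^2) * (1 + 2*y^2)) := by
        have : 1 + L^2 ≤ (1 + 2*(Real.log (x+1))^2) * (1 + 2*y^2) := by nlinarith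
        have hx1 : 0 ≤ π * (x+1) := by positivity
        nlinarith
      have hTle2 : π * (x+1) * (1 + L^2)
          ≤ π * (x+1) * ((1 + 2*x^2) * Real.exp (x^2/4)) := by
        refine hTle.trans ?_
        have h1 : (1 + 2*(Real.log (x+1))^2) ≤ 1 + 2*x^2 := by nlinarith
        have h2 : (0:ℝ) ≤ 1 + 2*y^2 := by positivity
        have h4 : (0:ℝ) ≤ 1 + 2*x^2 := by positivity
        have h5 := mul_le_mul h1 hcase h2 h4
        have h3 : (0:ℝ) ≤ π * (x+1) := by positivity
        exact mul_le_mul_of_nonneg_left h5 h3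
      have hxp : x ^ p ≤ Real.exp (p*x) := by
        have e1 : x ^ p ≤ (1+x) ^ p := Real.rpow_le_rpow hx.le (by linarith) hp.le
        have e2 : (1+x) ^ p ≤ (Real.exp x) ^ p :=
          Real.rpow_le_rpow (by linarith) (by linarith [Real.add_one_le_exp x]) hp.le
        have e3 : (Real.exp x) ^ p = Real.exp (x * p) := (Real.exp_mul x p).symm
        rw [mul_comm p x]
        linarith [e1, e2, e3.le, e3.ge]
      have h1x : x + 1 ≤ Real.exp x := by linarith [Real.add_one_le_exp x]
      have hpoly : 1 + 2*x^2 ≤ 3 * Real.exp (2*x) := by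
        have h1 : (1+x)^2 ≤ (Real.exp x)^2 := by nlinarith [Real.add_one_le_exp x, Real.exp_pos x]
        have h2 : (Real.exp x)^2 = Real.exp (2*x) := by
          rw [← Real.exp_nat_mul]; norm_num
        nlinarith
      calc x ^ p * (π * (x+1) * (1 + L^2))
          ≤ Real.exp (p*x) * (π * (x+1) * ((1 + 2*x^2) * Real.exp (x^2/4))) := by
            apply mul_le_mul hxp hTle2 hT0.le (Real.exp_pos _).le
        _ ≤ Real.exp (p*x) * (π * Real.exp x * ((3 * Real.exp (2*x)) * Real.exp (x^2/4))) := by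
            have i1 : π * (x+1) ≤ π * Real.exp x := mul_le_mul_of_nonneg_left h1x hpi.le
            have i2 : (1 + 2*x^2) * Real.exp (x^2/4) ≤ (3 * Real.exp (2*x)) * Real.exp (x^2/4) :=
              mul_le_mul_of_nonneg_right hpoly (Real.exp_pos _).le
            have i3 := mul_le_mul i1 i2 (by positivity) (by positivity)
            exact mul_le_mul_of_nonneg_left i3 (Real.exp_pos _).le
        _ = 3 * π * Real.exp (p*x + x + 2*x + x^2/4) := by
            rw [Real.exp_add, Real.exp_add, Real.exp_add]; ring
        _ ≤ 3 * π * Real.exp (2*(p+3)^2 + 1 + (x^2/2 - 1/2)) := by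
            have : p*x + x + 2*x + x^2/4 ≤ 2*(p+3)^2 + 1 + (x^2/2 - 1/2) := by
              nlinarith [sq_nonneg (x/2 - (p+3)), sq_nonneg (p+3)]
            have h8 := Real.exp_le_exp.2 this
            have h9 : (0:ℝ) ≤ 3 * π := by positivity
            exact mul_le_mul_of_nonneg_left h8 h9
        _ = 3 * π * Real.exp (2*(p+3)^2 + 1) * Real.exp (x^2/2 - 1/2) := by
            rw [Real.exp_add]; ring
    have hfirst : (0:ℝ) ≤ (8 * c) ^ (p/2) := Real.rpow_nonneg (by linarith) _
    have hsecond : (0:ℝ) ≤ (32:ℝ) ^ (p/2) * m ^ (p/2) := by positivity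
    rw [hg]
    linarith
  · -- Case 2 : big y
    push_neg at hcase
    have hy2 : 0 < 1 + 2*y^2 := by positivity
    have hx24 : x^2/4 ≤ Real.log (1 + 2*y^2) :=
      le_of_lt ((Real.lt_log_iff_exp_lt hy2).2 hcase)
    have hlog : Real.log (1 + 2*y^2) ≤ c + 4*m := by
      rcases le_or_gt y (Real.exp 1) with h | h
      · have : Real.log (1 + 2*y^2) ≤ c := by
          apply Real.log_le_log hy2
          nlinarith
        linarith
      · have he1 : (1:ℝ) < Real.exp 1 := by
          have := Real.exp_lt_exp.2 (show (0:ℝ) < 1 by norm_num)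
          simpa using this
        have hy1 : 1 < y := lt_trans he1 h
        have hy3 : 3 ≤ y^2 := by nlinarith [Real.exp_one_gt_d9]
        have h14 : 1 + 2*y^2 ≤ y^4 := by nlinarith
        have hly : 0 < Real.log y := Real.log_pos hy1
        have : Real.log (1 + 2*y^2) ≤ Real.log (y^4) := Real.log_le_log hy2 h14
        rw [Real.log_pow] at this
        have hmy : m = Real.log y := max_eq_left hly.le
        push_cast at this
        rw [hmy]
        linarith
    have hx2 : x^2 ≤ 4*c + 16*m := by linarith
    have hxpp : x ^ p = (x^2) ^ (p/2) := by
      rw [← Real.rpow_natCast x 2, ← Real.rpow_mul hx.le]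
      congr 1
      ring
    have step1 : (x^2) ^ (p/2) ≤ (4*c + 16*m) ^ (p/2) :=
      Real.rpow_le_rpow (sq_nonneg x) hx2 (by positivity)
    have step2 : (4*c + 16*m) ^ (p/2) ≤ 2 ^ (p/2) * ((4*c) ^ (p/2) + (16*m) ^ (p/2)) :=
      add_rpow_le (by linarith) (by linarith) (by positivity)
    have e1 : (2:ℝ) ^ (p/2) * (4*c) ^ (p/2) = (8*c) ^ (p/2) := by
      rw [← Real.mul_rpow (by norm_num) (by linarith)]
      congr 1
      ring
    have e2 : (2:ℝ) ^ (p/2) * (16*m) ^ (p/2) = (32:ℝ) ^ (p/2) * m ^ (p/2) := by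
      rw [← Real.mul_rpow (by norm_num) (by linarith),
        show (2:ℝ)*(16*m) = 32*m by ring, Real.mul_rpow (by norm_num) hm0]
    have hgpos : 0 < mixf ((x+1)/b) * Real.exp (x^2/2 - 1/2) * (1/b) := by
      have := mixf_pos (show (0:ℝ) < (x+1)/b by positivity)
      positivity
    have hK3pos : (0:ℝ) < 3 * π * Real.exp (2*(p+3)^2 + 1) := by positivity
    have emain : (2:ℝ) ^ (p/2) * ((4*c) ^ (p/2) + (16*m) ^ (p/2))
        = (8*c) ^ (p/2) + (32:ℝ) ^ (p/2) * m ^ (p/2) := by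
      rw [mul_add, e1, e2]
    have hmain : x ^ p ≤ (8*c) ^ (p/2) + (32:ℝ) ^ (p/2) * m ^ (p/2) := by
      rw [hxpp]
      calc (x^2) ^ (p/2) ≤ (4*c + 16*m) ^ (p/2) := step1
        _ ≤ 2 ^ (p/2) * ((4*c) ^ (p/2) + (16*m) ^ (p/2)) := step2
        _ = (8*c) ^ (p/2) + (32:ℝ) ^ (p/2) * m ^ (p/2) := emain
    nlinarith [mul_pos hK3pos hgpos]

lemma exp_part_meas (a b : ℝ) : Measurable fun l : ℝ => Real.exp (l * a - l^2 * b^2 / 2) :=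
  (((measurable_id.mul_const a).sub
    (((measurable_id.pow_const 2).mul_const (b^2)).div_const 2)).exp)

lemma claimA (a b : ℝ) (hb : 0 < b) (ha : 0 < a) :
    ENNReal.ofReal (mixf ((a/b+1)/b) * Real.exp ((a/b)^2/2 - 1/2) * (1/b)) ≤
      ∫⁻ l in Ioi (0:ℝ),
        ENNReal.ofReal (mixf l) * ENNReal.ofReal (Real.exp (l * a - l^2 * b^2 / 2)) := by
  set x := a / b with hxdef
  have hx : 0 < x := div_pos ha hb
  have hab : a = x * b := by rw [hxdef, div_mul_cancel₀ a hb.ne']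
  set lo := x / b with hlodef
  set hi := (x + 1) / b with hhidef
  have hlo : 0 < lo := div_pos hx hb
  have hlohi : lo < hi := by
    rw [hlodef, hhidef, div_lt_div_iff₀ hb hb]
    nlinarith
  have hhi : 0 < hi := lt_trans hlo hlohi
  have hsub : Ioc lo hi ⊆ Ioi (0:ℝ) := fun l hl => lt_trans hlo hl.1
  set C0 : ℝ≥0∞ := ENNReal.ofReal (mixf hi) * ENNReal.ofReal (Real.exp (x^2/2 - 1/2)) with hC0
  have step1 : ∫⁻ l in Ioc lo hi,
      ENNReal.ofReal (mixf l) * ENNReal.ofReal (Real.exp (l * a - l^2 * b^2 / 2)) ≤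
      ∫⁻ l in Ioi (0:ℝ),
      ENNReal.ofReal (mixf l) * ENNReal.ofReal (Real.exp (l * a - l^2 * b^2 / 2)) :=
    lintegral_mono' (Measure.restrict_mono hsub le_rfl) le_rfl
  have step2 : C0 * volume (Ioc lo hi) ≤ ∫⁻ l in Ioc lo hi,
      ENNReal.ofReal (mixf l) * ENNReal.ofReal (Real.exp (l * a - l^2 * b^2 / 2)) := by
    rw [← setLIntegral_const]
    apply setLIntegral_mono (mixf_meas.ennreal_ofReal.mul (exp_part_meas a b).ennreal_ofReal)
    intro l hl
    have hl0 : 0 < l := lt_trans hlo hl.1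
    apply mul_le_mul'
    · exact ENNReal.ofReal_le_ofReal (mixf_anti hl0 hl.2)
    · apply ENNReal.ofReal_le_ofReal
      apply Real.exp_le_exp.2
      have h1 : x < l * b := by
        have h := hl.1
        rw [div_lt_iff₀ hb] at h
        exact h
      have h2 : l * b ≤ x + 1 := by
        have h := hl.2
        rw [hhidef, le_div_iff₀ hb] at h
        exact h
      rw [hab]
      nlinarith [mul_nonneg (by linarith : (0:ℝ) ≤ l*b - x) (by linarith : (0:ℝ) ≤ x + 1 - l*b)]
  have hvol : volume (Ioc lo hi) = ENNReal.ofReal (1/b) := by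
    rw [Real.volume_Ioc]
    congr 1
    rw [hlodef, hhidef]
    field_simp
    ring
  have heq : ENNReal.ofReal (mixf ((a/b+1)/b) * Real.exp ((a/b)^2/2 - 1/2) * (1/b))
      = C0 * ENNReal.ofReal (1/b) := by
    rw [hC0, ← ENNReal.ofReal_mul (mixf_pos hhi).le, ← ENNReal.ofReal_mul
      (mul_nonneg (mixf_pos hhi).le (Real.exp_pos _).le)]
  rw [heq, ← hvol]
  exact le_trans step2 step1

lemma claimC (p : ℝ) (hp : 0 < p) (a b : ℝ) (hb : 0 < b) :
    ENNReal.ofReal ((max a 0 / b) ^ p) ≤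
      ENNReal.ofReal ((8 * Real.log (1 + 2 * Real.exp 1 ^ 2)) ^ (p/2))
      + ENNReal.ofReal ((32:ℝ) ^ (p/2)) *
          ENNReal.ofReal ((max (Real.log (Real.log (max b (1/b)))) 0) ^ (p/2))
      + ENNReal.ofReal (3 * π * Real.exp (2*(p+3)^2 + 1)) *
          ∫⁻ l in Ioi (0:ℝ),
            ENNReal.ofReal (mixf l) * ENNReal.ofReal (Real.exp (l * a - l^2 * b^2 / 2)) := by
  rcases le_or_gt a 0 with ha | ha
  · rw [max_eq_right ha, zero_div, Real.zero_rpow (ne_of_gt hp), ENNReal.ofReal_zero]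
    exact zero_le
  · rw [max_eq_left ha.le]
    set x := a / b with hxdef
    have hx : 0 < x := div_pos ha hb
    have hK2 : (0:ℝ) ≤ (32:ℝ) ^ (p/2) := Real.rpow_nonneg (by norm_num) _
    have hK3 : (0:ℝ) ≤ 3 * π * Real.exp (2*(p+3)^2 + 1) := by positivity
    have hmB : max (Real.log (Real.log (max b (1/b)))) 0
        = max (Real.log |Real.log b|) 0 := by rw [log_max_inv hb]
    rw [hmB]
    have hO := claimB p hp b x hb hx
    calc ENNReal.ofReal (x ^ p)
        ≤ ENNReal.ofReal ((8 * Real.log (1 + 2 * Real.exp 1 ^ 2)) ^ (p/2)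
            + (32:ℝ) ^ (p/2) * (max (Real.log |Real.log b|) 0) ^ (p/2)
            + (3 * π * Real.exp (2*(p+3)^2 + 1)) *
              (mixf ((x+1)/b) * Real.exp (x^2/2 - 1/2) * (1/b))) :=
          ENNReal.ofReal_le_ofReal hO
      _ ≤ ENNReal.ofReal ((8 * Real.log (1 + 2 * Real.exp 1 ^ 2)) ^ (p/2)
            + (32:ℝ) ^ (p/2) * (max (Real.log |Real.log b|) 0) ^ (p/2))
          + ENNReal.ofReal ((3 * π * Real.exp (2*(p+3)^2 + 1)) *
              (mixf ((x+1)/b) * Real.exp (x^2/2 - 1/2) * (1/b))) := ENNReal.ofReal_add_le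
      _ ≤ ENNReal.ofReal ((8 * Real.log (1 + 2 * Real.exp 1 ^ 2)) ^ (p/2))
          + ENNReal.ofReal ((32:ℝ) ^ (p/2) * (max (Real.log |Real.log b|) 0) ^ (p/2))
          + ENNReal.ofReal ((3 * π * Real.exp (2*(p+3)^2 + 1)) *
              (mixf ((x+1)/b) * Real.exp (x^2/2 - 1/2) * (1/b))) :=
          add_le_add_left ENNReal.ofReal_add_le _
      _ ≤ ENNReal.ofReal ((8 * Real.log (1 + 2 * Real.exp 1 ^ 2)) ^ (p/2))
          + ENNReal.ofReal ((32:ℝ) ^ (p/2)) *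
              ENNReal.ofReal ((max (Real.log |Real.log b|) 0) ^ (p/2))
          + ENNReal.ofReal (3 * π * Real.exp (2*(p+3)^2 + 1)) *
            ∫⁻ l in Ioi (0:ℝ),
              ENNReal.ofReal (mixf l) * ENNReal.ofReal (Real.exp (l * a - l^2 * b^2 / 2)) := by
          apply add_le_add (add_le_add_right ?_ _) ?_
          · rw [ENNReal.ofReal_mul hK2]
          · rw [ENNReal.ofReal_mul hK3]
            exact mul_le_mul_right (claimA a b hb ha) _

/-- **Theorem 2.8, (2.9).** For every `p > 0` there are universal constants
`c₁,p, c₂,p > 0` such that for all `A, B` with `B > 0` a.s. satisfying the canonical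
assumption for all `λ > 0`,
`E[(A⁺/B)^p] ≤ c₁,p + c₂,p · E[(log⁺ log(B ∨ 1/B))^{p/2}]`. -/
theorem stmt5 (p : ℝ) (hp : 0 < p) :
    ∃ c1 c2 : ℝ, 0 < c1 ∧ 0 < c2 ∧
      ∀ (Ω : Type) [MeasurableSpace Ω] (μ : Measure Ω) [IsProbabilityMeasure μ]
        (A B : Ω → ℝ), Measurable A → Measurable B → (∀ᵐ ω ∂μ, 0 < B ω) →
        (∀ l : ℝ, 0 < l →
          ∫⁻ ω, ENNReal.ofReal (Real.exp (l * A ω - l ^ 2 * B ω ^ 2 / 2)) ∂μ ≤ 1) →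
        ∫⁻ ω, ENNReal.ofReal ((max (A ω) 0 / B ω) ^ p) ∂μ ≤
          ENNReal.ofReal c1 + ENNReal.ofReal c2 *
            ∫⁻ ω, ENNReal.ofReal
              ((max (Real.log (Real.log (max (B ω) (1 / B ω)))) 0) ^ (p / 2)) ∂μ := by
  set K1 : ℝ := (8 * Real.log (1 + 2 * Real.exp 1 ^ 2)) ^ (p/2) with hK1def
  set K2 : ℝ := (32:ℝ) ^ (p/2) with hK2def
  set K3 : ℝ := 3 * π * Real.exp (2*(p+3)^2 + 1) with hK3def
  have hK1 : 0 ≤ K1 := Real.rpow_nonneg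
    (by nlinarith [Real.log_nonneg (by nlinarith [Real.exp_pos 1] : (1:ℝ) ≤ 1 + 2 * Real.exp 1 ^ 2)]) _
  have hK3 : 0 < K3 := by rw [hK3def]; positivity
  refine ⟨K1 + K3, K2, by linarith, Real.rpow_pos_of_pos (by norm_num) _, ?_⟩
  intro Ω mΩ μ hμ A B hA hB hBpos hcanon
  have hmeasH : Measurable fun ω =>
      ENNReal.ofReal ((max (Real.log (Real.log (max (B ω) (1 / B ω)))) 0) ^ (p/2)) := by
    apply Measurable.ennreal_ofReal
    have m1 : Measurable fun ω => max (B ω) (1 / B ω) := hB.max (measurable_const.div hB)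
    have m2 : Measurable fun ω =>
        max (Real.log (Real.log (max (B ω) (1 / B ω)))) 0 :=
      (Real.measurable_log.comp (Real.measurable_log.comp m1)).max measurable_const
    exact (Real.continuous_rpow_const (by positivity : (0:ℝ) ≤ p/2)).measurable.comp m2
  have hFF : Measurable fun q : Ω × ℝ => ENNReal.ofReal (mixf q.2) *
      ENNReal.ofReal (Real.exp (q.2 * A q.1 - q.2^2 * B q.1^2 / 2)) := by
    apply ((mixf_meas.comp measurable_snd).ennreal_ofReal).mul
    apply Measurable.ennreal_ofReal
    exact (((measurable_snd.mul (hA.comp measurable_fst)).sub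
      (((measurable_snd.pow_const 2).mul
        ((hB.comp measurable_fst).pow_const 2)).div_const 2)).exp)
  set G : Ω → ℝ≥0∞ := fun ω => ∫⁻ l in Ioi (0:ℝ),
      ENNReal.ofReal (mixf l) * ENNReal.ofReal (Real.exp (l * A ω - l^2 * B ω^2 / 2)) with hGdef
  have hG : Measurable G := hFF.lintegral_prod_right'
  have hGle : ∫⁻ ω, G ω ∂μ ≤ 1 := by
    have hswap := lintegral_lintegral_swap (μ := μ) (ν := volume.restrict (Ioi 0))
      (f := fun ω l => ENNReal.ofReal (mixf l) *
        ENNReal.ofReal (Real.exp (l * A ω - l^2 * B ω^2 / 2))) hFF.aemeasurable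
    rw [hGdef]
    rw [hswap]
    calc ∫⁻ l in Ioi (0:ℝ), ∫⁻ ω, ENNReal.ofReal (mixf l) *
          ENNReal.ofReal (Real.exp (l * A ω - l^2 * B ω^2 / 2)) ∂μ
        ≤ ∫⁻ l in Ioi (0:ℝ), ENNReal.ofReal (mixf l) := by
          apply setLIntegral_mono mixf_meas.ennreal_ofReal
          intro l hl
          rw [lintegral_const_mul _ (f := fun ω => ENNReal.ofReal (Real.exp (l * A ω - l^2 * B ω^2 / 2))) (Measurable.ennreal_ofReal
            (((hA.const_mul l).sub (((hB.pow_const 2).const_mul (l^2)).div_const 2)).exp))]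
          · calc ENNReal.ofReal (mixf l) *
                ∫⁻ ω, ENNReal.ofReal (Real.exp (l * A ω - l^2 * B ω^2 / 2)) ∂μ
                ≤ ENNReal.ofReal (mixf l) * 1 := mul_le_mul_right (hcanon l hl) _
              _ = ENNReal.ofReal (mixf l) := mul_one _
      _ = 1 := mixf_lintegral
  calc ∫⁻ ω, ENNReal.ofReal ((max (A ω) 0 / B ω) ^ p) ∂μ
      ≤ ∫⁻ ω, (ENNReal.ofReal K1 + ENNReal.ofReal K2 *
          ENNReal.ofReal ((max (Real.log (Real.log (max (B ω) (1 / B ω)))) 0) ^ (p/2))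
          + ENNReal.ofReal K3 * G ω) ∂μ := by
        apply lintegral_mono_ae
        filter_upwards [hBpos] with ω hω
        exact claimC p hp (A ω) (B ω) hω
    _ = ENNReal.ofReal K1 + ENNReal.ofReal K2 *
          (∫⁻ ω, ENNReal.ofReal
            ((max (Real.log (Real.log (max (B ω) (1 / B ω)))) 0) ^ (p/2)) ∂μ)
          + ENNReal.ofReal K3 * ∫⁻ ω, G ω ∂μ := by
        rw [lintegral_add_left (f := fun ω => ENNReal.ofReal K1 + ENNReal.ofReal K2 *
            ENNReal.ofReal ((max (Real.log (Real.log (max (B ω) (1 / B ω)))) 0) ^ (p/2))) (measurable_const.add (measurable_const.mul hmeasH)),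
          lintegral_add_left measurable_const, lintegral_const, measure_univ, mul_one,
          lintegral_const_mul _ hmeasH, lintegral_const_mul _ hG]
    _ ≤ ENNReal.ofReal K1 + ENNReal.ofReal K2 *
          (∫⁻ ω, ENNReal.ofReal
            ((max (Real.log (Real.log (max (B ω) (1 / B ω)))) 0) ^ (p/2)) ∂μ)
          + ENNReal.ofReal K3 := by
        apply add_le_add_right
        calc ENNReal.ofReal K3 * ∫⁻ ω, G ω ∂μ ≤ ENNReal.ofReal K3 * 1 :=
              mul_le_mul_right hGle _
          _ = ENNReal.ofReal K3 := mul_one _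
    _ = ENNReal.ofReal (K1 + K3) + ENNReal.ofReal K2 *
          ∫⁻ ω, ENNReal.ofReal
            ((max (Real.log (Real.log (max (B ω) (1 / B ω)))) 0) ^ (p/2)) ∂μ := by
        rw [ENNReal.ofReal_add hK1 hK3.le]
        ring

end Stmt5Aux
end

section
/- For every p > 0 there exists a finite positive constant C_p, depending only on p, such that for every pair of real random variables (A, B) with B > 0 almost surely satisfying the canonical assumption E[exp(λA − λ²B²/2)] ≤ 1 for every λ > 0, one has E[ ( A⁺ / ( B · √(1 ∨ log⁺ log(B ∨ 1/B)) ) )^p ] ≤ C_p, where A⁺ = max(A, 0), log⁺(x) = max(log x, 0), and ∨ denotes maximum. -/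
open MeasureTheory Filter Set
open scoped ENNReal NNReal

namespace Stmt6Aux

lemma exp_half_lt : Real.exp (1/2) < 1.6488 := by
  have h : Real.exp (1/2) * Real.exp (1/2) = Real.exp 1 := by
    rw [← Real.exp_add]; norm_num
  nlinarith [Real.exp_one_lt_d9, Real.exp_pos (1/2)]

lemma quarter {u : ℝ} (h1 : 1 ≤ u) (h2 : u ≤ Real.exp (1/2)) : 1/4 ≤ u - u^2/2 := by
  have h3 := exp_half_lt
  have h4 : u ≤ 1.6488 := h2.trans h3.le
  nlinarith [mul_nonneg (sub_nonneg.2 h1) (sub_nonneg.2 h4)]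

lemma markov {Ω : Type} [MeasurableSpace Ω] (μ : Measure Ω) [IsProbabilityMeasure μ]
    (A B : Ω → ℝ) (hA : Measurable A) (hB : Measurable B)
    (hcan : ∀ l : ℝ, 0 < l →
      ∫⁻ ω, ENNReal.ofReal (Real.exp (l * A ω - l ^ 2 * B ω ^ 2 / 2)) ∂μ ≤ 1)
    (t c b : ℝ) (ht : 0 < t) (hc : 1 ≤ c) (hb : 0 < b) :
    μ {ω | t * (B ω * Real.sqrt c) ≤ A ω ∧ B ω ∈ Set.Icc b (b * Real.exp (1/2))}
      ≤ ENNReal.ofReal (Real.exp (-(t^2 * c) / 4)) := by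
  have hc0 : (0:ℝ) < c := by linarith
  set l := t * Real.sqrt c / b with hl_def
  have hsc : 0 < Real.sqrt c := Real.sqrt_pos.2 hc0
  have hl : 0 < l := by positivity
  have hss : Real.sqrt c * Real.sqrt c = c := Real.mul_self_sqrt hc0.le
  set E := {ω | t * (B ω * Real.sqrt c) ≤ A ω ∧ B ω ∈ Set.Icc b (b * Real.exp (1/2))} with hE_def
  have key : ∀ ω ∈ E, t^2 * c / 4 ≤ l * A ω - l ^ 2 * B ω ^ 2 / 2 := by
    rintro ω ⟨hAω, hB1, hB2⟩
    have hBpos : 0 < B ω := lt_of_lt_of_le hb hB1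
    set u := B ω / b with hu_def
    have hBu : B ω = u * b := by rw [hu_def]; field_simp
    have hu1 : (1:ℝ) ≤ u := (one_le_div hb).2 hB1
    have hu2 : u ≤ Real.exp (1/2) := by
      rw [hu_def, div_le_iff₀ hb]; linarith [hB2]
    have hq := quarter hu1 hu2
    have e1 : l * (t * (B ω * Real.sqrt c)) = t^2 * c * u := by
      rw [hl_def, hBu]
      have hbinv : b * b⁻¹ = 1 := mul_inv_cancel₀ hb.ne'
      linear_combination (t^2*u) * (Real.sqrt c ^ 2 * hbinv + hss)
    have e2 : l ^ 2 * B ω ^ 2 / 2 = t^2 * c * (u^2 / 2) := by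
      rw [hl_def, hBu]
      have hbinv : b * b⁻¹ = 1 := mul_inv_cancel₀ hb.ne'
      linear_combination (t^2*u^2/2) * (Real.sqrt c ^ 2 * (b * b⁻¹ + 1) * hbinv + hss)
    have h1 : l * (t * (B ω * Real.sqrt c)) ≤ l * A ω :=
      mul_le_mul_of_nonneg_left hAω hl.le
    have htc : 0 < t^2 * c := by positivity
    rw [e2]
    rw [e1] at h1
    nlinarith [h1, hq, htc]
  set f : Ω → ℝ≥0∞ := fun ω => ENNReal.ofReal (Real.exp (l * A ω - l ^ 2 * B ω ^ 2 / 2))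
    with hf_def
  have hf : Measurable f := by
    apply Measurable.ennreal_ofReal
    exact Real.measurable_exp.comp
      ((measurable_const.mul hA).sub
        (((hB.pow measurable_const).const_mul (l^2)).div_const 2))
  set ε := ENNReal.ofReal (Real.exp (t^2 * c / 4)) with hε_def
  have hsub : E ⊆ {ω | ε ≤ f ω} := fun ω hω =>
    ENNReal.ofReal_le_ofReal (Real.exp_le_exp.2 (key ω hω))
  have h1 : ε * μ E ≤ 1 := by
    calc ε * μ E ≤ ε * μ {ω | ε ≤ f ω} := mul_le_mul_right (measure_mono hsub) _
      _ ≤ ∫⁻ ω, f ω ∂μ := mul_meas_ge_le_lintegral₀ hf.aemeasurable ε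
      _ ≤ 1 := hcan l hl
  have h2 : μ E ≤ ε⁻¹ := ENNReal.le_inv_iff_mul_le.2 (by rwa [mul_comm] at h1)
  refine h2.trans_eq ?_
  rw [hε_def, ← ENNReal.ofReal_inv_of_pos (Real.exp_pos _), ← Real.exp_neg]
  ring_nf

lemma sum_inv_sq_le : ∑' n : ℕ, ENNReal.ofReal (1 / ((n:ℝ)+1)^2) ≤ 2 := by
  have h1 : ∀ n : ℕ, ENNReal.ofReal (1 / ((n:ℝ)+1)^2)
      ≤ ENNReal.ofReal (2 / (((n:ℝ)+1) * ((n:ℝ)+2))) := by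
    intro n
    apply ENNReal.ofReal_le_ofReal
    rw [div_le_div_iff₀ (by positivity) (by positivity)]
    have : (0:ℝ) ≤ (n:ℝ) := Nat.cast_nonneg n
    nlinarith
  refine le_trans (ENNReal.tsum_le_tsum h1) ?_
  refine ENNReal.tsum_le_of_sum_range_le ?_
  intro N
  rw [← ENNReal.ofReal_sum_of_nonneg (fun i _ => by positivity)]
  have hsum : ∑ i ∈ Finset.range N, 2 / (((i:ℝ)+1) * ((i:ℝ)+2)) = 2 - 2/((N:ℝ)+1) := by
    induction N with
    | zero => simp
    | succ k ih =>
      rw [Finset.sum_range_succ, ih]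
      push_cast
      have hk1 : ((k:ℝ)+1) ≠ 0 := by positivity
      have hk2 : ((k:ℝ)+2) ≠ 0 := by positivity
      field_simp
      ring
  rw [hsum]
  calc ENNReal.ofReal (2 - 2/((N:ℝ)+1)) ≤ ENNReal.ofReal 2 := by
        apply ENNReal.ofReal_le_ofReal
        have : (0:ℝ) ≤ 2/((N:ℝ)+1) := by positivity
        linarith
    _ = 2 := by norm_num

set_option maxHeartbeats 2000000 in
lemma tail {Ω : Type} [MeasurableSpace Ω] (μ : Measure Ω) [IsProbabilityMeasure μ]
    (A B : Ω → ℝ) (hA : Measurable A) (hB : Measurable B)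
    (hBpos : ∀ᵐ ω ∂μ, 0 < B ω)
    (hcan : ∀ l : ℝ, 0 < l →
      ∫⁻ ω, ENNReal.ofReal (Real.exp (l * A ω - l ^ 2 * B ω ^ 2 / 2)) ∂μ ≤ 1)
    (t : ℝ) (ht : 4 ≤ t) :
    μ {ω | t < max (A ω) 0 /
        (B ω * Real.sqrt (max 1 (max (Real.log (Real.log (max (B ω) (1 / B ω)))) 0)))}
      ≤ ENNReal.ofReal (64 * Real.exp (-(t^2) / 8)) := by
  have ht0 : (0:ℝ) < t := by linarith
  set L : ℕ → ℝ := fun n => max 1 (Real.log ((n:ℝ)/2)) with hL_def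
  have hL1 : ∀ n, 1 ≤ L n := fun n => le_max_left _ _
  set Ep : ℕ → Set Ω := fun n => {ω | t * (B ω * Real.sqrt (L n)) ≤ A ω ∧
    B ω ∈ Set.Icc (Real.exp ((n:ℝ)/2)) (Real.exp ((n:ℝ)/2) * Real.exp (1/2))} with hEp_def
  set Em : ℕ → Set Ω := fun n => {ω | t * (B ω * Real.sqrt (L n)) ≤ A ω ∧
    B ω ∈ Set.Icc (Real.exp (-((n:ℝ)+1)/2)) (Real.exp (-((n:ℝ)+1)/2) * Real.exp (1/2))}
    with hEm_def
  -- covering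
  have cover : {ω | t < max (A ω) 0 /
        (B ω * Real.sqrt (max 1 (max (Real.log (Real.log (max (B ω) (1 / B ω)))) 0)))}
      ⊆ (⋃ n, Ep n ∪ Em n) ∪ {ω | ¬ (0 < B ω)} := by
    intro ω hω
    by_cases hBω : 0 < B ω
    swap
    · exact Or.inr hBω
    left
    simp only [Set.mem_setOf_eq] at hω
    set M := max (B ω) (1 / B ω) with hM_def
    have hM1 : 1 ≤ M := by
      rcases le_or_gt 1 (B ω) with h | h
      · exact h.trans (le_max_left _ _)
      · refine le_trans ?_ (le_max_right _ _)
        rw [le_div_iff₀ hBω]; linarith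
    have hM0 : (0:ℝ) < M := by linarith
    set S := Real.sqrt (max 1 (max (Real.log (Real.log M)) 0)) with hS_def
    have hS1 : 1 ≤ S := by
      have h := Real.sqrt_le_sqrt (le_max_left 1 (max (Real.log (Real.log M)) 0))
      rwa [Real.sqrt_one] at h
    have hden : 0 < B ω * S := mul_pos hBω (by linarith)
    have hAgt : t * (B ω * S) < max (A ω) 0 := (lt_div_iff₀ hden).1 hω
    have hAeq : max (A ω) 0 = A ω := by
      rcases le_or_gt (A ω) 0 with h | h
      · exfalso
        rw [max_eq_right h] at hAgt
        nlinarith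
      · exact max_eq_left h.le
    rw [hAeq] at hAgt
    have hlogM : 0 ≤ Real.log M := Real.log_nonneg hM1
    set n := ⌊2 * Real.log M⌋₊ with hn_def
    have hn1 : (n:ℝ) ≤ 2 * Real.log M := Nat.floor_le (by linarith)
    have hn2 : 2 * Real.log M < (n:ℝ) + 1 := Nat.lt_floor_add_one _
    have hMl : Real.exp ((n:ℝ)/2) ≤ M := by
      rw [← Real.exp_log hM0]
      exact Real.exp_le_exp.2 (by linarith)
    have hMu : M ≤ Real.exp (((n:ℝ)+1)/2) := by
      rw [← Real.exp_log hM0]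
      exact Real.exp_le_exp.2 (by linarith)
    -- S ≥ sqrt (L n)
    have hSL : Real.sqrt (L n) ≤ S := by
      apply Real.sqrt_le_sqrt
      rcases le_or_gt (Real.log ((n:ℝ)/2)) 1 with h | h
      · exact max_le (le_max_left _ _) (h.trans (le_max_left _ _))
      · have hnpos : (0:ℝ) < (n:ℝ)/2 := by
          by_contra hc
          push_neg at hc
          have : Real.log ((n:ℝ)/2) ≤ 0 := Real.log_nonpos (by positivity) (by linarith)
          linarith
        have hlog2 : (n:ℝ)/2 ≤ Real.log M := by linarith
        have hll : Real.log ((n:ℝ)/2) ≤ Real.log (Real.log M) :=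
          Real.log_le_log hnpos hlog2
        exact max_le (le_max_left _ _)
          (hll.trans ((le_max_left _ _).trans (le_max_right _ _)))
    have hAfin : t * (B ω * Real.sqrt (L n)) ≤ A ω := by
      refine le_trans ?_ hAgt.le
      apply mul_le_mul_of_nonneg_left _ ht0.le
      exact mul_le_mul_of_nonneg_left hSL hBω.le
    rcases le_or_gt 1 (B ω) with hB1 | hB1
    · refine Set.mem_iUnion.2 ⟨n, Or.inl ⟨hAfin, ?_, ?_⟩⟩
      · have hMB : M = B ω := by
          apply max_eq_left
          calc 1 / B ω ≤ 1 := by rw [div_le_one hBω]; exact hB1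
            _ ≤ B ω := hB1
        rw [hMB] at hMl; exact hMl
      · have hMB : M = B ω := by
          apply max_eq_left
          calc 1 / B ω ≤ 1 := by rw [div_le_one hBω]; exact hB1
            _ ≤ B ω := hB1
        rw [hMB] at hMu
        refine hMu.trans_eq ?_
        rw [← Real.exp_add]; ring_nf
    · refine Set.mem_iUnion.2 ⟨n, Or.inr ⟨hAfin, ?_, ?_⟩⟩
      · have hMB : M = 1 / B ω := by
          apply max_eq_right
          calc B ω ≤ 1 := hB1.le
            _ ≤ 1 / B ω := by rw [le_div_iff₀ hBω]; nlinarith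
        rw [hMB] at hMu
        have hE : (0:ℝ) < Real.exp (((n:ℝ)+1)/2) := Real.exp_pos _
        have h1 : 1 ≤ B ω * Real.exp (((n:ℝ)+1)/2) := by
          rw [div_le_iff₀ hBω] at hMu
          nlinarith
        have h2 : Real.exp (-((n:ℝ)+1)/2) = 1 / Real.exp (((n:ℝ)+1)/2) := by
          rw [neg_div, Real.exp_neg, one_div]
        rw [h2, div_le_iff₀ hE]
        nlinarith
      · have hMB : M = 1 / B ω := by
          apply max_eq_right
          calc B ω ≤ 1 := hB1.le
            _ ≤ 1 / B ω := by rw [le_div_iff₀ hBω]; nlinarith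
        rw [hMB] at hMl
        have hE : (0:ℝ) < Real.exp ((n:ℝ)/2) := Real.exp_pos _
        have h1 : B ω * Real.exp ((n:ℝ)/2) ≤ 1 := by
          rw [le_div_iff₀ hBω] at hMl
          nlinarith
        have h2 : Real.exp (-((n:ℝ)+1)/2) * Real.exp (1/2) = 1 / Real.exp ((n:ℝ)/2) := by
          rw [← Real.exp_add, eq_div_iff hE.ne', ← Real.exp_add]
          rw [show -((n:ℝ)+1)/2 + 1/2 + (n:ℝ)/2 = 0 by ring, Real.exp_zero]
        rw [h2, le_div_iff₀ hE]
        nlinarith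
  -- measure estimate
  have hnull : μ {ω | ¬ (0 < B ω)} = 0 := by
    rw [← MeasureTheory.ae_iff] at *
    exact hBpos
  have hEpb : ∀ n, μ (Ep n) ≤ ENNReal.ofReal (Real.exp (-(t^2 * L n) / 4)) := fun n =>
    Stmt6Aux.markov μ A B hA hB hcan t (L n) (Real.exp ((n:ℝ)/2)) ht0 (hL1 n) (Real.exp_pos _)
  have hEmb : ∀ n, μ (Em n) ≤ ENNReal.ofReal (Real.exp (-(t^2 * L n) / 4)) := fun n =>
    Stmt6Aux.markov μ A B hA hB hcan t (L n) (Real.exp (-((n:ℝ)+1)/2)) ht0 (hL1 n)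
      (Real.exp_pos _)
  have hpt : ∀ n : ℕ, 2 * Real.exp (-(t^2 * L n) / 4)
      ≤ (32 * Real.exp (-(t^2) / 8)) * (1 / ((n:ℝ)+1)^2) := by
    intro n
    have hLn := hL1 n
    have ht2 : (16:ℝ) ≤ t^2 := by nlinarith
    have e1 : Real.exp (-(t^2 * L n) / 4)
        = Real.exp (-(t^2 * L n) / 8) * Real.exp (-(t^2 * L n) / 8) := by
      rw [← Real.exp_add]; ring_nf
    have e2 : Real.exp (-(t^2 * L n) / 8) ≤ Real.exp (-(t^2) / 8) :=
      Real.exp_le_exp.2 (by nlinarith)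
    have e3 : Real.exp (-(t^2 * L n) / 8) ≤ Real.exp (-(2 * L n)) :=
      Real.exp_le_exp.2 (by nlinarith)
    have e4 : Real.exp (-(2 * L n)) ≤ 16 / ((n:ℝ)+1)^2 := by
      cases n with
      | zero =>
        have : L 0 = 1 := by
          simp [hL_def]
        rw [this]
        norm_num
        calc Real.exp (-(2:ℝ)) ≤ Real.exp 0 := Real.exp_le_exp.2 (by norm_num)
          _ = 1 := Real.exp_zero
          _ ≤ 16 := by norm_num
      | succ m =>
        set k : ℝ := (m:ℝ) + 1 with hk_def
        have hk1 : (1:ℝ) ≤ k := by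
          have : (0:ℝ) ≤ (m:ℝ) := Nat.cast_nonneg m
          rw [hk_def]; linarith
        have hk0 : (0:ℝ) < k/2 := by linarith
        have hLk : Real.log (k/2) ≤ L (m+1) := by
          have : ((m+1 : ℕ):ℝ) = k := by push_cast [hk_def]; ring
          rw [hL_def]
          simp only [this]
          exact le_max_right _ _
        have h5 : Real.exp (-(2 * L (m+1))) ≤ Real.exp (-(2 * Real.log (k/2))) :=
          Real.exp_le_exp.2 (by linarith)
        have h6 : Real.exp (-(2 * Real.log (k/2))) = (k/2)⁻¹ * (k/2)⁻¹ := by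
          rw [show -(2 * Real.log (k/2)) = -Real.log (k/2) + -Real.log (k/2) by ring,
            Real.exp_add, Real.exp_neg, Real.exp_log hk0]
        have h7 : (k/2)⁻¹ * (k/2)⁻¹ ≤ 16 / (k+1)^2 := by
          rw [inv_eq_one_div, div_mul_div_comm, div_le_div_iff₀ (by positivity) (by positivity)]
          nlinarith
        have hcast : ((m+1 : ℕ):ℝ) = k := by push_cast [hk_def]; ring
        rw [hcast]
        calc Real.exp (-(2 * L (m+1))) ≤ (k/2)⁻¹ * (k/2)⁻¹ := h5.trans_eq h6
          _ ≤ 16 / (k+1)^2 := h7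
    have hpos : (0:ℝ) < ((n:ℝ)+1)^2 := by positivity
    calc 2 * Real.exp (-(t^2 * L n) / 4)
        = 2 * (Real.exp (-(t^2 * L n) / 8) * Real.exp (-(t^2 * L n) / 8)) := by rw [← e1]
      _ ≤ 2 * (Real.exp (-(t^2) / 8) * (16 / ((n:ℝ)+1)^2)) := by
          have h8 : Real.exp (-(t^2 * L n) / 8) * Real.exp (-(t^2 * L n) / 8)
              ≤ Real.exp (-(t^2) / 8) * (16 / ((n:ℝ)+1)^2) := by
            apply mul_le_mul e2 (e3.trans e4) (Real.exp_pos _).le (Real.exp_pos _).le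
          linarith
      _ = (32 * Real.exp (-(t^2) / 8)) * (1 / ((n:ℝ)+1)^2) := by ring
  calc μ {ω | t < max (A ω) 0 /
        (B ω * Real.sqrt (max 1 (max (Real.log (Real.log (max (B ω) (1 / B ω)))) 0)))}
      ≤ μ ((⋃ n, Ep n ∪ Em n) ∪ {ω | ¬ (0 < B ω)}) := measure_mono cover
    _ ≤ μ (⋃ n, Ep n ∪ Em n) + μ {ω | ¬ (0 < B ω)} := measure_union_le _ _
    _ = μ (⋃ n, Ep n ∪ Em n) := by rw [hnull, add_zero]
    _ ≤ ∑' n, μ (Ep n ∪ Em n) := measure_iUnion_le _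
    _ ≤ ∑' n, ENNReal.ofReal (2 * Real.exp (-(t^2 * L n) / 4)) := by
        apply ENNReal.tsum_le_tsum
        intro n
        calc μ (Ep n ∪ Em n) ≤ μ (Ep n) + μ (Em n) := measure_union_le _ _
          _ ≤ ENNReal.ofReal (Real.exp (-(t^2 * L n) / 4))
              + ENNReal.ofReal (Real.exp (-(t^2 * L n) / 4)) := add_le_add (hEpb n) (hEmb n)
          _ = ENNReal.ofReal (2 * Real.exp (-(t^2 * L n) / 4)) := by
              rw [two_mul, ENNReal.ofReal_add (Real.exp_pos _).le (Real.exp_pos _).le]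
    _ ≤ ∑' n : ℕ, ENNReal.ofReal ((32 * Real.exp (-(t^2) / 8)) * (1 / ((n:ℝ)+1)^2)) := by
        exact ENNReal.tsum_le_tsum fun n => ENNReal.ofReal_le_ofReal (hpt n)
    _ = ENNReal.ofReal (32 * Real.exp (-(t^2) / 8)) * ∑' n : ℕ, ENNReal.ofReal (1 / ((n:ℝ)+1)^2) := by
        rw [← ENNReal.tsum_mul_left]
        congr 1
        funext n
        rw [ENNReal.ofReal_mul (by positivity)]
    _ ≤ ENNReal.ofReal (32 * Real.exp (-(t^2) / 8)) * 2 :=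
        mul_le_mul_right Stmt6Aux.sum_inv_sq_le _
    _ = ENNReal.ofReal (64 * Real.exp (-(t^2) / 8)) := by
        rw [show (2:ℝ≥0∞) = ENNReal.ofReal 2 by norm_num, ← ENNReal.ofReal_mul (by positivity)]
        ring_nf

end Stmt6Aux

set_option maxHeartbeats 2000000 in
/-- **Theorem 2.8, (2.10).** For every `p > 0` there is a universal constant
`C_p > 0` such that for all `A, B` with `B > 0` a.s. satisfying the canonical assumption for
all `λ > 0`, `E[(A⁺/(B·√(1 ∨ log⁺ log(B ∨ 1/B))))^p] ≤ C_p`. -/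
theorem stmt6 (p : ℝ) (hp : 0 < p) :
    ∃ C : ℝ, 0 < C ∧
      ∀ (Ω : Type) [MeasurableSpace Ω] (μ : Measure Ω) [IsProbabilityMeasure μ]
        (A B : Ω → ℝ), Measurable A → Measurable B → (∀ᵐ ω ∂μ, 0 < B ω) →
        (∀ l : ℝ, 0 < l →
          ∫⁻ ω, ENNReal.ofReal (Real.exp (l * A ω - l ^ 2 * B ω ^ 2 / 2)) ∂μ ≤ 1) →
        ∫⁻ ω, ENNReal.ofReal
            ((max (A ω) 0 /
              (B ω * Real.sqrt
                (max 1 (max (Real.log (Real.log (max (B ω) (1 / B ω)))) 0)))) ^ p) ∂μ ≤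
          ENNReal.ofReal C := by
  set a := max (p-1) 0 with ha_def
  have ha0 : 0 ≤ a := le_max_right _ _
  have hap : p - 1 ≤ a := le_max_left _ _
  set x₁ := 8*(a+1) with hx₁_def
  have hx₁ : (0:ℝ) < x₁ := by positivity
  have hx₁8 : (8:ℝ) ≤ x₁ := by nlinarith
  refine ⟨x₁ ^ p + 64 * p + 1, by positivity, ?_⟩
  intro Ω _ μ _ A B hA hB hBpos hcan
  set Y : Ω → ℝ := fun ω => max (A ω) 0 /
      (B ω * Real.sqrt (max 1 (max (Real.log (Real.log (max (B ω) (1 / B ω)))) 0))) with hY_def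
  have Y_nn : 0 ≤ᵐ[μ] Y := by
    filter_upwards [hBpos] with ω hω
    have h1 : (0:ℝ) ≤ max (A ω) 0 := le_max_right _ _
    have h2 : (0:ℝ) ≤ B ω * Real.sqrt (max 1 (max (Real.log (Real.log (max (B ω) (1 / B ω)))) 0)) :=
      mul_nonneg hω.le (Real.sqrt_nonneg _)
    exact div_nonneg h1 h2
  have mM : Measurable fun ω => max (B ω) (1 / B ω) := hB.max (measurable_const.div hB)
  have mS : Measurable fun ω =>
      Real.sqrt (max 1 (max (Real.log (Real.log (max (B ω) (1 / B ω)))) 0)) :=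
    Real.continuous_sqrt.measurable.comp
      (measurable_const.max
        ((Real.measurable_log.comp (Real.measurable_log.comp mM)).max measurable_const))
  have mY : Measurable Y := (hA.max measurable_const).div (hB.mul mS)
  rw [show (fun ω => ENNReal.ofReal
      ((max (A ω) 0 / (B ω * Real.sqrt
        (max 1 (max (Real.log (Real.log (max (B ω) (1 / B ω)))) 0)))) ^ p))
      = fun ω => ENNReal.ofReal (Y ω ^ p) from rfl]
  rw [MeasureTheory.lintegral_rpow_eq_lintegral_meas_lt_mul μ Y_nn mY.aemeasurable hp]
  have hsplit : (Set.Ioi (0:ℝ)) = Set.Ioc 0 x₁ ∪ Set.Ioi x₁ :=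
    (Set.Ioc_union_Ioi_eq_Ioi hx₁.le).symm
  rw [hsplit, lintegral_union measurableSet_Ioi (Set.Ioc_disjoint_Ioi le_rfl)]
  -- part 1
  have part1 : ∫⁻ t in Set.Ioc 0 x₁, μ {ω | t < Y ω} * ENNReal.ofReal (t ^ (p-1))
      ≤ ENNReal.ofReal (x₁ ^ p / p) := by
    have hmono : ∫⁻ t in Set.Ioc 0 x₁, μ {ω | t < Y ω} * ENNReal.ofReal (t ^ (p-1))
        ≤ ∫⁻ t in Set.Ioc 0 x₁, ENNReal.ofReal (t ^ (p-1)) := by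
      apply lintegral_mono
      intro t
      calc μ {ω | t < Y ω} * ENNReal.ofReal (t ^ (p-1))
          ≤ 1 * ENNReal.ofReal (t ^ (p-1)) := mul_le_mul_left prob_le_one _
        _ = ENNReal.ofReal (t ^ (p-1)) := one_mul _
    refine hmono.trans ?_
    have hint : IntegrableOn (fun t : ℝ => t ^ (p-1)) (Set.Ioc 0 x₁) := by
      have h := intervalIntegral.intervalIntegrable_rpow' (a := 0) (b := x₁)
        (show (-1:ℝ) < p - 1 by linarith)
      rw [intervalIntegrable_iff, Set.uIoc_of_le hx₁.le] at h
      exact h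
    have hnn : 0 ≤ᵐ[volume.restrict (Set.Ioc 0 x₁)] fun t : ℝ => t ^ (p-1) := by
      filter_upwards [ae_restrict_mem measurableSet_Ioc] with t ht
      exact Real.rpow_nonneg ht.1.le _
    rw [← MeasureTheory.ofReal_integral_eq_lintegral_ofReal hint hnn]
    apply ENNReal.ofReal_le_ofReal
    have hval : ∫ t in Set.Ioc 0 x₁, t ^ (p-1) = x₁ ^ p / p := by
      rw [← intervalIntegral.integral_of_le hx₁.le]
      rw [integral_rpow (Or.inl (show (-1:ℝ) < p - 1 by linarith))]
      rw [show p - 1 + 1 = p by ring, Real.zero_rpow hp.ne']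
      ring
    rw [hval]
  -- part 2
  have part2 : ∫⁻ t in Set.Ioi x₁, μ {ω | t < Y ω} * ENNReal.ofReal (t ^ (p-1))
      ≤ ENNReal.ofReal 64 := by
    have hmono : ∫⁻ t in Set.Ioi x₁, μ {ω | t < Y ω} * ENNReal.ofReal (t ^ (p-1))
        ≤ ∫⁻ t in Set.Ioi x₁, ENNReal.ofReal (64 * Real.exp (-t)) := by
      apply setLIntegral_mono
        (Measurable.ennreal_ofReal ((Real.measurable_exp.comp measurable_neg).const_mul 64))
      intro t htx
      have htx' : x₁ < t := htx
      have ht4 : (4:ℝ) ≤ t := by linarith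
      have ht1 : (1:ℝ) ≤ t := by linarith
      have htail := Stmt6Aux.tail μ A B hA hB hBpos hcan t ht4
      calc μ {ω | t < Y ω} * ENNReal.ofReal (t ^ (p-1))
          ≤ ENNReal.ofReal (64 * Real.exp (-(t^2) / 8)) * ENNReal.ofReal (t ^ (p-1)) :=
            mul_le_mul_left htail _
        _ = ENNReal.ofReal (64 * Real.exp (-(t^2) / 8) * t ^ (p-1)) := by
            rw [← ENNReal.ofReal_mul (by positivity)]
        _ ≤ ENNReal.ofReal (64 * Real.exp (-t)) := by
            apply ENNReal.ofReal_le_ofReal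
            have ht0' : (0:ℝ) ≤ t := by linarith
            have h1 : t ^ (p-1) ≤ t ^ a :=
              Real.rpow_le_rpow_of_exponent_le ht1 hap
            have h2 : t ^ a ≤ Real.exp t ^ a :=
              Real.rpow_le_rpow ht0' (by linarith [Real.add_one_le_exp t]) ha0
            have h3 : Real.exp t ^ a = Real.exp (t * a) := by
              rw [Real.rpow_def_of_pos (Real.exp_pos t), Real.log_exp]
            have h15 : t ^ (p-1) ≤ Real.exp (t * a) := h1.trans (h2.trans_eq h3)
            have h5 : Real.exp (-(t^2) / 8) * Real.exp (t * a)
                = Real.exp (t * a - t^2/8) := by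
              rw [← Real.exp_add]; ring_nf
            have h6 : Real.exp (t * a - t^2/8) ≤ Real.exp (-t) := by
              apply Real.exp_le_exp.2
              have hxt : 8*(a+1) < t := by rw [← hx₁_def]; exact htx'
              nlinarith
            calc 64 * Real.exp (-(t^2) / 8) * t ^ (p-1)
                ≤ 64 * Real.exp (-(t^2) / 8) * Real.exp (t * a) :=
                  mul_le_mul_of_nonneg_left h15 (by positivity)
              _ = 64 * Real.exp (t * a - t^2/8) := by rw [mul_assoc, h5]
              _ ≤ 64 * Real.exp (-t) := by nlinarith [h6]
    refine hmono.trans ?_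
    have hint : IntegrableOn (fun t : ℝ => 64 * Real.exp (-t)) (Set.Ioi x₁) := by
      have h := exp_neg_integrableOn_Ioi x₁ (b := 1) one_pos
      simp only [neg_mul, one_mul] at h
      exact h.const_mul 64
    have hnn : 0 ≤ᵐ[volume.restrict (Set.Ioi x₁)] fun t : ℝ => 64 * Real.exp (-t) :=
      Filter.Eventually.of_forall fun t => by positivity
    rw [← MeasureTheory.ofReal_integral_eq_lintegral_ofReal hint hnn]
    apply ENNReal.ofReal_le_ofReal
    rw [integral_const_mul, integral_exp_neg_Ioi]
    have : Real.exp (-x₁) ≤ 1 := by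
      rw [← Real.exp_zero]
      exact Real.exp_le_exp.2 (by linarith)
    nlinarith
  calc ENNReal.ofReal p * ((∫⁻ t in Set.Ioc 0 x₁, μ {ω | t < Y ω} * ENNReal.ofReal (t ^ (p-1)))
        + ∫⁻ t in Set.Ioi x₁, μ {ω | t < Y ω} * ENNReal.ofReal (t ^ (p-1)))
      ≤ ENNReal.ofReal p * (ENNReal.ofReal (x₁ ^ p / p) + ENNReal.ofReal 64) :=
        mul_le_mul_right (add_le_add part1 part2) _
    _ = ENNReal.ofReal (p * (x₁ ^ p / p + 64)) := by
        rw [← ENNReal.ofReal_add (by positivity) (by norm_num),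
          ← ENNReal.ofReal_mul hp.le]
    _ ≤ ENNReal.ofReal (x₁ ^ p + 64 * p + 1) := by
        apply ENNReal.ofReal_le_ofReal
        have : p * (x₁ ^ p / p) = x₁ ^ p := by field_simp
        nlinarith [this]
end

section
/- Let L : (0, ∞) → (0, ∞) be a nondecreasing function such that L(cy) ≤ 3cL(y) for all c ≥ 1 and y > 0, L(y²) ≤ 3L(y) for all y ≥ 1, and ∫₁^∞ dx/(x·L(x)) = 1/2. Define g(x) = (exp(x²/2)/x)·1{x ≥ 1}. Let A and B be real random variables with B > 0 almost surely satisfying the canonical assumption E[exp(λA − λ²B²/2)] ≤ 1 for every λ > 0. Then E[ g(A/B) / ( L(A/B) ∨ L(B ∨ 1/B) ) ] ≤ 3 / ∫₀¹ exp(−x²/2) dx, where the integrand is taken to be 0 on the event {A/B < 1} (since g vanishes there) and ∨ denotes maximum. -/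
open MeasureTheory Filter Set
open scoped ENNReal

private lemma lintegral_image_deriv {s : Set ℝ} {f f' : ℝ → ℝ}
    (hs : MeasurableSet s) (hf' : ∀ x ∈ s, HasDerivWithinAt f (f' x) s x)
    (hf : Set.InjOn f s) (g : ℝ → ℝ≥0∞) :
    ∫⁻ x in f '' s, g x = ∫⁻ x in s, ENNReal.ofReal |f' x| * g (f x) := by
  simpa only [ContinuousLinearMap.det_toSpanSingleton] using
    lintegral_image_eq_lintegral_abs_det_fderiv_mul volume hs
      (fun x hx => (hf' x hx).hasFDerivWithinAt) hf g

private lemma keyL (L : ℝ → ℝ) (hLpos : ∀ x, 0 < x → 0 < L x)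
    (hLmono : MonotoneOn L (Set.Ioi 0))
    (hL1 : ∀ c, 1 ≤ c → ∀ y, 0 < y → L (c * y) ≤ 3 * c * L y)
    (hL2 : ∀ y, 1 ≤ y → L (y ^ 2) ≤ 3 * L y)
    {x b s : ℝ} (hx : 1 ≤ x) (hb : 0 < b) (hs : 0 < s) (hsx : s ≤ x) :
    s * L (max (s / b) (b / s)) ≤ 3 * x * max (L x) (L (max b b⁻¹)) := by
  set m : ℝ := max b b⁻¹ with hm_def
  have hm1 : (1:ℝ) ≤ m := by
    rcases le_total 1 b with h | h
    · exact le_trans h (le_max_left _ _)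
    · exact le_trans ((one_le_inv₀ hb).2 h) (le_max_right _ _)
  have hbm : b ≤ m := le_max_left _ _
  set M : ℝ := max (L x) (L m) with hM_def
  have hM : 0 < M := lt_of_lt_of_le (hLpos x (by linarith)) (le_max_left _ _)
  have hLxM : L x ≤ M := le_max_left _ _
  have hLmM : L m ≤ M := le_max_right _ _
  have hx0 : (0:ℝ) < x := by linarith
  rcases le_total (s / b) (b / s) with h | h
  · rw [max_eq_right h]
    by_cases hs1 : 1 ≤ s
    · have hne : b / s ≤ m := le_trans (div_le_self hb.le hs1) hbm
      have hLv : L (b / s) ≤ M :=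
        le_trans (hLmono (Set.mem_Ioi.2 (by positivity)) (Set.mem_Ioi.2 (by linarith)) hne) hLmM
      nlinarith [hLpos (b / s) (by positivity)]
    · push_neg at hs1
      have hsi : (1:ℝ) ≤ s⁻¹ := (one_le_inv₀ hs).2 hs1.le
      have h1 : L (b / s) ≤ 3 * s⁻¹ * L b := by
        have := hL1 s⁻¹ hsi b hb
        rwa [div_eq_inv_mul]
      have h2 : L b ≤ L m := hLmono (Set.mem_Ioi.2 hb) (Set.mem_Ioi.2 (by linarith)) hbm
      have h3 : s * L (b / s) ≤ 3 * L b := by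
        have h4 : s * (3 * s⁻¹ * L b) = 3 * L b := by field_simp
        nlinarith
      nlinarith
  · rw [max_eq_left h]
    by_cases hb1 : 1 ≤ b
    · have hne : s / b ≤ x := le_trans (div_le_self hs.le hb1) hsx
      have hLv : L (s / b) ≤ M :=
        le_trans (hLmono (Set.mem_Ioi.2 (by positivity)) (Set.mem_Ioi.2 hx0) hne) hLxM
      nlinarith [hLpos (s / b) (by positivity)]
    · push_neg at hb1
      set N : ℝ := max x m with hN_def
      have hN1 : (1:ℝ) ≤ N := le_trans hx (le_max_left _ _)
      have hbi : b⁻¹ ≤ m := le_max_right _ _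
      have hν : s / b ≤ N ^ 2 := by
        have h1 : s / b = s * b⁻¹ := div_eq_mul_inv s b
        have h2 : s * b⁻¹ ≤ x * m := by
          have hbi0 : (0:ℝ) < b⁻¹ := by positivity
          nlinarith
        have h3 : x * m ≤ N * N := by
          have := le_max_left x m
          have := le_max_right x m
          nlinarith
        nlinarith [sq_nonneg N]
      have hLN : L N ≤ M := by
        rcases max_cases x m with ⟨h1, _⟩ | ⟨h1, _⟩
        · rw [hN_def, h1]; exact hLxM
        · rw [hN_def, h1]; exact hLmM
      have hLv : L (s / b) ≤ 3 * M := by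
        have e1 : L (s / b) ≤ L (N ^ 2) :=
          hLmono (Set.mem_Ioi.2 (by positivity)) (Set.mem_Ioi.2 (by positivity)) hν
        have e2 := hL2 N hN1
        linarith
      nlinarith [hLpos (s / b) (by positivity)]

/-- **(2.12).** Let `L : (0,∞) → (0,∞)` be nondecreasing with
`L(cy) ≤ 3cL(y)` for `c ≥ 1, y > 0`, `L(y²) ≤ 3L(y)` for `y ≥ 1`, and
`∫₁^∞ dx/(xL(x)) = 1/2`.  Let `g(x) = (exp(x²/2)/x)·1{x ≥ 1}`.  If `A, B` (with `B > 0`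
a.s.) satisfy the canonical assumption for all `λ > 0`, then
`E[g(A/B)/(L(A/B) ∨ L(B ∨ 1/B))] ≤ 3/∫₀¹ exp(−x²/2) dx`. -/
theorem stmt7 {Ω : Type*} [MeasurableSpace Ω] (μ : Measure Ω) [IsProbabilityMeasure μ]
    (L : ℝ → ℝ) (hLpos : ∀ x, 0 < x → 0 < L x) (hLmono : MonotoneOn L (Set.Ioi 0))
    (hL1 : ∀ c, 1 ≤ c → ∀ y, 0 < y → L (c * y) ≤ 3 * c * L y)
    (hL2 : ∀ y, 1 ≤ y → L (y ^ 2) ≤ 3 * L y)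
    (hL3 : ∫ x in Set.Ioi (1 : ℝ), 1 / (x * L x) = 1 / 2)
    (A B : Ω → ℝ) (hA : Measurable A) (hB : Measurable B)
    (hBpos : ∀ᵐ ω ∂μ, 0 < B ω)
    (hcan : ∀ l : ℝ, 0 < l →
      ∫⁻ ω, ENNReal.ofReal (Real.exp (l * A ω - l ^ 2 * B ω ^ 2 / 2)) ∂μ ≤ 1) :
    ∫⁻ ω, ENNReal.ofReal
        ((if 1 ≤ A ω / B ω then Real.exp ((A ω / B ω) ^ 2 / 2) / (A ω / B ω) else 0) /
          max (L (A ω / B ω)) (L (max (B ω) (1 / B ω)))) ∂μ ≤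
      ENNReal.ofReal (3 / ∫ x in Set.Ioc (0 : ℝ) 1, Real.exp (-x ^ 2 / 2)) := by
  set C : ℝ := ∫ x in Set.Ioc (0 : ℝ) 1, Real.exp (-x ^ 2 / 2) with hC_def
  have hcont : Continuous fun t : ℝ => Real.exp (-t ^ 2 / 2) := by continuity
  have hC : 0 < C := by
    rw [hC_def, ← intervalIntegral.integral_of_le zero_le_one]
    exact intervalIntegral.intervalIntegral_pos_of_pos_on
      (hcont.intervalIntegrable 0 1) (fun t _ => Real.exp_pos _) zero_lt_one
  -- monotone measurable version of L
  set Lt : ℝ → ℝ := fun y => L (max y 1) with hLt_def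
  have hLtmono : Monotone Lt := fun y z h =>
    hLmono (Set.mem_Ioi.2 (lt_of_lt_of_le one_pos (le_max_right _ _)))
      (Set.mem_Ioi.2 (lt_of_lt_of_le one_pos (le_max_right _ _))) (max_le_max h le_rfl)
  have hLtmeas : Measurable Lt := hLtmono.measurable
  have hLtL : ∀ y, 1 ≤ y → Lt y = L y := fun y hy => by
    rw [hLt_def]; simp only [max_eq_left hy]
  have hLtpos : ∀ y, 0 < Lt y := fun y =>
    hLpos _ (lt_of_lt_of_le one_pos (le_max_right _ _))
  -- the mixing density
  set F : ℝ → ℝ≥0∞ := fun l => ENNReal.ofReal ((l * Lt (max l l⁻¹))⁻¹) with hF_def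
  have hFmeas : Measurable F :=
    ((measurable_id.mul (hLtmeas.comp (measurable_id.max measurable_inv))).inv).ennreal_ofReal
  have hFne : ∀ l, F l ≠ ∞ := fun l => ENNReal.ofReal_ne_top
  -- the integral of F over (1, ∞)
  set φ : ℝ → ℝ := fun u => (u * Lt u)⁻¹ with hφ_def
  have hφeq : ∫ u in Set.Ioi (1:ℝ), φ u = 1 / 2 := by
    rw [← hL3]
    apply setIntegral_congr_fun measurableSet_Ioi
    intro u hu
    rw [hφ_def]
    simp only [hLtL u (le_of_lt hu), one_div]
  have hφnn : 0 ≤ᵐ[volume.restrict (Set.Ioi (1:ℝ))] φ := by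
    refine (ae_restrict_iff' measurableSet_Ioi).2 (Filter.Eventually.of_forall fun u hu => ?_)
    have h1 : (0:ℝ) < u := lt_trans one_pos hu
    have h2 := hLtpos u
    rw [hφ_def]
    positivity
  have hφint : IntegrableOn φ (Set.Ioi (1:ℝ)) := by
    by_contra hcon
    have h0 := MeasureTheory.integral_undef hcon
    rw [h0] at hφeq
    norm_num at hφeq
  have hφlint : ∫⁻ u in Set.Ioi (1:ℝ), ENNReal.ofReal (φ u) = ENNReal.ofReal (1 / 2) := by
    rw [← MeasureTheory.ofReal_integral_eq_lintegral_ofReal hφint hφnn, hφeq]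
  have hFIoi : ∫⁻ l in Set.Ioi (1:ℝ), F l = ENNReal.ofReal (1 / 2) := by
    rw [← hφlint]
    apply setLIntegral_congr_fun_ae measurableSet_Ioi
    refine Filter.Eventually.of_forall fun l hl => ?_
    have h1 : (0:ℝ) < l := lt_trans one_pos hl
    have h2 : l⁻¹ ≤ l := le_trans (inv_le_one_of_one_le₀ hl.le) hl.le
    rw [hF_def, hφ_def]
    simp only [max_eq_left h2]
  have hFIoc : ∫⁻ l in Set.Ioc (0:ℝ) 1, F l = ENNReal.ofReal (1 / 2) := by
    have himg : (fun u : ℝ => u⁻¹) '' Set.Ici 1 = Set.Ioc (0:ℝ) 1 := by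
      ext y
      constructor
      · rintro ⟨u, hu, rfl⟩
        have hu0 : (0:ℝ) < u := lt_of_lt_of_le one_pos hu
        exact ⟨inv_pos.2 hu0, inv_le_one_of_one_le₀ hu⟩
      · rintro ⟨hy1, hy2⟩
        exact ⟨y⁻¹, (one_le_inv₀ hy1).2 hy2, inv_inv y⟩
    have hderiv : ∀ u ∈ Set.Ici (1:ℝ),
        HasDerivWithinAt (fun u : ℝ => u⁻¹) (-(u ^ 2)⁻¹) (Set.Ici 1) u := fun u hu =>
      (hasDerivAt_inv (ne_of_gt (lt_of_lt_of_le one_pos hu))).hasDerivWithinAt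
    have hinj : Set.InjOn (fun u : ℝ => u⁻¹) (Set.Ici 1) :=
      fun a _ b _ h => inv_injective h
    rw [← himg, lintegral_image_deriv measurableSet_Ici hderiv hinj F]
    have hcongr : ∫⁻ u in Set.Ici (1:ℝ), ENNReal.ofReal |(-(u ^ 2)⁻¹)| * F u⁻¹
        = ∫⁻ u in Set.Ici (1:ℝ), ENNReal.ofReal (φ u) := by
      apply setLIntegral_congr_fun_ae measurableSet_Ici
      refine Filter.Eventually.of_forall fun u hu => ?_
      have hu0 : (0:ℝ) < u := lt_of_lt_of_le one_pos hu
      have hmaxu : max u⁻¹ (u⁻¹)⁻¹ = u := by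
        rw [inv_inv]
        exact max_eq_right (le_trans (inv_le_one_of_one_le₀ hu) hu)
      have habs : |(-(u ^ 2)⁻¹)| = (u ^ 2)⁻¹ := by
        rw [abs_neg, abs_of_pos (by positivity)]
      rw [hF_def, hφ_def]
      simp only [hmaxu]
      rw [habs, ← ENNReal.ofReal_mul (by positivity)]
      congr 1
      have hLu := hLtpos u
      field_simp
    rw [hcongr]
    rw [setLIntegral_congr (Ioi_ae_eq_Ici (a := (1:ℝ))).symm]
    exact hφlint
  have hFtot : ∫⁻ l in Set.Ioi (0:ℝ), F l = 1 := by
    rw [← Set.Ioc_union_Ioi_eq_Ioi (zero_le_one (α := ℝ)),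
      lintegral_union measurableSet_Ioi (Set.Ioc_disjoint_Ioi le_rfl), hFIoc, hFIoi,
      ← ENNReal.ofReal_add (by norm_num) (by norm_num)]
    norm_num
  -- the exponential kernel
  set e : Ω → ℝ → ℝ≥0∞ :=
    fun ω l => ENNReal.ofReal (Real.exp (l * A ω - l ^ 2 * B ω ^ 2 / 2)) with he_def
  -- pointwise lower bound
  have hpt : ∀ ω, 0 < B ω → ENNReal.ofReal
      ((if 1 ≤ A ω / B ω then Real.exp ((A ω / B ω) ^ 2 / 2) / (A ω / B ω) else 0) /
        max (L (A ω / B ω)) (L (max (B ω) (1 / B ω)))) * ENNReal.ofReal (C / 3)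
      ≤ ∫⁻ l in Set.Ioi (0:ℝ), e ω l * F l := by
    intro ω hb
    by_cases hx : 1 ≤ A ω / B ω
    swap
    · rw [if_neg hx, zero_div, ENNReal.ofReal_zero, zero_mul]
      exact zero_le
    rw [if_pos hx]
    set a : ℝ := A ω with ha_def
    set b : ℝ := B ω with hb_def
    set x : ℝ := a / b with hx_def
    set M : ℝ := max (L x) (L (max b (1 / b))) with hM_def
    have hx0 : (0:ℝ) < x := lt_of_lt_of_le one_pos hx
    have hM : 0 < M := lt_of_lt_of_le (hLpos x hx0) (le_max_left _ _)
    have hab : a = x * b := by rw [hx_def]; field_simp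
    set p : ℝ := (x - 1) * b⁻¹ with hp_def
    set q : ℝ := x * b⁻¹ with hq_def
    have hp0 : 0 ≤ p := by
      rw [hp_def]
      have : (0:ℝ) ≤ x - 1 := by linarith
      positivity
    have himg : (fun t : ℝ => (x - t) * b⁻¹) '' Set.Ioo 0 1 = Set.Ioo p q := by
      have h1 : (fun t : ℝ => (x - t) * b⁻¹)
          = (fun u : ℝ => u * b⁻¹) ∘ (fun t : ℝ => x - t) := rfl
      rw [h1, Set.image_comp, Set.image_const_sub_Ioo, Set.image_mul_right_Ioo _ _
        (inv_pos.2 hb)]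
      rw [hp_def, hq_def, sub_zero]
    have hderiv : ∀ t ∈ Set.Ioo (0:ℝ) 1,
        HasDerivWithinAt (fun t : ℝ => (x - t) * b⁻¹) (-b⁻¹) (Set.Ioo 0 1) t := by
      intro t _
      have h1 : HasDerivAt (fun t : ℝ => (x - t) * b⁻¹) ((0 - 1) * b⁻¹) t :=
        (((hasDerivAt_const t x).sub (hasDerivAt_id t))).mul_const b⁻¹
      have h2 : (0 - 1 : ℝ) * b⁻¹ = -b⁻¹ := by ring
      rw [h2] at h1
      exact h1.hasDerivWithinAt
    have hinj : Set.InjOn (fun t : ℝ => (x - t) * b⁻¹) (Set.Ioo 0 1) := by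
      intro t1 _ t2 _ h
      have h1 : x - t1 = x - t2 := mul_right_cancel₀ (inv_ne_zero hb.ne') h
      linarith
    have hgauss : ∫⁻ l in Set.Ioo p q, ENNReal.ofReal (Real.exp (-(l * b - x) ^ 2 / 2))
        = ENNReal.ofReal b⁻¹ * ENNReal.ofReal C := by
      rw [← himg, lintegral_image_deriv measurableSet_Ioo hderiv hinj]
      have hcongr : ∫⁻ t in Set.Ioo (0:ℝ) 1, ENNReal.ofReal |(-b⁻¹)| *
          ENNReal.ofReal (Real.exp (-((x - t) * b⁻¹ * b - x) ^ 2 / 2))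
          = ∫⁻ t in Set.Ioo (0:ℝ) 1,
            ENNReal.ofReal b⁻¹ * ENNReal.ofReal (Real.exp (-t ^ 2 / 2)) := by
        apply setLIntegral_congr_fun_ae measurableSet_Ioo
        refine Filter.Eventually.of_forall fun t _ => ?_
        have h1 : (x - t) * b⁻¹ * b = x - t := by field_simp
        rw [h1, abs_neg, abs_of_pos (inv_pos.2 hb)]
        have h2 : -(x - t - x) ^ 2 / 2 = -t ^ 2 / 2 := by ring
        rw [h2]
      rw [hcongr, lintegral_const_mul' _ _ ENNReal.ofReal_ne_top]
      congr 1
      rw [← MeasureTheory.ofReal_integral_eq_lintegral_ofReal]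
      · rw [hC_def, integral_Ioc_eq_integral_Ioo]
      · exact (hcont.integrableOn_Icc).mono_set Set.Ioo_subset_Icc_self
      · exact Filter.Eventually.of_forall fun t => (Real.exp_pos _).le
    set K : ℝ := Real.exp (x ^ 2 / 2) * b / (3 * x * M) with hK_def
    have hbound : ∀ l ∈ Set.Ioo p q,
        ENNReal.ofReal K * ENNReal.ofReal (Real.exp (-(l * b - x) ^ 2 / 2))
        ≤ e ω l * F l := by
      intro l hl
      have hl0 : 0 < l := lt_of_le_of_lt hp0 hl.1
      have hlbx : l * b ≤ x := by
        have h1 := hl.2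
        rw [hq_def] at h1
        have h2 : l * b < x * b⁻¹ * b := by
          exact mul_lt_mul_of_pos_right h1 hb
        have h3 : x * b⁻¹ * b = x := by field_simp
        linarith [h2, h3.le]
      have hkey := keyL L hLpos hLmono hL1 hL2 hx hb (mul_pos hl0 hb) hlbx
      have h1 : l * b / b = l := by field_simp
      have h2 : b / (l * b) = l⁻¹ := by
        rw [div_eq_iff (by positivity : l * b ≠ 0)]
        field_simp
      rw [h1, h2] at hkey
      have hmax1 : (1:ℝ) ≤ max l l⁻¹ := by
        rcases le_total 1 l with h | h
        · exact le_trans h (le_max_left _ _)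
        · exact le_trans ((one_le_inv₀ hl0).2 h) (le_max_right _ _)
      have hMeq : max (L x) (L (max b b⁻¹)) = M := by
        rw [hM_def, one_div]
      rw [hMeq] at hkey
      have hFl : ENNReal.ofReal (b / (3 * x * M)) ≤ F l := by
        rw [hF_def]
        apply ENNReal.ofReal_le_ofReal
        rw [hLtL _ hmax1]
        have hLpos' : 0 < L (max l l⁻¹) := hLpos _ (by positivity)
        have hpos : 0 < l * L (max l l⁻¹) := mul_pos hl0 hLpos'
        have hle : l * L (max l l⁻¹) ≤ 3 * x * M / b := by
          rw [le_div_iff₀ hb]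
          nlinarith [hkey]
        calc b / (3 * x * M) = (3 * x * M / b)⁻¹ := by rw [inv_div]
          _ ≤ (l * L (max l l⁻¹))⁻¹ := inv_anti₀ hpos hle
      have hexp : Real.exp (x ^ 2 / 2) * Real.exp (-(l * b - x) ^ 2 / 2)
          = Real.exp (l * a - l ^ 2 * b ^ 2 / 2) := by
        rw [← Real.exp_add]
        congr 1
        rw [hab]
        ring
      calc ENNReal.ofReal K * ENNReal.ofReal (Real.exp (-(l * b - x) ^ 2 / 2))
          = ENNReal.ofReal (Real.exp (x ^ 2 / 2) * Real.exp (-(l * b - x) ^ 2 / 2))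
            * ENNReal.ofReal (b / (3 * x * M)) := by
            rw [← ENNReal.ofReal_mul (by positivity), ← ENNReal.ofReal_mul (by positivity)]
            congr 1
            rw [hK_def]
            ring
        _ ≤ e ω l * F l := by
            rw [hexp, he_def]
            exact mul_le_mul_right hFl _
    have hsub : Set.Ioo p q ⊆ Set.Ioi (0:ℝ) := fun l hl => lt_of_le_of_lt hp0 hl.1
    calc ENNReal.ofReal (Real.exp (x ^ 2 / 2) / x / M) * ENNReal.ofReal (C / 3)
        = ENNReal.ofReal K * (ENNReal.ofReal b⁻¹ * ENNReal.ofReal C) := by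
          rw [← ENNReal.ofReal_mul (by positivity), ← ENNReal.ofReal_mul (by positivity),
            ← ENNReal.ofReal_mul (by positivity)]
          congr 1
          rw [hK_def]
          field_simp
      _ = ∫⁻ l in Set.Ioo p q,
            ENNReal.ofReal K * ENNReal.ofReal (Real.exp (-(l * b - x) ^ 2 / 2)) := by
          rw [lintegral_const_mul' _ _ ENNReal.ofReal_ne_top, hgauss]
      _ ≤ ∫⁻ l in Set.Ioo p q, e ω l * F l :=
          lintegral_mono_ae ((ae_restrict_iff' measurableSet_Ioo).2
            (Filter.Eventually.of_forall hbound))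
      _ ≤ ∫⁻ l in Set.Ioi (0:ℝ), e ω l * F l :=
          lintegral_mono' (Measure.restrict_mono hsub le_rfl) le_rfl
  -- product measurability
  have hmeas : AEMeasurable (Function.uncurry fun ω l => e ω l * F l)
      (μ.prod (volume.restrict (Set.Ioi (0:ℝ)))) := by
    apply Measurable.aemeasurable
    apply Measurable.mul (f := fun p : Ω × ℝ => e p.1 p.2) (g := fun p : Ω × ℝ => F p.2)
    · apply Measurable.ennreal_ofReal
      apply Real.measurable_exp.comp
      exact (measurable_snd.mul (hA.comp measurable_fst)).sub
        (((measurable_snd.pow_const 2).mul ((hB.comp measurable_fst).pow_const 2)).div_const 2)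
    · exact hFmeas.comp measurable_snd
  -- main estimate
  have hkey : (∫⁻ ω, ENNReal.ofReal
      ((if 1 ≤ A ω / B ω then Real.exp ((A ω / B ω) ^ 2 / 2) / (A ω / B ω) else 0) /
        max (L (A ω / B ω)) (L (max (B ω) (1 / B ω)))) ∂μ) * ENNReal.ofReal (C / 3) ≤ 1 := by
    calc (∫⁻ ω, ENNReal.ofReal
        ((if 1 ≤ A ω / B ω then Real.exp ((A ω / B ω) ^ 2 / 2) / (A ω / B ω) else 0) /
          max (L (A ω / B ω)) (L (max (B ω) (1 / B ω)))) ∂μ) * ENNReal.ofReal (C / 3)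
        = ∫⁻ ω, ENNReal.ofReal
          ((if 1 ≤ A ω / B ω then Real.exp ((A ω / B ω) ^ 2 / 2) / (A ω / B ω) else 0) /
            max (L (A ω / B ω)) (L (max (B ω) (1 / B ω)))) * ENNReal.ofReal (C / 3) ∂μ :=
          (lintegral_mul_const' _ _ ENNReal.ofReal_ne_top).symm
      _ ≤ ∫⁻ ω, (∫⁻ l in Set.Ioi (0:ℝ), e ω l * F l) ∂μ :=
          lintegral_mono_ae (hBpos.mono fun ω h => hpt ω h)
      _ = ∫⁻ l in Set.Ioi (0:ℝ), ∫⁻ ω, e ω l * F l ∂μ :=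
          lintegral_lintegral_swap hmeas
      _ = ∫⁻ l in Set.Ioi (0:ℝ), (∫⁻ ω, e ω l ∂μ) * F l :=
          lintegral_congr fun l => lintegral_mul_const' _ _ (hFne l)
      _ ≤ ∫⁻ l in Set.Ioi (0:ℝ), F l := by
          refine lintegral_mono_ae ((ae_restrict_iff' measurableSet_Ioi).2
            (Filter.Eventually.of_forall fun l hl => ?_))
          calc (∫⁻ ω, e ω l ∂μ) * F l ≤ 1 * F l := mul_le_mul_left (hcan l hl) _
            _ = F l := one_mul _
      _ = 1 := hFtot
  have hc0 : ENNReal.ofReal (C / 3) ≠ 0 := by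
    simp only [ne_eq, ENNReal.ofReal_eq_zero, not_le]
    positivity
  have hfin := (ENNReal.le_div_iff_mul_le (Or.inl hc0)
    (Or.inl ENNReal.ofReal_ne_top)).2 hkey
  calc ∫⁻ ω, ENNReal.ofReal
        ((if 1 ≤ A ω / B ω then Real.exp ((A ω / B ω) ^ 2 / 2) / (A ω / B ω) else 0) /
          max (L (A ω / B ω)) (L (max (B ω) (1 / B ω)))) ∂μ
      ≤ 1 / ENNReal.ofReal (C / 3) := hfin
    _ = ENNReal.ofReal (3 / C) := by
        rw [one_div, ← ENNReal.ofReal_inv_of_pos (by positivity), inv_div]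
end

section
/- Let {d_i} be a sequence of real random variables adapted to a filtration {F_i} such that each d_i is conditionally symmetric given F_{i−1}. Then for every λ ∈ ℝ, the process exp( λ·Σ_{i=1}^n d_i − (λ²/2)·Σ_{i=1}^n d_i² ), n ≥ 1, is a supermartingale with mean ≤ 1. No integrability assumptions on the d_i are required. -/
open MeasureTheory Filter

private lemma stmt14_fbound (l x : ℝ) : l * x - l ^ 2 / 2 * x ^ 2 ≤ 1 / 2 := by
  nlinarith [sq_nonneg (l * x - 1)]

private lemma stmt14_fsum (l x : ℝ) :
    Real.exp (l * x - l ^ 2 / 2 * x ^ 2) + Real.exp (l * (-x) - l ^ 2 / 2 * (-x) ^ 2) ≤ 2 := by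
  have h1 : Real.cosh (l * x) ≤ Real.exp (l ^ 2 / 2 * x ^ 2) := by
    have := Real.cosh_le_exp_half_sq (l * x)
    have e : (l * x) ^ 2 / 2 = l ^ 2 / 2 * x ^ 2 := by ring
    rwa [e] at this
  have h2 : Real.exp (l * x - l ^ 2 / 2 * x ^ 2) + Real.exp (l * (-x) - l ^ 2 / 2 * (-x) ^ 2)
      = 2 * Real.cosh (l * x) / Real.exp (l ^ 2 / 2 * x ^ 2) := by
    have e : l * (-x) - l ^ 2 / 2 * (-x) ^ 2 = -(l * x) - l ^ 2 / 2 * x ^ 2 := by ring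
    rw [e, Real.exp_sub, Real.exp_sub, Real.cosh_eq]
    ring
  rw [h2, div_le_iff₀ (Real.exp_pos _)]
  nlinarith [Real.exp_pos (l ^ 2 / 2 * x ^ 2)]

/-- **Lemma A.4.** If `{d_i}` is adapted to `{F_i}` and each `d_i` is
conditionally symmetric given `F_{i−1}`, then for every `λ ∈ ℝ` the process
`exp(λ Σ_{i≤n} d_i − (λ²/2) Σ_{i≤n} d_i²)`, `n ≥ 1`, is a supermartingale with mean `≤ 1`.
No integrability assumptions on the `d_i` are required. -/
theorem stmt14 {Ω : Type*} {m0 : MeasurableSpace Ω} (μ : Measure Ω) [IsProbabilityMeasure μ]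
    (F : Filtration ℕ m0) (d : ℕ → Ω → ℝ) (hadapt : Adapted F d)
    (hsym : ∀ i, 1 ≤ i → ∀ f : ℝ → ℝ, Measurable f → (∃ C, ∀ x, |f x| ≤ C) →
      μ[fun ω => f (d i ω) | F (i - 1)] =ᵐ[μ] μ[fun ω => f (-(d i ω)) | F (i - 1)])
    (l : ℝ) :
    Supermartingale
      (fun n ω => Real.exp (l * ∑ i ∈ Finset.Icc 1 n, d i ω -
        l ^ 2 / 2 * ∑ i ∈ Finset.Icc 1 n, d i ω ^ 2)) F μ ∧
    ∫ ω, Real.exp (l * ∑ i ∈ Finset.Icc 1 1, d i ω -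
        l ^ 2 / 2 * ∑ i ∈ Finset.Icc 1 1, d i ω ^ 2) ∂μ ≤ 1 := by
  set f : ℝ → ℝ := fun x => Real.exp (l * x - l ^ 2 / 2 * x ^ 2) with hf
  set X : ℕ → Ω → ℝ := fun n ω => Real.exp (l * ∑ i ∈ Finset.Icc 1 n, d i ω -
      l ^ 2 / 2 * ∑ i ∈ Finset.Icc 1 n, d i ω ^ 2) with hX
  -- basic facts about f
  have hfmeas : Measurable f := by
    apply Real.measurable_exp.comp; fun_prop
  have hfbd : ∀ x, |f x| ≤ Real.exp (1 / 2) := by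
    intro x
    rw [abs_of_pos (Real.exp_pos _)]
    exact Real.exp_le_exp.2 (stmt14_fbound l x)
  -- measurability of d i w.r.t. F n when i ≤ n
  have hdmeas : ∀ i n, i ≤ n → Measurable[F n] (d i) :=
    fun i n hin => ((hadapt i).mono (F.mono hin) le_rfl)
  -- X n is F n measurable
  have hXmeas : ∀ n, StronglyMeasurable[F n] (X n) := by
    intro n
    apply Measurable.stronglyMeasurable
    apply Real.measurable_exp.comp
    apply Measurable.sub
    · exact (Finset.measurable_sum _ fun i hi =>
        hdmeas i n (Finset.mem_Icc.1 hi).2).const_mul l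
    · exact (Finset.measurable_sum _ fun i hi =>
        ((hdmeas i n (Finset.mem_Icc.1 hi).2).pow_const 2)).const_mul _
  -- X n is integrable
  have hXint : ∀ n, Integrable (X n) μ := by
    intro n
    refine Integrable.mono' (integrable_const (Real.exp (n * (1 / 2))))
      ((hXmeas n).mono (F.le n)).aestronglyMeasurable (ae_of_all _ fun ω => ?_)
    rw [Real.norm_eq_abs, abs_of_pos (Real.exp_pos _), Real.exp_le_exp]
    calc l * ∑ i ∈ Finset.Icc 1 n, d i ω - l ^ 2 / 2 * ∑ i ∈ Finset.Icc 1 n, d i ω ^ 2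
        = ∑ i ∈ Finset.Icc 1 n, (l * d i ω - l ^ 2 / 2 * d i ω ^ 2) := by
          rw [Finset.sum_sub_distrib, ← Finset.mul_sum, ← Finset.mul_sum]
      _ ≤ ∑ i ∈ Finset.Icc 1 n, (1 / 2 : ℝ) :=
          Finset.sum_le_sum fun i _ => stmt14_fbound l (d i ω)
      _ ≤ n * (1 / 2) := by
          rw [Finset.sum_const, Nat.card_Icc]
          simp only [nsmul_eq_mul]
          gcongr; simp
  -- integrability of f ∘ d i
  have hfdint : ∀ i, Integrable (fun ω => f (d i ω)) μ := by
    intro i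
    refine Integrable.mono' (integrable_const (Real.exp (1 / 2)))
      (hfmeas.comp (((hadapt i).mono (F.le i) le_rfl))).aestronglyMeasurable
      (ae_of_all _ fun ω => ?_)
    rw [Real.norm_eq_abs]; exact hfbd _
  -- core lemma : conditional expectation of f(d i) given F (i-1) is ≤ 1
  have hcore : ∀ i, 1 ≤ i → μ[fun ω => f (d i ω) | F (i - 1)] ≤ᵐ[μ] fun _ => 1 := by
    intro i hi
    have hkey := hsym i hi f hfmeas ⟨Real.exp (1 / 2), hfbd⟩
    have hfdint' : Integrable (fun ω => f (-(d i ω))) μ := by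
      refine Integrable.mono' (integrable_const (Real.exp (1 / 2)))
        ((hfmeas.comp (((hadapt i).mono (F.le i) le_rfl)).neg)).aestronglyMeasurable
        (ae_of_all _ fun ω => ?_)
      rw [Real.norm_eq_abs]; exact hfbd _
    have hsum : μ[(fun ω => f (d i ω)) + (fun ω => f (-(d i ω))) | F (i - 1)]
        ≤ᵐ[μ] fun _ => 2 := by
      have hmono := condExp_mono (m := F (i - 1)) ((hfdint i).add hfdint')
        (integrable_const 2) (ae_of_all _ fun ω => stmt14_fsum l (d i ω))
      rw [condExp_const (F.le (i - 1))] at hmono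
      exact hmono
    have hadd := condExp_add (m := F (i - 1)) (hfdint i) hfdint'
    filter_upwards [hkey, hsum, hadd] with ω h1 h2 h3
    simp only [Pi.add_apply] at h3
    rw [h3, ← h1] at h2
    linarith
  -- step inequality
  have hstep : ∀ n, μ[X (n + 1) | F n] ≤ᵐ[μ] X n := by
    intro n
    have hsplit : X (n + 1) = X n * fun ω => f (d (n + 1) ω) := by
      funext ω
      simp only [hX, hf, Pi.mul_apply]
      rw [Finset.sum_Icc_succ_top (Nat.le_add_left 1 n),
        Finset.sum_Icc_succ_top (Nat.le_add_left 1 n), ← Real.exp_add]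
      ring_nf
    have hmul := condExp_mul_of_stronglyMeasurable_left (m := F n) (hXmeas n)
      (hsplit ▸ hXint (n + 1)) (hfdint (n + 1))
    have hcond : μ[fun ω => f (d (n + 1) ω) | F n] ≤ᵐ[μ] fun _ => 1 := by
      have := hcore (n + 1) (Nat.le_add_left 1 n)
      simpa using this
    rw [hsplit]
    filter_upwards [hmul, hcond] with ω h1 h2
    rw [h1, Pi.mul_apply]
    calc X n ω * (μ[fun ω => f (d (n + 1) ω) | F n]) ω ≤ X n ω * 1 := by
          exact mul_le_mul_of_nonneg_left h2 (Real.exp_pos _).le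
      _ = X n ω := mul_one _
  have hsuper : Supermartingale X F μ :=
    supermartingale_nat (fun n => hXmeas n) hXint hstep
  refine ⟨hsuper, ?_⟩
  -- mean ≤ 1
  have h0 : X 0 = fun _ => 1 := by
    funext ω; simp [hX]
  have h1 : ∫ ω, X 1 ω ∂μ ≤ 1 := by
    rw [← integral_condExp (F.le 0)]
    calc ∫ ω, (μ[X 1 | F 0]) ω ∂μ ≤ ∫ _, (1 : ℝ) ∂μ := by
          refine integral_mono_ae integrable_condExp (integrable_const 1) ?_
          have := hstep 0
          rw [h0] at this
          exact this
      _ = 1 := by simp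
  exact h1
end

section
/- Let {d_n} be a sequence of real random variables adapted to a filtration {F_n} such that E(d_n | F_{n−1}) ≤ 0 a.s., E(d_n² | F_{n−1}) < ∞ a.s., and d_n ≤ M almost surely for all n, where M > 0 is a nonrandom constant. Let 0 < λ₀ ≤ 1/M, A_n = Σ_{i=1}^n d_i, B_n² = (1 + λ₀M/2)·Σ_{i=1}^n E(d_i² | F_{i−1}), and A_0 = B_0 = 0. Then for every λ with 0 ≤ λ ≤ λ₀, the process {exp(λA_n − λ²B_n²/2), F_n}_{n≥0} is a supermartingale. -/
open MeasureTheory Filter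

private lemma exp_le_quad_of_nonpos {x : ℝ} (hx : x ≤ 0) :
    Real.exp x ≤ 1 + x + x ^ 2 / 2 := by
  have hf : ∀ y : ℝ, HasDerivAt (fun t : ℝ => 1 + t + t ^ 2 / 2 - Real.exp t)
      (1 + y - Real.exp y) y := by
    intro y
    have h1 : HasDerivAt (fun t : ℝ => 1 + t + t ^ 2 / 2 - Real.exp t)
        (0 + 1 + (2 : ℕ) * y ^ 1 / 2 - Real.exp y) y :=
      (((hasDerivAt_const y (1 : ℝ)).add (hasDerivAt_id y)).add
        ((hasDerivAt_pow 2 y).div_const 2)).sub (Real.hasDerivAt_exp y)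
    convert h1 using 1
    push_cast
    ring
  have hanti : Antitone (fun t : ℝ => 1 + t + t ^ 2 / 2 - Real.exp t) := by
    apply antitone_of_deriv_nonpos (fun y => (hf y).differentiableAt)
    intro y
    rw [(hf y).deriv]
    have := Real.add_one_le_exp y
    linarith
  have h0 := hanti hx
  simp only [Real.exp_zero] at h0
  norm_num at h0
  linarith

private lemma exp_le_quad {c x : ℝ} (hc0 : 0 ≤ c) (hc1 : c ≤ 1) (hx : x ≤ c) :
    Real.exp x ≤ 1 + x + (1 + c / 2) * x ^ 2 / 2 := by
  rcases le_or_gt x 0 with h | h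
  · have := exp_le_quad_of_nonpos h
    nlinarith [sq_nonneg x]
  · have hx1 : |x| ≤ 1 := by rw [abs_of_pos h]; linarith
    have hb := Real.exp_bound hx1 (by norm_num : 0 < 3)
    have hsum : ∑ m ∈ Finset.range 3, x ^ m / (m.factorial : ℝ) = 1 + x + x ^ 2 / 2 := by
      simp [Finset.sum_range_succ, Nat.factorial]
    rw [hsum] at hb
    have h3 : |x| ^ 3 = x ^ 2 * x := by rw [abs_of_pos h]; ring
    have hb' := (abs_sub_le_iff.1 hb).1
    rw [h3] at hb'
    have hxx : x ^ 2 * x ≤ x ^ 2 * c := mul_le_mul_of_nonneg_left hx (sq_nonneg x)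
    have hcast : ((Nat.succ 3 : ℕ) : ℝ) / ((Nat.factorial 3 : ℕ) * (3 : ℕ) : ℝ) = 2 / 9 := by
      norm_num [Nat.factorial]
    nlinarith [sq_nonneg x, mul_nonneg (sq_nonneg x) hc0]

/-- **Lemma A.5.** If `{d_n}` is adapted with `E(d_n|F_{n−1}) ≤ 0`,
`E(d_n²|F_{n−1}) < ∞` and `d_n ≤ M` a.s. for a constant `M > 0`, and `0 < λ₀ ≤ 1/M`,
`A_n = Σ_{i≤n} d_i`, `B_n² = (1 + λ₀M/2) Σ_{i≤n} E(d_i²|F_{i−1})`, then for every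
`0 ≤ λ ≤ λ₀`, `{exp(λA_n − λ²B_n²/2), F_n}` is a supermartingale. -/
theorem stmt15 {Ω : Type*} {m0 : MeasurableSpace Ω} (μ : Measure Ω) [IsProbabilityMeasure μ]
    (F : Filtration ℕ m0) (M : ℝ) (hM : 0 < M)
    (lam0 : ℝ) (hlam0 : 0 < lam0) (hlam0M : lam0 ≤ 1 / M)
    (d : ℕ → Ω → ℝ) (hadapt : Adapted F d)
    (hint : ∀ i, Integrable (d i) μ)
    (hint2 : ∀ i, Integrable (fun ω => d i ω ^ 2) μ)
    (hcond : ∀ i, 1 ≤ i → μ[d i | F (i - 1)] ≤ᵐ[μ] 0)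
    (hbd : ∀ i, ∀ᵐ ω ∂μ, d i ω ≤ M)
    (l : ℝ) (hl0 : 0 ≤ l) (hl : l ≤ lam0) :
    Supermartingale
      (fun n ω => Real.exp (l * ∑ i ∈ Finset.Icc 1 n, d i ω -
        l ^ 2 * ((1 + lam0 * M / 2) *
          ∑ i ∈ Finset.Icc 1 n, (μ[fun ω' => d i ω' ^ 2 | F (i - 1)]) ω) / 2)) F μ := by
  set c : ℝ := 1 + lam0 * M / 2 with hc
  set g : ℕ → Ω → ℝ := fun i => μ[fun ω' => d i ω' ^ 2 | F (i - 1)] with hgdef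
  set X : ℕ → Ω → ℝ := fun n ω => Real.exp (l * ∑ i ∈ Finset.Icc 1 n, d i ω -
      l ^ 2 * (c * ∑ i ∈ Finset.Icc 1 n, g i ω) / 2) with hXdef
  have hlM : lam0 * M ≤ 1 := by
    rw [le_div_iff₀ hM] at hlam0M
    linarith
  have hlM' : l * M ≤ 1 := le_trans (mul_le_mul_of_nonneg_right hl hM.le) hlM
  have hc1 : (1 : ℝ) ≤ c := by
    have : 0 ≤ lam0 * M := mul_nonneg hlam0.le hM.le
    simp only [hc]; linarith
  have hg_sm : ∀ i, StronglyMeasurable[F (i - 1)] (g i) := fun i => stronglyMeasurable_condExp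
  have hg_int : ∀ i, Integrable (g i) μ := fun i => integrable_condExp
  have hg_nonneg : ∀ i, 0 ≤ᵐ[μ] g i := fun i =>
    condExp_nonneg (Eventually.of_forall fun ω => sq_nonneg _)
  -- strong measurability of X n w.r.t. F n
  have hX_sm : ∀ n, StronglyMeasurable[F n] (X n) := by
    intro n
    have hS : StronglyMeasurable[F n] (fun ω => ∑ i ∈ Finset.Icc 1 n, d i ω) :=
      Finset.stronglyMeasurable_fun_sum _ fun i hi =>
        ((hadapt i).mono (F.mono (Finset.mem_Icc.1 hi).2) le_rfl).stronglyMeasurable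
    have hT : StronglyMeasurable[F n] (fun ω => ∑ i ∈ Finset.Icc 1 n, g i ω) := by
      refine Finset.stronglyMeasurable_fun_sum _ fun i hi => ?_
      have h2 := (Finset.mem_Icc.1 hi).2
      exact (hg_sm i).mono (F.mono (by omega))
    exact (Real.measurable_exp.comp ((hS.measurable.const_mul l).sub
      (((hT.measurable.const_mul c).const_mul (l ^ 2)).div_const 2))).stronglyMeasurable
  -- uniform a.e. bound
  have hX_le : ∀ n, ∀ᵐ ω ∂μ, X n ω ≤ Real.exp n := by
    intro n
    filter_upwards [ae_all_iff.2 hbd, ae_all_iff.2 hg_nonneg] with ω hωd hωg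
    have hS : l * ∑ i ∈ Finset.Icc 1 n, d i ω ≤ n := by
      rw [Finset.mul_sum]
      calc ∑ i ∈ Finset.Icc 1 n, l * d i ω ≤ ∑ i ∈ Finset.Icc 1 n, (1 : ℝ) :=
        Finset.sum_le_sum fun i _ =>
          le_trans (mul_le_mul_of_nonneg_left (hωd i) hl0) hlM'
      _ = n := by simp [Nat.card_Icc]
    have hT : 0 ≤ ∑ i ∈ Finset.Icc 1 n, g i ω :=
      Finset.sum_nonneg fun i _ => hωg i
    have h2 : 0 ≤ l ^ 2 * (c * ∑ i ∈ Finset.Icc 1 n, g i ω) / 2 := by positivity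
    exact Real.exp_le_exp.2 (by linarith)
  have hX_int : ∀ n, Integrable (X n) μ := by
    intro n
    refine Integrable.mono' (integrable_const (Real.exp n))
      ((hX_sm n).mono (F.le n)).aestronglyMeasurable ?_
    filter_upwards [hX_le n] with ω h
    rw [Real.norm_eq_abs, abs_of_pos (Real.exp_pos _)]
    exact h
  refine supermartingale_nat (fun n => hX_sm n) hX_int ?_
  intro n
  -- notation for the one-step pieces
  set Y : Ω → ℝ := fun ω => Real.exp (l * d (n + 1) ω) with hYdef
  set W : Ω → ℝ := fun ω => X n ω * Real.exp (-(l ^ 2 * (c * g (n + 1) ω) / 2)) with hWdef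
  have hgn : StronglyMeasurable[F n] (g (n + 1)) := hg_sm (n + 1)
  have hdecomp : X (n + 1) = fun ω => W ω * Y ω := by
    funext ω
    simp only [hXdef, hWdef, hYdef]
    rw [Finset.sum_Icc_succ_top (by omega : 1 ≤ n + 1),
      Finset.sum_Icc_succ_top (by omega : 1 ≤ n + 1), ← Real.exp_add, ← Real.exp_add]
    congr 1
    ring
  have hY_int : Integrable Y μ := by
    refine Integrable.mono' (integrable_const (Real.exp 1))
      (Real.continuous_exp.comp_aestronglyMeasurable
        ((((hadapt (n + 1)).mono (F.le _) le_rfl).aestronglyMeasurable.const_mul l))) ?_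
    filter_upwards [hbd (n + 1)] with ω hω
    rw [Real.norm_eq_abs, abs_of_pos (Real.exp_pos _)]
    exact Real.exp_le_exp.2 (le_trans (mul_le_mul_of_nonneg_left hω hl0) hlM')
  have hW_sm : StronglyMeasurable[F n] W :=
    ((hX_sm n).measurable.mul (Real.measurable_exp.comp
      ((((hgn.measurable.const_mul c).const_mul (l ^ 2)).div_const 2).neg))).stronglyMeasurable
  have hWY_int : Integrable (W * Y) μ := by
    have := hX_int (n + 1)
    rwa [hdecomp] at this
  have step1 : μ[X (n + 1) | F n] =ᵐ[μ] W * μ[Y | F n] := by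
    rw [hdecomp]
    exact condExp_mul_of_stronglyMeasurable_left hW_sm hWY_int hY_int
  -- bound the conditional expectation of Y
  set k : ℝ := c * l ^ 2 / 2 with hk
  set φ : Ω → ℝ := fun ω => 1 + l * d (n + 1) ω + k * d (n + 1) ω ^ 2 with hφdef
  have hYφ : Y ≤ᵐ[μ] φ := by
    filter_upwards [hbd (n + 1)] with ω hω
    have hx : l * d (n + 1) ω ≤ lam0 * M :=
      le_trans (mul_le_mul_of_nonneg_left hω hl0) (mul_le_mul_of_nonneg_right hl hM.le)
    have hkey := exp_le_quad (mul_nonneg hlam0.le hM.le) hlM hx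
    calc Y ω = Real.exp (l * d (n + 1) ω) := rfl
    _ ≤ 1 + l * d (n + 1) ω + (1 + lam0 * M / 2) * (l * d (n + 1) ω) ^ 2 / 2 := hkey
    _ = φ ω := by simp only [hφdef, hk, hc]; ring
  have hφ_int : Integrable φ μ :=
    ((integrable_const (1 : ℝ)).add ((hint (n + 1)).const_mul l)).add
      ((hint2 (n + 1)).const_mul k)
  have hmono : μ[Y | F n] ≤ᵐ[μ] μ[φ | F n] := condExp_mono hY_int hφ_int hYφ
  have hφ_split : μ[φ | F n] =ᵐ[μ]
      fun ω => 1 + l * (μ[d (n + 1) | F n]) ω + k * g (n + 1) ω := by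
    have h1 : μ[φ | F n] =ᵐ[μ]
        μ[(fun ω => 1 + l * d (n + 1) ω) | F n] + μ[(fun ω => k * d (n + 1) ω ^ 2) | F n] :=
      condExp_add ((integrable_const (1 : ℝ)).add ((hint (n + 1)).const_mul l))
        ((hint2 (n + 1)).const_mul k) (F n)
    have h2 : μ[(fun ω => 1 + l * d (n + 1) ω) | F n] =ᵐ[μ]
        μ[(fun _ => (1 : ℝ)) | F n] + μ[(fun ω => l * d (n + 1) ω) | F n] :=
      condExp_add (integrable_const 1) ((hint (n + 1)).const_mul l) (F n)
    have h3 : μ[(fun _ => (1 : ℝ)) | F n] = fun _ => (1 : ℝ) := condExp_const (F.le n) 1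
    have h4 : μ[(fun ω => l * d (n + 1) ω) | F n] =ᵐ[μ] fun ω => l * (μ[d (n + 1) | F n]) ω := by
      simpa [Pi.smul_def, smul_eq_mul] using condExp_smul (μ := μ) (m := F n) l (d (n + 1))
    have h5 : μ[(fun ω => k * d (n + 1) ω ^ 2) | F n] =ᵐ[μ] fun ω => k * g (n + 1) ω := by
      simpa [Pi.smul_def, smul_eq_mul, hgdef] using condExp_smul (μ := μ) (m := F n) k (fun ω => d (n + 1) ω ^ 2)
    filter_upwards [h1, h2, h4, h5] with ω e1 e2 e4 e5
    simp only [Pi.add_apply] at e1 e2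
    rw [e1, e2, h3, e4, e5]
  have hcond' : μ[d (n + 1) | F n] ≤ᵐ[μ] 0 := hcond (n + 1) (by omega)
  have step2 : μ[Y | F n] ≤ᵐ[μ] fun ω => 1 + k * g (n + 1) ω := by
    filter_upwards [hmono, hφ_split, hcond'] with ω e1 e2 e3
    rw [Pi.zero_apply] at e3
    calc (μ[Y | F n]) ω ≤ (μ[φ | F n]) ω := e1
    _ = 1 + l * (μ[d (n + 1) | F n]) ω + k * g (n + 1) ω := e2
    _ ≤ 1 + k * g (n + 1) ω := by nlinarith [mul_nonneg hl0 (neg_nonneg.2 e3)]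
  -- put everything together
  filter_upwards [step1, step2] with ω e1 e2
  have hWpos : 0 < W ω := mul_pos (Real.exp_pos _) (Real.exp_pos _)
  have hexp : 1 + k * g (n + 1) ω ≤ Real.exp (l ^ 2 * (c * g (n + 1) ω) / 2) := by
    have := Real.add_one_le_exp (k * g (n + 1) ω)
    have heq : k * g (n + 1) ω = l ^ 2 * (c * g (n + 1) ω) / 2 := by rw [hk]; ring
    rw [heq] at this
    linarith
  calc (μ[X (n + 1) | F n]) ω = W ω * (μ[Y | F n]) ω := by
        rw [e1]; rfl
  _ ≤ W ω * Real.exp (l ^ 2 * (c * g (n + 1) ω) / 2) :=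
      mul_le_mul_of_nonneg_left (le_trans e2 hexp) hWpos.le
  _ = X n ω := by
      rw [hWdef]
      simp only []
      rw [mul_assoc, ← Real.exp_add]
      simp
end
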